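/- arXiv:2404.06379 — 7 statements merged into one kernel-verified Lean document; each statement's English description precedes it below -/
import Mathlib

section
/- Let n ≥ 1 and let w be a permutation of {1,…,n}. Then dis(w)/2 = ℓ(w) if and only if w avoids the pattern 321, i.e., there are no indices i < j < k in {1,…,n} with w(i) > w(j) > w(k). -/
/-!
The Coxeter length of `w` is its number of inversions, counted position by position:
`ℓ(w) = ∑ᵢ #{j > i | w j < w i}`. Since `∑ᵢ (w i - i) = 0`, also
`dis(w) = 2 ∑ᵢ max(w i - i, 0)`. For each `i`,
`#{j > i | w j < w i} - #{j < i | w j > w i} = w i - i`, so the `i`-th term of `ℓ(w)` dominates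
`max(w i - i, 0)`, with equality exactly when `i` is not the middle entry of a `321` pattern.
-/

namespace Stmt0

/-- The adjacent transposition `sᵢ = (i, i+1)`, acting on `ℤ`. -/
def s (i : ℕ) : Equiv.Perm ℤ := Equiv.swap (i : ℤ) ((i : ℤ) + 1)

/-- `w` is a permutation of `{1, …, n}` (fixing everything else). -/
def IsPermOn (n : ℕ) (w : Equiv.Perm ℤ) : Prop :=
  ∀ i : ℤ, i < 1 ∨ (n : ℤ) < i → w i = i

/-- `l` is a word for `w` in the letters `{1, …, n-1}`,
i.e. `w = s_{i₁} ⋯ s_{i_ℓ}` with all letters in `{1, …, n-1}`. -/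
def IsWord (n : ℕ) (w : Equiv.Perm ℤ) (l : List ℕ) : Prop :=
  (∀ i ∈ l, 1 ≤ i ∧ i + 1 ≤ n) ∧ (l.map s).prod = w

/-- The Coxeter length of `w`: the minimal length of a word for `w`. -/
noncomputable def len (n : ℕ) (w : Equiv.Perm ℤ) : ℕ :=
  sInf {m | ∃ l : List ℕ, IsWord n w l ∧ l.length = m}

/-- The disarray `dis(w) = ∑_{i=1}^n |w(i) - i|`. -/
noncomputable def dis (n : ℕ) (w : Equiv.Perm ℤ) : ℤ :=
  ∑ i ∈ Finset.Icc (1 : ℤ) (n : ℤ), |w i - i|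

open Finset

variable {n : ℕ} {w : Equiv.Perm ℤ}

lemma IsPermOn.support_subset (hw : IsPermOn n w) :
    {a | w a ≠ a} ⊆ (Icc (1 : ℤ) n : Set ℤ) := by
  intro a ha
  rw [coe_Icc, Set.mem_Icc]
  by_contra hout
  exact ha (hw a (by omega))

lemma IsPermOn.apply_mem_Icc (hw : IsPermOn n w) {i : ℤ} (hi : i ∈ Icc (1 : ℤ) n) :
    w i ∈ Icc (1 : ℤ) n := by
  rw [← map_perm hw.support_subset]
  exact mem_map_of_mem _ hi

lemma IsPermOn.card_filter_apply_lt (hw : IsPermOn n w) {i : ℤ} (hi : i ∈ Icc (1 : ℤ) n) :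
    (#{j ∈ Icc (1 : ℤ) n | w j < w i} : ℤ) = w i - 1 := by
  have hwi := mem_Icc.mp (hw.apply_mem_Icc hi)
  have hvalues : {v ∈ Icc (1 : ℤ) n | v < w i} = Ico 1 (w i) := by
    ext v
    simp only [mem_filter, mem_Icc, mem_Ico]
    omega
  rw [card_filter, w.sum_comp _ (fun v => if v < w i then 1 else 0) hw.support_subset,
    ← card_filter, hvalues, Int.card_Ico]
  omega

lemma isPermOn_s {i : ℕ} (hi : 1 ≤ i) (hin : i + 1 ≤ n) : IsPermOn n (s i) := by
  intro j hj
  apply Equiv.swap_apply_of_ne_of_ne <;> omega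

lemma abs_eq_two_mul_toNat_sub (x : ℤ) : |x| = 2 * x.toNat - x := by
  rcases abs_cases x with ⟨h, _⟩ | ⟨h, _⟩ <;> omega

lemma dis_eq_two_mul_sum_toNat (hw : IsPermOn n w) :
    dis n w = 2 * ∑ i ∈ Icc (1 : ℤ) n, ((w i - i).toNat : ℤ) := by
  have hsum : ∑ i ∈ Icc (1 : ℤ) n, (w i - i) = 0 := by
    rw [sum_sub_distrib, sub_eq_zero]
    exact w.sum_comp _ (fun x => x) hw.support_subset
  simp only [dis, abs_eq_two_mul_toNat_sub, sum_sub_distrib, ← mul_sum, hsum, sub_zero]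

noncomputable def smallerRight (n : ℕ) (w : Equiv.Perm ℤ) (i : ℤ) : Finset ℤ :=
  {j ∈ Icc (1 : ℤ) n | i < j ∧ w j < w i}

noncomputable def largerLeft (n : ℕ) (w : Equiv.Perm ℤ) (i : ℤ) : Finset ℤ :=
  {j ∈ Icc (1 : ℤ) n | j < i ∧ w i < w j}

/-- Both sides equal `#{j | w j < w i} - #{j | j < i} = (w i - 1) - (i - 1)`: the positions `j`
satisfying both comparisons cancel. -/
lemma card_smallerRight_sub_card_largerLeft (hw : IsPermOn n w) {i : ℤ}
    (hi : i ∈ Icc (1 : ℤ) n) :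
    (#(smallerRight n w i) : ℤ) - #(largerLeft n w i) = w i - i := by
  have hpointwise : ∀ j, ((if w j < w i then 1 else 0) - (if j < i then 1 else 0) : ℤ) =
      (if i < j ∧ w j < w i then 1 else 0) - (if j < i ∧ w i < w j then 1 else 0) := by
    intro j
    have := w.injective.eq_iff (a := j) (b := i)
    split_ifs <;> omega
  have hleft : (#{j ∈ Icc (1 : ℤ) n | j < i} : ℤ) = i - 1 := by
    have hi' := mem_Icc.mp hi
    have hprefix : {j ∈ Icc (1 : ℤ) n | j < i} = Ico 1 i := by
      ext j
      simp only [mem_filter, mem_Icc, mem_Ico]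
      omega
    rw [hprefix, Int.card_Ico]
    omega
  rw [← sub_sub_sub_cancel_right (w i) i 1, ← hw.card_filter_apply_lt hi, ← hleft]
  simp only [smallerRight, largerLeft, card_filter, Nat.cast_sum, Nat.cast_ite, Nat.cast_one,
    Nat.cast_zero, ← sum_sub_distrib, hpointwise]

lemma toNat_sub_le_card_smallerRight (hw : IsPermOn n w) {i : ℤ} (hi : i ∈ Icc (1 : ℤ) n) :
    (w i - i).toNat ≤ #(smallerRight n w i) := by
  have := card_smallerRight_sub_card_largerLeft hw hi
  omega

lemma card_smallerRight_eq_toNat_iff (hw : IsPermOn n w) {i : ℤ} (hi : i ∈ Icc (1 : ℤ) n) :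
    #(smallerRight n w i) = (w i - i).toNat ↔
      smallerRight n w i = ∅ ∨ largerLeft n w i = ∅ := by
  have := card_smallerRight_sub_card_largerLeft hw hi
  rw [← card_eq_zero, ← card_eq_zero]
  omega

lemma not_exists_321_iff :
    (¬ ∃ i j k : ℤ, 1 ≤ i ∧ i < j ∧ j < k ∧ k ≤ (n : ℤ) ∧ w i > w j ∧ w j > w k) ↔
      ∀ j ∈ Icc (1 : ℤ) n, smallerRight n w j = ∅ ∨ largerLeft n w j = ∅ := by
  simp only [smallerRight, largerLeft, filter_eq_empty_iff, mem_Icc]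
  constructor
  · intro h j _
    by_contra! ⟨⟨k, hk, hjk, hwk⟩, ⟨i, hi, hij, hwi⟩⟩
    exact h ⟨i, j, k, hi.1, hij, hjk, hk.2, hwi, hwk⟩
  · rintro h ⟨i, j, k, hi, hij, hjk, hk, hwi, hwk⟩
    rcases h j (by omega) with hright | hleft
    · exact hright (by omega) ⟨hjk, hwk⟩
    · exact hleft (by omega) ⟨hij, hwi⟩

noncomputable def inversions (n : ℕ) (w : Equiv.Perm ℤ) : Finset (ℤ × ℤ) :=
  {p ∈ Icc (1 : ℤ) n ×ˢ Icc (1 : ℤ) n | p.1 < p.2 ∧ w p.2 < w p.1}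

lemma card_inversions_eq_sum (n : ℕ) (w : Equiv.Perm ℤ) :
    #(inversions n w) = ∑ i ∈ Icc (1 : ℤ) n, #(smallerRight n w i) := by
  simp only [inversions, smallerRight, card_filter, sum_product]

lemma inversions_one (n : ℕ) : inversions n 1 = ∅ :=
  filter_eq_empty_iff.mpr fun _ _ h => lt_asymm h.1 h.2

lemma mul_s_mul_s (w : Equiv.Perm ℤ) (i : ℕ) : w * s i * s i = w := by
  rw [mul_assoc, s, Equiv.swap_mul_self, mul_one]

lemma inversions_mul_s {i : ℕ} (hi : 1 ≤ i) (hin : i + 1 ≤ n) (h : w i < w (i + 1)) :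
    inversions n (w * s i) =
      insert ((i : ℤ), (i : ℤ) + 1) ((inversions n w).map ((s i).prodCongr (s i)).toEmbedding) := by
  ext ⟨a, b⟩
  simp only [inversions, mem_insert, mem_map_equiv, Equiv.prodCongr_symm, s, Equiv.symm_swap,
    Equiv.prodCongr_apply, Prod.map, mem_filter, mem_product, mem_Icc, Prod.mk.injEq,
    Equiv.Perm.mul_apply, Equiv.swap_apply_def]
  split_ifs <;> grind

lemma card_inversions_mul_s_of_lt {i : ℕ} (hi : 1 ≤ i) (hin : i + 1 ≤ n) (h : w i < w (i + 1)) :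
    #(inversions n (w * s i)) = #(inversions n w) + 1 := by
  rw [inversions_mul_s hi hin h, card_insert_of_notMem, card_map]
  simp [inversions, s]

lemma card_inversions_mul_s_of_gt {i : ℕ} (hi : 1 ≤ i) (hin : i + 1 ≤ n)
    (h : w (i + 1) < w i) : #(inversions n (w * s i)) + 1 = #(inversions n w) := by
  have h' : (w * s i) i < (w * s i) (i + 1) := by simpa [s] using h
  rw [← card_inversions_mul_s_of_lt hi hin h', mul_s_mul_s]

lemma card_inversions_mul_s_le {i : ℕ} (hi : 1 ≤ i) (hin : i + 1 ≤ n) :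
    #(inversions n (w * s i)) ≤ #(inversions n w) + 1 := by
  rcases lt_or_gt_of_ne (w.injective.ne (a₁ := (i : ℤ)) (a₂ := i + 1) (by omega)) with h | h
  · exact (card_inversions_mul_s_of_lt hi hin h).le
  · have := card_inversions_mul_s_of_gt hi hin h
    omega

lemma card_inversions_prod_le {l : List ℕ} (hl : ∀ i ∈ l, 1 ≤ i ∧ i + 1 ≤ n) :
    #(inversions n (l.map s).prod) ≤ l.length := by
  induction l using List.reverseRecOn with
  | nil => simp [inversions_one]
  | append_singleton l i ih =>
    have hi := hl i (by simp)
    have := card_inversions_mul_s_le (w := (l.map s).prod) hi.1 hi.2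
    have := ih fun j hj => hl j (by simp [hj])
    simp only [List.map_append, List.prod_append, List.map_singleton, List.prod_singleton,
      List.length_append, List.length_singleton]
    omega

lemma exists_descent (h : inversions n w ≠ ∅) :
    ∃ i : ℕ, 1 ≤ i ∧ i + 1 ≤ n ∧ w (i + 1) < w i := by
  contrapose! h
  have hmono : StrictMonoOn w (Set.Icc 1 n) := by
    refine strictMonoOn_of_lt_add_one Set.ordConnected_Icc fun a _ ha ha' => ?_
    rw [Set.mem_Icc] at ha ha'
    have := h a.toNat (by omega) (by omega)
    rw [Int.toNat_of_nonneg (by omega)] at this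
    exact lt_of_le_of_ne this (w.injective.ne (by omega))
  refine filter_eq_empty_iff.mpr fun p hp hinv => ?_
  simp only [mem_product, mem_Icc] at hp
  exact (hmono ⟨hp.1.1, hp.1.2⟩ ⟨hp.2.1, hp.2.2⟩ hinv.1).not_gt hinv.2

/-- With no inversions, `w i ≤ i` on `{1,…,n}`, and the two sums agree. -/
lemma eq_one_of_inversions_eq_empty (hw : IsPermOn n w) (h : inversions n w = ∅) : w = 1 := by
  have hempty : ∀ i ∈ Icc (1 : ℤ) n, smallerRight n w i = ∅ := by
    have := card_inversions_eq_sum n w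
    rw [h, card_empty, eq_comm, sum_eq_zero_iff] at this
    exact fun i hi => card_eq_zero.mp (this i hi)
  have hle : ∀ i ∈ Icc (1 : ℤ) n, w i ≤ i := fun i hi => by
    have := toNat_sub_le_card_smallerRight hw hi
    rw [hempty i hi, card_empty] at this
    omega
  have hfix := (sum_eq_sum_iff_of_le hle).mp (w.sum_comp _ (fun x => x) hw.support_subset)
  refine Equiv.ext fun i => ?_
  rw [Equiv.Perm.one_apply]
  by_cases hi : i ∈ Icc (1 : ℤ) n
  · exact hfix i hi
  · exact hw i (by rw [mem_Icc] at hi; omega)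

lemma exists_word_length_eq (hw : IsPermOn n w) :
    ∃ l : List ℕ, IsWord n w l ∧ l.length = #(inversions n w) := by
  induction hm : #(inversions n w) generalizing w with
  | zero =>
    rw [eq_one_of_inversions_eq_empty hw (card_eq_zero.mp hm)]
    exact ⟨[], ⟨by simp, by simp⟩, rfl⟩
  | succ m ih =>
    obtain ⟨i, hi, hin, hdesc⟩ :=
      exists_descent (n := n) (w := w) (nonempty_iff_ne_empty.mp (card_pos.mp (by omega)))
    have hv : IsPermOn n (w * s i) := fun j hj => by
      rw [Equiv.Perm.mul_apply, isPermOn_s hi hin j hj, hw j hj]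
    have hcard := card_inversions_mul_s_of_gt hi hin hdesc
    obtain ⟨l, ⟨hl, hprod⟩, hlen⟩ := ih hv (by omega)
    refine ⟨l ++ [i], ⟨fun j hj => ?_, ?_⟩, by simp [hlen]⟩
    · rcases List.mem_append.mp hj with hj | hj
      · exact hl j hj
      · rw [List.mem_singleton.mp hj]; exact ⟨hi, hin⟩
    · rw [List.map_append, List.prod_append, hprod, List.map_singleton, List.prod_singleton,
        mul_s_mul_s]

lemma len_eq_card_inversions (hw : IsPermOn n w) : len n w = #(inversions n w) := by
  obtain ⟨l, hl, hlen⟩ := exists_word_length_eq hw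
  refine le_antisymm (Nat.sInf_le ⟨l, hl, hlen⟩) (le_csInf ⟨_, l, hl, hlen⟩ ?_)
  rintro _ ⟨l', ⟨hl', rfl⟩, rfl⟩
  exact card_inversions_prod_le hl'

theorem stmt_0_general (n : ℕ) (w : Equiv.Perm ℤ) (hw : IsPermOn n w) :
    dis n w = 2 * (len n w : ℤ) ↔
      ¬ ∃ i j k : ℤ, 1 ≤ i ∧ i < j ∧ j < k ∧ k ≤ (n : ℤ) ∧ w i > w j ∧ w j > w k := by
  rw [dis_eq_two_mul_sum_toNat hw, len_eq_card_inversions hw, card_inversions_eq_sum,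
    not_exists_321_iff, mul_right_inj' two_ne_zero, Nat.cast_sum,
    sum_eq_sum_iff_of_le fun i hi => Int.ofNat_le.mpr (toNat_sub_le_card_smallerRight hw hi)]
  refine forall₂_congr fun i hi => ?_
  rw [← card_smallerRight_eq_toNat_iff hw hi, eq_comm]
  exact Int.ofNat_inj

theorem stmt_0 (n : ℕ) (hn : 1 ≤ n) (w : Equiv.Perm ℤ) (hw : IsPermOn n w) :
    dis n w = 2 * (len n w : ℤ) ↔
      ¬ ∃ i j k : ℤ, 1 ≤ i ∧ i < j ∧ j < k ∧ k ≤ (n : ℤ) ∧ w i > w j ∧ w j > w k :=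
  stmt_0_general n w hw

end Stmt0
end

section
/- Let n ≥ 1 and let w be a permutation of {1,…,n}. Then dis(w)/2 = ℓ(w) if and only if no reduced word for w contains three consecutive letters of the form i (i±1) i for some i ∈ {1,…,n−1}. -/
namespace Stmt1

/-- The adjacent transposition `sᵢ = (i, i+1)`, acting on `ℤ`. -/
def s (i : ℕ) : Equiv.Perm ℤ := Equiv.swap (i : ℤ) ((i : ℤ) + 1)

/-- `w` is a permutation of `{1, …, n}` (fixing everything else). -/
def IsPermOn (n : ℕ) (w : Equiv.Perm ℤ) : Prop :=
  ∀ i : ℤ, i < 1 ∨ (n : ℤ) < i → w i = i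

/-- `l` is a word for `w` in the letters `{1, …, n-1}`. -/
def IsWord (n : ℕ) (w : Equiv.Perm ℤ) (l : List ℕ) : Prop :=
  (∀ i ∈ l, 1 ≤ i ∧ i + 1 ≤ n) ∧ (l.map s).prod = w

/-- The Coxeter length of `w`: the minimal length of a word for `w`. -/
noncomputable def len (n : ℕ) (w : Equiv.Perm ℤ) : ℕ :=
  sInf {m | ∃ l : List ℕ, IsWord n w l ∧ l.length = m}

/-- `l` is a reduced word for `w`. -/
def IsReducedWord (n : ℕ) (w : Equiv.Perm ℤ) (l : List ℕ) : Prop :=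
  IsWord n w l ∧ l.length = len n w

/-- The disarray `dis(w) = ∑_{i=1}^n |w(i) - i|`. -/
noncomputable def dis (n : ℕ) (w : Equiv.Perm ℤ) : ℤ :=
  ∑ i ∈ Finset.Icc (1 : ℤ) (n : ℤ), |w i - i|

/-- `l` contains three consecutive letters of the form `i (i±1) i`
for some `i ∈ {1, …, n-1}`. -/
def HasBadFactor (n : ℕ) (l : List ℕ) : Prop :=
  ∃ i j : ℕ, 1 ≤ i ∧ i + 1 ≤ n ∧ (j = i + 1 ∨ i = j + 1) ∧ [i, j, i] <:+: l

/-!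
Write `r i` and `ℓ i` for the numbers of later smaller and of earlier larger entries of `w` seen
from position `i`. Counting the values below `w i` and the positions before `i` gives
`r i - ℓ i = w i - i`, while `∑ r` and `∑ ℓ` both count the inversions of `w`; hence
`dis w = 2 inv w - 2 ∑ min (ℓ i) (r i)`, and `dis w = 2 inv w` exactly when `w` avoids 321.

Right multiplication by `sₐ` raises `inv` by one at an ascent `w a < w (a+1)` and lowers it by one
at a descent, so the Coxeter length is `inv` and every letter of a reduced word acts as an ascent.
A factor `i (i±1) i` of a reduced word therefore creates a 321 at positions `k, k+1, k+2`, and the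
later letters, being ascents, carry it along. Conversely, a descent inside the longer gap of a
321 can be removed without destroying the pattern; peeling off such descents until the pattern
occupies consecutive positions yields a reduced word containing `k (k+1) k`.
-/

open Finset

lemma s_apply (a : ℕ) (x : ℤ) :
    s a x = if x = a then (a : ℤ) + 1 else if x = (a : ℤ) + 1 then (a : ℤ) else x :=
  Equiv.swap_apply_def _ _ _

lemma s_mul_self (a : ℕ) : s a * s a = 1 := Equiv.swap_mul_self _ _

lemma s_braid (k : ℕ) : s (k + 1) * s k * s (k + 1) = s k * s (k + 1) * s k := by
  ext x
  simp only [Equiv.Perm.mul_apply, s_apply]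
  push_cast
  split_ifs <;> omega

lemma s_lt_s_iff {a : ℕ} {x y : ℤ} (h : ¬(x = a ∧ y = a + 1)) (h' : ¬(x = a + 1 ∧ y = a)) :
    s a x < s a y ↔ x < y := by
  simp only [s_apply]
  split_ifs <;> omega

lemma IsPermOn.apply_mem {n : ℕ} {w : Equiv.Perm ℤ} (hw : IsPermOn n w) {x : ℤ}
    (hx : x ∈ Icc 1 (n : ℤ)) : w x ∈ Icc 1 (n : ℤ) := by
  by_contra h
  rw [mem_Icc] at hx h
  have := w.injective (hw (w x) (by omega))
  omega

lemma IsPermOn.mul {n : ℕ} {u v : Equiv.Perm ℤ} (hu : IsPermOn n u) (hv : IsPermOn n v) :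
    IsPermOn n (u * v) := fun i hi => by rw [Equiv.Perm.mul_apply, hv i hi, hu i hi]

lemma IsPermOn.inv {n : ℕ} {w : Equiv.Perm ℤ} (hw : IsPermOn n w) : IsPermOn n w⁻¹ :=
  fun i hi => by rw [Equiv.Perm.inv_eq_iff_eq, hw i hi]

lemma isPermOn_s {n a : ℕ} (h1 : 1 ≤ a) (h2 : a + 1 ≤ n) : IsPermOn n (s a) := by
  intro x hx
  rw [s_apply]
  split_ifs <;> omega

/-! ### Inversions and the disarray -/

noncomputable def invCount (n : ℕ) (w : Equiv.Perm ℤ) : ℕ :=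
  #{p ∈ Icc 1 (n : ℤ) ×ˢ Icc 1 (n : ℤ) | p.1 < p.2 ∧ w p.2 < w p.1}

noncomputable def rightSmaller (n : ℕ) (w : Equiv.Perm ℤ) (i : ℤ) : ℕ :=
  #{j ∈ Icc 1 (n : ℤ) | i < j ∧ w j < w i}

noncomputable def leftLarger (n : ℕ) (w : Equiv.Perm ℤ) (i : ℤ) : ℕ :=
  #{j ∈ Icc 1 (n : ℤ) | j < i ∧ w i < w j}

def Pattern321 (n : ℕ) (w : Equiv.Perm ℤ) (a b c : ℤ) : Prop :=
  1 ≤ a ∧ a < b ∧ b < c ∧ c ≤ n ∧ w b < w a ∧ w c < w b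

def Has321 (n : ℕ) (w : Equiv.Perm ℤ) : Prop := ∃ a b c, Pattern321 n w a b c

lemma invCount_eq_sum_rightSmaller (n : ℕ) (w : Equiv.Perm ℤ) :
    invCount n w = ∑ i ∈ Icc 1 (n : ℤ), rightSmaller n w i := by
  simp only [invCount, rightSmaller, card_filter, sum_product]

lemma invCount_eq_sum_leftLarger (n : ℕ) (w : Equiv.Perm ℤ) :
    invCount n w = ∑ j ∈ Icc 1 (n : ℤ), leftLarger n w j := by
  simp only [invCount, leftLarger, card_filter, sum_product_right]

lemma card_apply_lt {n : ℕ} {w : Equiv.Perm ℤ} (hw : IsPermOn n w) {i : ℤ}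
    (hi : i ∈ Icc 1 (n : ℤ)) : (#{j ∈ Icc 1 (n : ℤ) | w j < w i} : ℤ) = w i - 1 := by
  have hwi := mem_Icc.mp (hw.apply_mem hi)
  have : #{j ∈ Icc 1 (n : ℤ) | w j < w i} = #(Ico 1 (w i)) := by
    refine card_nbij' ⇑w ⇑w⁻¹ (fun j hj => ?_) (fun k hk => ?_) (fun j _ => by simp)
      (fun k _ => by simp)
    · simp only [coe_filter, Set.mem_ofPred_eq, coe_Ico, Set.mem_Ico] at hj ⊢
      have := mem_Icc.mp (hw.apply_mem hj.1)
      omega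
    · simp only [coe_Ico, Set.mem_Ico, coe_filter, Set.mem_ofPred_eq] at hk ⊢
      exact ⟨hw.inv.apply_mem (mem_Icc.mpr (by omega)), by simpa using hk.2⟩
  rw [this, Int.card_Ico]
  omega

lemma rightSmaller_sub_leftLarger {n : ℕ} {w : Equiv.Perm ℤ} (hw : IsPermOn n w) {i : ℤ}
    (hi : i ∈ Icc 1 (n : ℤ)) : (rightSmaller n w i : ℤ) - leftLarger n w i = w i - i := by
  have hlt : (#{j ∈ Icc 1 (n : ℤ) | j < i} : ℤ) = i - 1 := by
    rw [show ({j ∈ Icc 1 (n : ℤ) | j < i} : Finset ℤ) = Ico 1 i by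
      ext j; simp only [mem_filter, mem_Icc, mem_Ico]; rw [mem_Icc] at hi; omega, Int.card_Ico]
    rw [mem_Icc] at hi
    omega
  rw [show w i - i = (w i - 1) - (i - 1) by ring, ← card_apply_lt hw hi, ← hlt]
  simp only [rightSmaller, leftLarger, card_filter]
  push_cast
  rw [← sum_sub_distrib, ← sum_sub_distrib]
  refine sum_congr rfl fun j _ => ?_
  by_cases hji : j = i
  · subst hji; simp
  · have : w j ≠ w i := fun h => hji (w.injective h)
    split_ifs <;> omega

lemma dis_add_two_mul_sum_min {n : ℕ} {w : Equiv.Perm ℤ} (hw : IsPermOn n w) :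
    dis n w + 2 * ((∑ i ∈ Icc 1 (n : ℤ), min (leftLarger n w i) (rightSmaller n w i) : ℕ) : ℤ)
      = 2 * invCount n w := by
  rw [two_mul (invCount n w : ℤ), dis]
  nth_rw 1 [invCount_eq_sum_rightSmaller]
  rw [invCount_eq_sum_leftLarger]
  push_cast
  rw [mul_sum, ← sum_add_distrib, ← sum_add_distrib]
  refine sum_congr rfl fun i hi => ?_
  rw [← rightSmaller_sub_leftLarger hw hi]
  rcases le_total (leftLarger n w i : ℤ) (rightSmaller n w i) with h | h
  · rw [min_eq_left h, abs_of_nonneg (by omega)]; ring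
  · rw [min_eq_right h, abs_of_nonpos (by omega)]; ring

lemma has321_iff_exists_min_pos {n : ℕ} {w : Equiv.Perm ℤ} :
    Has321 n w ↔ ∃ i ∈ Icc 1 (n : ℤ), 0 < min (leftLarger n w i) (rightSmaller n w i) := by
  simp only [lt_min_iff, leftLarger, rightSmaller, card_pos, Finset.Nonempty, mem_filter, mem_Icc]
  constructor
  · rintro ⟨a, b, c, ha, hab, hbc, hc, hwab, hwbc⟩
    exact ⟨b, by omega, ⟨a, by omega, hab, hwab⟩, ⟨c, by omega, hbc, hwbc⟩⟩
  · rintro ⟨b, -, ⟨a, ha, hab, hwab⟩, ⟨c, hc, hbc, hwbc⟩⟩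
    exact ⟨a, b, c, ha.1, hab, hbc, hc.2, hwab, hwbc⟩

lemma dis_eq_two_mul_invCount_iff {n : ℕ} {w : Equiv.Perm ℤ} (hw : IsPermOn n w) :
    dis n w = 2 * invCount n w ↔ ¬Has321 n w := by
  rw [has321_iff_exists_min_pos, ← dis_add_two_mul_sum_min hw]
  simp only [left_eq_add, mul_eq_zero, OfNat.ofNat_ne_zero, Nat.cast_eq_zero, false_or,
    sum_eq_zero_iff, Nat.pos_iff_ne_zero, not_exists, not_and, not_not]

lemma eq_one_of_invCount_eq_zero {n : ℕ} {w : Equiv.Perm ℤ} (hw : IsPermOn n w)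
    (h : invCount n w = 0) : w = 1 := by
  have hsum := dis_add_two_mul_sum_min hw
  have hdis : dis n w = 0 := by
    have : 0 ≤ dis n w := sum_nonneg fun i _ => abs_nonneg _
    rw [h] at hsum
    omega
  ext x
  by_cases hx : x ∈ Icc 1 (n : ℤ)
  · have := (sum_eq_zero_iff_of_nonneg (fun i _ => abs_nonneg _)).mp hdis x hx
    simp only [abs_eq_zero, sub_eq_zero] at this
    simp [this]
  · rw [mem_Icc] at hx
    simp [hw x (by omega)]

/-! ### Multiplying by a simple transposition -/

lemma mul_s_apply_s (w : Equiv.Perm ℤ) (a : ℕ) (x : ℤ) : (w * s a) (s a x) = w x := by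
  simp [s]

lemma invCount_mul_s_add_ite {n a : ℕ} (h1 : 1 ≤ a) (h2 : a + 1 ≤ n) (w : Equiv.Perm ℤ) :
    invCount n (w * s a) + (if w ((a : ℤ) + 1) < w a then 1 else 0) =
      invCount n w + (if w (a : ℤ) < w ((a : ℤ) + 1) then 1 else 0) := by
  set B := Icc 1 (n : ℤ) ×ˢ Icc 1 (n : ℤ)
  have hsB : ∀ p ∈ B, Prod.map (s a) (s a) p ∈ B := fun p hp => by
    simp only [B, mem_product, Prod.map_fst, Prod.map_snd] at hp ⊢
    exact ⟨(isPermOn_s h1 h2).apply_mem hp.1, (isPermOn_s h1 h2).apply_mem hp.2⟩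
  have hss : ∀ p ∈ B, Prod.map (s a) (s a) (Prod.map (s a) (s a) p) = p := by
    rintro ⟨x, y⟩ -
    simp [s]
  have hreindex : invCount n (w * s a) =
      ∑ p ∈ B, if s a p.1 < s a p.2 ∧ w p.2 < w p.1 then 1 else 0 := by
    rw [invCount, card_filter]
    refine sum_nbij' _ _ hsB hsB hss hss ?_
    rintro ⟨x, y⟩ -
    exact if_congr (by simp [s]) rfl rfl
  -- only the pairs `(a, a + 1)` and `(a + 1, a)` change their relative order under `s a`
  have hpoint : ∀ p ∈ B,
      (if s a p.1 < s a p.2 ∧ w p.2 < w p.1 then 1 else 0) +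
          (if ((a : ℤ), (a : ℤ) + 1) = p then (if w ((a : ℤ) + 1) < w a then 1 else 0) else 0) =
        (if p.1 < p.2 ∧ w p.2 < w p.1 then 1 else 0) +
          (if ((a : ℤ) + 1, (a : ℤ)) = p then (if w (a : ℤ) < w ((a : ℤ) + 1) then 1 else 0)
            else 0) := by
    rintro ⟨x, y⟩ -
    by_cases h : x = a ∧ y = a + 1
    · obtain ⟨rfl, rfl⟩ := h
      simp [s_apply]
    by_cases h' : x = a + 1 ∧ y = a
    · obtain ⟨rfl, rfl⟩ := h'
      simp [s_apply]
    simp only [s_lt_s_iff h h', if_neg (show ((a : ℤ), (a : ℤ) + 1) ≠ (x, y) by grind),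
      if_neg (show ((a : ℤ) + 1, (a : ℤ)) ≠ (x, y) by grind)]
  have hmem : ((a : ℤ), (a : ℤ) + 1) ∈ B ∧ ((a : ℤ) + 1, (a : ℤ)) ∈ B := by
    simp only [B, mem_product, mem_Icc]
    omega
  have := sum_congr rfl hpoint
  rw [sum_add_distrib, sum_add_distrib, sum_ite_eq, sum_ite_eq, if_pos hmem.1,
    if_pos hmem.2] at this
  rw [hreindex, this, invCount, card_filter]

section

variable {n a : ℕ} {w : Equiv.Perm ℤ}

lemma invCount_mul_s_of_gt (h1 : 1 ≤ a) (h2 : a + 1 ≤ n) (h : w ((a : ℤ) + 1) < w a) :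
    invCount n (w * s a) + 1 = invCount n w := by
  have := invCount_mul_s_add_ite h1 h2 w
  split_ifs at this <;> omega

lemma invCount_mul_s_le (h1 : 1 ≤ a) (h2 : a + 1 ≤ n) :
    invCount n (w * s a) ≤ invCount n w + 1 := by
  have := invCount_mul_s_add_ite h1 h2 w
  split_ifs at this <;> omega

lemma invCount_mul_s_eq_add_one_iff (h1 : 1 ≤ a) (h2 : a + 1 ≤ n) :
    invCount n (w * s a) = invCount n w + 1 ↔ w a < w ((a : ℤ) + 1) := by
  have hne : w a ≠ w ((a : ℤ) + 1) := fun h => by simpa using w.injective h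
  have := invCount_mul_s_add_ite h1 h2 w
  constructor <;> intro h <;> split_ifs at this <;> omega

end

/-! ### Words and Coxeter length -/

lemma IsWord.append {n : ℕ} {u v : Equiv.Perm ℤ} {l m : List ℕ} (hu : IsWord n u l)
    (hv : IsWord n v m) : IsWord n (u * v) (l ++ m) := by
  refine ⟨fun i hi => ?_, by rw [List.map_append, List.prod_append, hu.2, hv.2]⟩
  rcases List.mem_append.mp hi with hi | hi
  exacts [hu.1 i hi, hv.1 i hi]

lemma isWord_s {n a : ℕ} (h1 : 1 ≤ a) (h2 : a + 1 ≤ n) : IsWord n (s a) [a] :=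
  ⟨by simpa using ⟨h1, h2⟩, by simp⟩

lemma IsWord.append_s {n d : ℕ} {w : Equiv.Perm ℤ} {l : List ℕ} (hl : IsWord n (w * s d) l)
    (h1 : 1 ≤ d) (h2 : d + 1 ≤ n) : IsWord n w (l ++ [d]) := by
  simpa [mul_assoc, s_mul_self] using hl.append (isWord_s h1 h2)

lemma IsWord.invCount_mul_le {n : ℕ} {v : Equiv.Perm ℤ} {l : List ℕ} (hv : IsWord n v l)
    (x : Equiv.Perm ℤ) : invCount n (x * v) ≤ invCount n x + l.length := by
  obtain ⟨hl, rfl⟩ := hv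
  induction l generalizing x with
  | nil => simp
  | cons a l ih =>
    have ha := hl a List.mem_cons_self
    have := ih (x * s a) (fun i hi => hl i (List.mem_cons_of_mem a hi))
    have := invCount_mul_s_le (w := x) ha.1 ha.2
    simp only [List.map_cons, List.prod_cons, List.length_cons, ← mul_assoc]
    omega

lemma invCount_one (n : ℕ) : invCount n 1 = 0 := by
  simp only [invCount, Equiv.Perm.one_apply, card_eq_zero]
  exact filter_eq_empty_iff.mpr fun p _ h => lt_asymm h.1 h.2

lemma IsWord.invCount_le {n : ℕ} {w : Equiv.Perm ℤ} {l : List ℕ} (h : IsWord n w l) :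
    invCount n w ≤ l.length := by
  simpa [invCount_one] using h.invCount_mul_le 1

lemma exists_descent_between {w : Equiv.Perm ℤ} {x y : ℤ} (hxy : x < y) (hw : w y < w x) :
    ∃ d, x ≤ d ∧ d < y ∧ w (d + 1) < w d := by
  obtain ⟨k, rfl⟩ : ∃ k : ℕ, y = x + 1 + k := ⟨(y - x - 1).toNat, by omega⟩
  induction k with
  | zero => exact ⟨x, le_rfl, by omega, by simpa using hw⟩
  | succ k ih =>
    push_cast at hw
    by_cases h : w (x + 1 + k + 1) < w (x + 1 + k)
    · exact ⟨x + 1 + k, by omega, by push_cast; omega, h⟩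
    · obtain ⟨d, hd⟩ := ih (by omega) (by rw [← add_assoc] at hw; omega)
      exact ⟨d, hd.1, by push_cast; omega, hd.2.2⟩

lemma exists_word_length_eq_invCount {n : ℕ} {w : Equiv.Perm ℤ} (hw : IsPermOn n w) :
    ∃ l, IsWord n w l ∧ l.length = invCount n w := by
  induction hN : invCount n w generalizing w with
  | zero => exact ⟨[], by simp [IsWord, eq_one_of_invCount_eq_zero hw hN], rfl⟩
  | succ m ih =>
    obtain ⟨⟨x, y⟩, hp⟩ := card_pos.mp (hN ▸ m.succ_pos : 0 < invCount n w)
    simp only [mem_filter, mem_product, mem_Icc] at hp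
    obtain ⟨d, hxd, hdy, hd⟩ := exists_descent_between hp.2.1 hp.2.2
    lift d to ℕ using (by omega)
    have h1 : 1 ≤ d := by omega
    have h2 : d + 1 ≤ n := by omega
    obtain ⟨l, hl, hlen⟩ :=
      ih (hw.mul (isPermOn_s h1 h2)) (by have := invCount_mul_s_of_gt h1 h2 hd; omega)
    exact ⟨l ++ [d], hl.append_s h1 h2, by simp [hlen]⟩

lemma len_eq_invCount {n : ℕ} {w : Equiv.Perm ℤ} (hw : IsPermOn n w) :
    len n w = invCount n w := by
  obtain ⟨l, hl, hlen⟩ := exists_word_length_eq_invCount hw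
  refine le_antisymm (Nat.sInf_le ⟨l, hl, hlen⟩) (le_csInf ⟨_, l, hl, rfl⟩ ?_)
  rintro m ⟨l', hl', rfl⟩
  exact hl'.invCount_le

/-! ### The reversal of three consecutive positions -/

def rev3 (k : ℕ) : Equiv.Perm ℤ := s k * s (k + 1) * s k

lemma rev3_mul_self (k : ℕ) : rev3 k * rev3 k = 1 := by
  simp [rev3, s, mul_assoc, Equiv.swap_mul_self_mul]

lemma isWord_rev3 {n k : ℕ} (h1 : 1 ≤ k) (h2 : k + 2 ≤ n) : IsWord n (rev3 k) [k, k + 1, k] :=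
  ⟨fun i hi => by simp only [List.mem_cons, List.not_mem_nil, or_false] at hi; omega,
    by simp [rev3, mul_assoc]⟩

lemma isPermOn_rev3 {n k : ℕ} (h1 : 1 ≤ k) (h2 : k + 2 ≤ n) : IsPermOn n (rev3 k) :=
  ((isPermOn_s h1 (by omega)).mul (isPermOn_s (by omega) h2)).mul (isPermOn_s h1 (by omega))

lemma mul_rev3_apply (U : Equiv.Perm ℤ) (k : ℕ) :
    (U * rev3 k) k = U ((k : ℤ) + 2) ∧ (U * rev3 k) ((k : ℤ) + 1) = U ((k : ℤ) + 1) ∧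
      (U * rev3 k) ((k : ℤ) + 2) = U k := by
  simp only [rev3, Equiv.Perm.mul_apply, s_apply]
  push_cast
  refine ⟨?_, ?_, ?_⟩ <;> split_ifs <;> first | rfl | omega

lemma invCount_mul_rev3 {n k : ℕ} (h1 : 1 ≤ k) (h2 : k + 2 ≤ n) (U : Equiv.Perm ℤ) :
    invCount n (U * rev3 k) = invCount n U + 3 ↔
      U k < U ((k : ℤ) + 1) ∧ U ((k : ℤ) + 1) < U ((k : ℤ) + 2) := by
  have e1 : (U * s k) ((k : ℤ) + 1) = U k := by simp [s_apply]
  have e2 : (U * s k) ((k : ℤ) + 1 + 1) = U ((k : ℤ) + 2) := by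
    simp only [Equiv.Perm.mul_apply, s_apply]
    split_ifs <;> first | omega | congr 1
  have e3 : (U * s k * s (k + 1)) k = U ((k : ℤ) + 1) := by
    simp only [Equiv.Perm.mul_apply, s_apply]
    push_cast
    split_ifs <;> first | rfl | omega
  have e4 : (U * s k * s (k + 1)) ((k : ℤ) + 1) = U ((k : ℤ) + 2) := by
    simp only [Equiv.Perm.mul_apply, s_apply]
    push_cast
    split_ifs <;> first | omega | congr 1
  have i1 := invCount_mul_s_eq_add_one_iff (w := U) h1 (by omega : k + 1 ≤ n)
  have i2 := invCount_mul_s_eq_add_one_iff (w := U * s k) (by omega : 1 ≤ k + 1) h2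
  have i3 := invCount_mul_s_eq_add_one_iff (w := U * s k * s (k + 1)) h1 (by omega : k + 1 ≤ n)
  have l1 := invCount_mul_s_le (w := U) h1 (by omega : k + 1 ≤ n)
  have l2 := invCount_mul_s_le (w := U * s k) (by omega : 1 ≤ k + 1) h2
  have l3 := invCount_mul_s_le (w := U * s k * s (k + 1)) h1 (by omega : k + 1 ≤ n)
  rw [Nat.cast_succ, e1, e2] at i2
  rw [e3, e4] at i3
  rw [rev3, ← mul_assoc, ← mul_assoc]
  constructor
  · intro h
    exact ⟨i1.mp (by omega), i3.mp (by omega)⟩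
  · rintro ⟨h12, h23⟩
    have := i1.mpr h12
    have := i2.mpr (h12.trans h23)
    have := i3.mpr h23
    omega

/-! ### 321-patterns and reduced words -/

lemma Pattern321.mul_s {n d : ℕ} {w : Equiv.Perm ℤ} {a b c : ℤ} (h : Pattern321 n w a b c)
    (hd1 : 1 ≤ d) (hd2 : d + 1 ≤ n) (hab : ¬(a = d ∧ b = d + 1)) (hbc : ¬(b = d ∧ c = d + 1)) :
    Pattern321 n (w * s d) (s d a) (s d b) (s d c) := by
  obtain ⟨ha, hab', hbc', hc, hwab, hwbc⟩ := h
  refine ⟨?_, (s_lt_s_iff hab (by omega)).mpr hab', (s_lt_s_iff hbc (by omega)).mpr hbc', ?_,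
    by simpa only [mul_s_apply_s], by simpa only [mul_s_apply_s]⟩ <;>
  · rw [s_apply]
    split_ifs <;> omega

lemma Has321.mul {n : ℕ} {x v : Equiv.Perm ℤ} {l : List ℕ} (h : Has321 n x) (hv : IsWord n v l)
    (hlen : invCount n (x * v) = invCount n x + l.length) : Has321 n (x * v) := by
  obtain ⟨hl, rfl⟩ := hv
  induction l generalizing x with
  | nil => simpa using h
  | cons a l ih =>
    have ha := hl a List.mem_cons_self
    have hl' : ∀ i ∈ l, 1 ≤ i ∧ i + 1 ≤ n := fun i hi => hl i (List.mem_cons_of_mem a hi)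
    have := IsWord.invCount_mul_le ⟨hl', rfl⟩ (x * s a)
    have := invCount_mul_s_le (w := x) ha.1 ha.2
    simp only [List.map_cons, List.prod_cons, List.length_cons, ← mul_assoc] at hlen ⊢
    have hasc := (invCount_mul_s_eq_add_one_iff (w := x) ha.1 ha.2).mp (by omega)
    obtain ⟨p, q, r, hp⟩ := h
    refine ih ⟨_, _, _, hp.mul_s ha.1 ha.2 ?_ ?_⟩ hl' (by omega) <;> rintro ⟨rfl, rfl⟩
    exacts [hasc.not_gt hp.2.2.2.2.1, hasc.not_gt hp.2.2.2.2.2]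

lemma has321_of_hasBadFactor {n : ℕ} {w : Equiv.Perm ℤ} {l : List ℕ} (hl : IsWord n w l)
    (hlen : l.length = invCount n w) (hbad : HasBadFactor n l) : Has321 n w := by
  obtain ⟨i, j, hi1, hi2, hij, u, v, rfl⟩ := hbad
  obtain ⟨k, hk1, hk2, hT⟩ : ∃ k : ℕ, 1 ≤ k ∧ k + 2 ≤ n ∧ ([i, j, i].map s).prod = rev3 k := by
    have hj := hl.1 j (by simp)
    rcases hij with rfl | rfl
    · exact ⟨i, hi1, by omega, by simp [rev3, mul_assoc]⟩
    · exact ⟨j, hj.1, by omega, by rw [rev3, ← s_braid]; simp [mul_assoc]⟩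
  have hu : IsWord n (u.map s).prod u := ⟨fun x hx => hl.1 x (by simp [hx]), rfl⟩
  have hv : IsWord n (v.map s).prod v := ⟨fun x hx => hl.1 x (by simp [hx]), rfl⟩
  set U := (u.map s).prod
  have hw : U * rev3 k * (v.map s).prod = w := by
    rw [← hl.2, List.map_append, List.map_append, List.prod_append, List.prod_append, hT]
  have hU := hu.invCount_le
  have hUT := (isWord_rev3 hk1 hk2).invCount_mul_le U
  have hUTV := hv.invCount_mul_le (U * rev3 k)
  simp only [List.length_append, List.length_cons, List.length_nil] at hlen hUT
  rw [hw] at hUTV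
  obtain ⟨h12, h23⟩ := (invCount_mul_rev3 hk1 hk2 U).mp (by omega)
  obtain ⟨e1, e2, e3⟩ := mul_rev3_apply U k
  have h321 : Has321 n (U * rev3 k) :=
    ⟨k, k + 1, k + 2, by omega, by omega, by omega, by omega, by rwa [e1, e2], by rwa [e2, e3]⟩
  rw [← hw]
  exact h321.mul hv (by rw [hw]; omega)

lemma Pattern321.exists_descent_has321 {n : ℕ} {w : Equiv.Perm ℤ} {a b c : ℤ}
    (h : Pattern321 n w a b c) (hne : ¬(b = a + 1 ∧ c = b + 1)) :
    ∃ d : ℕ, 1 ≤ d ∧ d + 1 ≤ n ∧ w ((d : ℤ) + 1) < w d ∧ Has321 n (w * s d) := by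
  obtain ⟨d, hd, hdesc, hab, hbc⟩ : ∃ d : ℤ, (a ≤ d ∧ d < c) ∧ w (d + 1) < w d ∧
      ¬(a = d ∧ b = d + 1) ∧ ¬(b = d ∧ c = d + 1) := by
    obtain ⟨-, hab, hbc, -, hwab, hwbc⟩ := h
    by_cases hcb : c = b + 1
    · obtain ⟨d, h1, h2, h3⟩ := exists_descent_between hab hwab
      exact ⟨d, by omega, h3, by omega, by omega⟩
    · obtain ⟨d, h1, h2, h3⟩ := exists_descent_between hbc hwbc
      exact ⟨d, by omega, h3, by omega, by omega⟩
  have ha := h.1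
  have hc := h.2.2.2.1
  lift d to ℕ using (by omega)
  exact ⟨d, by omega, by omega, hdesc, _, _, _, h.mul_s (by omega) (by omega) hab hbc⟩

lemma exists_reducedWord_hasBadFactor {n : ℕ} {w : Equiv.Perm ℤ} (hw : IsPermOn n w)
    (h : Has321 n w) : ∃ l, IsWord n w l ∧ l.length = invCount n w ∧ HasBadFactor n l := by
  induction hN : invCount n w using Nat.strong_induction_on generalizing w with
  | _ m ih =>
  obtain ⟨a, b, c, hp⟩ := h
  by_cases hcons : b = a + 1 ∧ c = b + 1
  · obtain ⟨rfl, rfl⟩ := hcons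
    obtain ⟨ha, -, -, hc, hwab, hwbc⟩ := hp
    lift a to ℕ using (by omega)
    have h1 : 1 ≤ a := by omega
    have h2 : a + 2 ≤ n := by omega
    set U := w * rev3 a
    have hU : U * rev3 a = w := by rw [mul_assoc, rev3_mul_self, mul_one]
    obtain ⟨e1, e2, e3⟩ := mul_rev3_apply U a
    rw [hU] at e1 e2 e3
    have h3 := hU ▸ (invCount_mul_rev3 h1 h2 U).mpr
      ⟨by rw [← e2, ← e3]; exact hwbc, by rw [← e1, ← e2]; convert hwab using 2⟩
    obtain ⟨l, hl, hlen⟩ : ∃ l, IsWord n U l ∧ l.length = invCount n U :=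
      exists_word_length_eq_invCount (hw.mul (isPermOn_rev3 h1 h2))
    refine ⟨l ++ [a, a + 1, a], ?_, by simp; omega, a, a + 1, h1, by omega, Or.inl rfl, l, [],
      by simp⟩
    rw [← hU]
    exact hl.append (isWord_rev3 h1 h2)
  · obtain ⟨d, h1, h2, hd, h321⟩ := hp.exists_descent_has321 hcons
    have := invCount_mul_s_of_gt h1 h2 hd
    obtain ⟨l, hl, hlen, i, j, hi1, hi2, hij, hinf⟩ :=
      ih _ (by omega) (hw.mul (isPermOn_s h1 h2)) h321 rfl
    exact ⟨l ++ [d], hl.append_s h1 h2, by simp; omega, i, j, hi1, hi2, hij,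
      hinf.trans (List.prefix_append _ _).isInfix⟩

theorem stmt_1_general (n : ℕ) (w : Equiv.Perm ℤ) (hw : IsPermOn n w) :
    dis n w = 2 * (len n w : ℤ) ↔
      ∀ l : List ℕ, IsReducedWord n w l → ¬ HasBadFactor n l := by
  rw [len_eq_invCount hw, dis_eq_two_mul_invCount_iff hw]
  constructor
  · rintro h321 l ⟨hl, hlen⟩ hbad
    exact h321 (has321_of_hasBadFactor hl (hlen.trans (len_eq_invCount hw)) hbad)
  · intro h h321
    obtain ⟨l, hl, hlen, hbad⟩ := exists_reducedWord_hasBadFactor hw h321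
    exact h l ⟨hl, hlen.trans (len_eq_invCount hw).symm⟩ hbad

theorem stmt_1 (n : ℕ) (hn : 1 ≤ n) (w : Equiv.Perm ℤ) (hw : IsPermOn n w) :
    dis n w = 2 * (len n w : ℤ) ↔
      ∀ l : List ℕ, IsReducedWord n w l → ¬ HasBadFactor n l :=
  stmt_1_general n w hw

end Stmt1
end

section
/- Let n ≥ 1 and let w be a permutation of {1,…,n}. Then no reduced word for w contains three consecutive letters i (i±1) i for some i ∈ {1,…,n−1} if and only if in every reduced word for w, for every i ∈ {1,…,n−1}, any two occurrences of the letter i are separated by at least one occurrence of the letter i−1 and at least one occurrence of the letter i+1 (occurrences of a letter outside {1,…,n−1} never appear, so a required separating letter 0 or n can never be present). -/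
namespace Stmt2

/-- The adjacent transposition `sᵢ = (i, i+1)`, acting on `ℤ`. -/
def s (i : ℕ) : Equiv.Perm ℤ := Equiv.swap (i : ℤ) ((i : ℤ) + 1)

/-- `w` is a permutation of `{1, …, n}` (fixing everything else). -/
def IsPermOn (n : ℕ) (w : Equiv.Perm ℤ) : Prop :=
  ∀ i : ℤ, i < 1 ∨ (n : ℤ) < i → w i = i

/-- `l` is a word for `w` in the letters `{1, …, n-1}`. -/
def IsWord (n : ℕ) (w : Equiv.Perm ℤ) (l : List ℕ) : Prop :=
  (∀ i ∈ l, 1 ≤ i ∧ i + 1 ≤ n) ∧ (l.map s).prod = w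

/-- The Coxeter length of `w`: the minimal length of a word for `w`. -/
noncomputable def len (n : ℕ) (w : Equiv.Perm ℤ) : ℕ :=
  sInf {m | ∃ l : List ℕ, IsWord n w l ∧ l.length = m}

/-- `l` is a reduced word for `w`. -/
def IsReducedWord (n : ℕ) (w : Equiv.Perm ℤ) (l : List ℕ) : Prop :=
  IsWord n w l ∧ l.length = len n w

/-- `l` contains three consecutive letters of the form `i (i±1) i`
for some `i ∈ {1, …, n-1}`. -/
def HasBadFactor (n : ℕ) (l : List ℕ) : Prop :=
  ∃ i j : ℕ, 1 ≤ i ∧ i + 1 ≤ n ∧ (j = i + 1 ∨ i = j + 1) ∧ [i, j, i] <:+: l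

/-- In `l`, for every `i ∈ {1, …, n-1}`, any two occurrences of the letter `i`
are separated by at least one occurrence of the letter `i-1` and at least one
occurrence of the letter `i+1`. -/
def SeparatedOccurrences (n : ℕ) (l : List ℕ) : Prop :=
  ∀ i : ℕ, 1 ≤ i → i + 1 ≤ n →
    ∀ p q : Fin l.length, p < q → l.get p = i → l.get q = i →
      (∃ r : Fin l.length, p < r ∧ r < q ∧ l.get r + 1 = i) ∧
      (∃ r : Fin l.length, p < r ∧ r < q ∧ l.get r = i + 1)

/-! ### Auxiliary lemmas -/

lemma s_mul_self (i : ℕ) : s i * s i = 1 := Equiv.swap_mul_self _ _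

lemma s_comm {i c : ℕ} (h : c + 2 ≤ i ∨ i + 2 ≤ c) : Commute (s i) (s c) := by
  apply Equiv.Perm.Disjoint.commute
  intro x
  by_cases hx : x = (i:ℤ) ∨ x = (i:ℤ) + 1
  · right
    apply Equiv.swap_apply_of_ne_of_ne <;> rcases hx with h'|h' <;> subst h' <;>
      intro hh <;> omega
  · left
    push_neg at hx
    exact Equiv.swap_apply_of_ne_of_ne hx.1 hx.2

lemma commute_prod {i : ℕ} {m : List ℕ} (h : ∀ c ∈ m, c + 2 ≤ i ∨ i + 2 ≤ c) :
    Commute (s i) ((m.map s).prod) := by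
  induction m with
  | nil => simp
  | cons c t ih =>
    simp only [List.map_cons, List.prod_cons]
    exact (s_comm (h c (by simp))).mul_right (ih fun d hd => h d (by simp [hd]))

lemma len_le {n : ℕ} {w : Equiv.Perm ℤ} {l : List ℕ} (hl : IsWord n w l) :
    len n w ≤ l.length := Nat.sInf_le ⟨l, hl, rfl⟩

lemma lcomm {G : Type*} [Group G] {a b : G} (h : Commute a b) (c : G) :
    a * (b * c) = b * (a * c) := by rw [← mul_assoc, h.eq, mul_assoc]

/-- Deleting two cancelling `i`'s contradicts reducedness. -/
lemma B0 {n : ℕ} {w : Equiv.Perm ℤ} {l : List ℕ} {i : ℕ} (hred : IsReducedWord n w l)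
    {a m b : List ℕ} (hl : l = a ++ i :: m ++ i :: b)
    (hm : ∀ c ∈ m, c + 2 ≤ i ∨ i + 2 ≤ c) : False := by
  obtain ⟨⟨hrange, hprod⟩, hlen⟩ := hred
  have hC := commute_prod hm
  have hw : IsWord n w (a ++ m ++ b) := by
    refine ⟨fun c hc => hrange c (by subst hl; simp at hc ⊢; tauto), ?_⟩
    subst hl
    simp only [List.map_append, List.prod_append, List.map_cons, List.prod_cons,
      mul_assoc] at hprod ⊢
    rw [← hprod, lcomm hC, ← mul_assoc (s i), s_mul_self, one_mul]
  have h2 := len_le hw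
  rw [← hlen] at h2
  subst hl
  simp at h2 hlen ⊢

/-- Extracting a bad factor `i (i±1) i` by commutations. -/
lemma B1 {n : ℕ} {w : Equiv.Perm ℤ}
    (h1 : ∀ l, IsReducedWord n w l → ¬ HasBadFactor n l)
    {l : List ℕ} {i j : ℕ} {a u v b : List ℕ} (hred : IsReducedWord n w l)
    (hl : l = a ++ i :: (u ++ j :: v) ++ i :: b)
    (hi : 1 ≤ i) (hin : i + 1 ≤ n) (hj : j = i + 1 ∨ i = j + 1)
    (hu : ∀ c ∈ u, c + 2 ≤ i ∨ i + 2 ≤ c) (hv : ∀ c ∈ v, c + 2 ≤ i ∨ i + 2 ≤ c) :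
    False := by
  obtain ⟨⟨hrange, hprod⟩, hlen⟩ := hred
  have hCu := commute_prod hu
  have hCv := commute_prod hv
  set l' := (a ++ u) ++ [i, j, i] ++ (v ++ b) with hl'
  have hw : IsWord n w l' := by
    refine ⟨fun c hc => hrange c (by subst hl; simp [hl'] at hc ⊢; tauto), ?_⟩
    subst hl
    simp only [hl', List.map_append, List.prod_append, List.map_cons, List.prod_cons,
      List.map_nil, List.prod_nil, mul_one, mul_assoc] at hprod ⊢
    rw [← hprod, lcomm hCu]
    congr 2
    congr 1
    rw [lcomm hCv]
  have hlen' : l'.length = l.length := by subst hl; simp [hl']; omega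
  exact h1 l' ⟨hw, by rw [hlen', hlen]⟩ ⟨i, j, hi, hin, hj, a ++ u, v ++ b, rfl⟩

lemma first_occ {P : ℕ → Prop} [DecidablePred P] {m : List ℕ} (h : ∃ c ∈ m, P c) :
    ∃ u j v, m = u ++ j :: v ∧ P j ∧ ∀ c ∈ u, ¬ P c := by
  induction m with
  | nil => simp at h
  | cons x t ih =>
    by_cases hx : P x
    · exact ⟨[], x, t, rfl, hx, by simp⟩
    · obtain ⟨c, hc, hPc⟩ := h
      rcases List.mem_cons.1 hc with rfl | hct
      · exact absurd hPc hx
      · obtain ⟨u, j, v, he, hPj, hu⟩ := ih ⟨c, hct, hPc⟩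
        exact ⟨x :: u, j, v, by simp [he], hPj, by
          intro d hd
          rcases List.mem_cons.1 hd with rfl | hdu
          · exact hx
          · exact hu d hdu⟩

lemma decomp_of_get {l : List ℕ} {i : ℕ} {p q : Fin l.length} (hpq : p < q)
    (hp : l.get p = i) (hq : l.get q = i) :
    ∃ a m b : List ℕ, l = a ++ i :: m ++ i :: b ∧ a.length = (p : ℕ) ∧
      a.length + m.length + 1 = (q : ℕ) := by
  refine ⟨l.take p, (l.drop (p + 1)).take (q - p - 1), l.drop (q + 1), ?_, ?_, ?_⟩
  · have h1 : l = l.take p ++ l.drop p := (List.take_append_drop _ _).symm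
    have h2 : l.drop (p : ℕ) = l.get p :: l.drop ((p : ℕ) + 1) :=
      List.drop_eq_getElem_cons p.isLt
    have h3 : l.drop ((p : ℕ) + 1) =
        (l.drop ((p:ℕ)+1)).take ((q:ℕ) - (p:ℕ) - 1) ++ (l.drop ((p:ℕ)+1)).drop ((q:ℕ)-(p:ℕ)-1) :=
      (List.take_append_drop _ _).symm
    have h4 : (l.drop ((p:ℕ)+1)).drop ((q:ℕ)-(p:ℕ)-1) = l.drop (q:ℕ) := by
      rw [List.drop_drop]
      congr 1
      omega
    have h5 : l.drop (q : ℕ) = l.get q :: l.drop ((q : ℕ) + 1) :=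
      List.drop_eq_getElem_cons q.isLt
    rw [hp] at h2
    rw [hq] at h5
    conv_lhs => rw [h1, h2, h3, h4, h5]
    simp [List.append_assoc]
  · simp [Nat.le_of_lt p.isLt]
  · have h6 : (p:ℕ) < q := hpq
    have h7 : (q:ℕ) < l.length := q.isLt
    simp [List.length_take, List.length_drop, Nat.le_of_lt p.isLt]
    omega

lemma getElem_mid {α : Type*} (a m b : List α) (x y : α) (k : ℕ) (hk : k < m.length)
    (hK : a.length + 1 + k < (a ++ x :: m ++ y :: b).length) :
    (a ++ x :: m ++ y :: b)[a.length + 1 + k] = m[k] := by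
  have h1 : a ++ x :: m ++ y :: b = (a ++ [x]) ++ (m ++ y :: b) := by simp
  rw [List.getElem_of_eq h1, List.getElem_append_right (by simp)]
  have h2 : a.length + 1 + k - (a ++ [x]).length = k := by simp
  simp only [h2]
  rw [List.getElem_append_left hk]

lemma get_of_mem_mid {l : List ℕ} {i c : ℕ} {a m b : List ℕ}
    (hl : l = a ++ i :: m ++ i :: b) (hc : c ∈ m) :
    ∃ r : Fin l.length, a.length < (r : ℕ) ∧ (r : ℕ) < a.length + m.length + 1 ∧
      l.get r = c := by
  obtain ⟨k, hk, hck⟩ := List.getElem_of_mem hc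
  have hlen : l.length = a.length + m.length + b.length + 2 := by subst hl; simp; omega
  refine ⟨⟨a.length + 1 + k, by omega⟩, by simp; omega, by simp; omega, ?_⟩
  simp only [List.get_eq_getElem, Fin.val_mk]
  rw [List.getElem_of_eq hl, getElem_mid a m b i i k hk]
  exact hck

lemma getElem_here {α : Type*} (a t : List α) (x : α)
    (hK : a.length < (a ++ x :: t).length) : (a ++ x :: t)[a.length] = x := by
  rw [List.getElem_append_right (le_refl _)]
  simp

/-- Key combinatorial lemma, by strong induction on the gap. -/
lemma key {n : ℕ} {w : Equiv.Perm ℤ}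
    (h1 : ∀ l, IsReducedWord n w l → ¬ HasBadFactor n l) :
    ∀ N : ℕ, ∀ l : List ℕ, IsReducedWord n w l → ∀ i a m b : _, 1 ≤ i → i + 1 ≤ n →
      l = a ++ i :: m ++ i :: b → m.length ≤ N →
      (∃ c ∈ m, c + 1 = i) ∧ (∃ c ∈ m, c = i + 1) := by
  intro N
  induction N with
  | zero =>
    intro l hred i a m b hi hin hl hm
    have : m = [] := List.eq_nil_of_length_eq_zero (Nat.le_zero.1 hm)
    subst this
    exact absurd (B0 hred hl (by simp)) not_false
  | succ N ih =>
    intro l hred i a m b hi hin hl hmN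
    have hrange : ∀ c ∈ m, 1 ≤ c ∧ c + 1 ≤ n := fun c hc =>
      hred.1.1 c (by subst hl; simp; tauto)
    by_cases hiN : m.length ≤ N
    · exact ih l hred i a m b hi hin hl hiN
    by_cases him : i ∈ m
    · obtain ⟨m1, m2, hm12⟩ := List.append_of_mem him
      have hl2 : l = a ++ i :: m1 ++ i :: (m2 ++ i :: b) := by
        subst hm12; subst hl; simp
      have hlen1 : m1.length ≤ N := by
        subst hm12; simp at hmN ⊢; omega
      obtain ⟨⟨c1, hc1, hc1'⟩, ⟨c2, hc2, hc2'⟩⟩ :=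
        ih l hred i (a) m1 (m2 ++ i :: b) hi hin hl2 hlen1
      exact ⟨⟨c1, by simp [hm12, hc1], hc1'⟩, ⟨c2, by simp [hm12, hc2], hc2'⟩⟩
    · constructor
      · -- ∃ c ∈ m, c + 1 = i
        by_contra hno
        push_neg at hno
        by_cases hplus : ∃ c ∈ m, c = i + 1
        · obtain ⟨u, j, v, huv, hj, hufree⟩ := first_occ hplus
          subst hj
          by_cases h2 : (i + 1) ∈ v
          · obtain ⟨v1, v2, hv12⟩ := List.append_of_mem h2
            have hl3 : l = (a ++ i :: u) ++ (i+1) :: v1 ++ (i+1) :: (v2 ++ i :: b) := by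
              subst hv12; subst huv; subst hl; simp
            have hv1len : v1.length ≤ N := by
              subst hv12; subst huv; simp at hmN ⊢; omega
            have hin2 : (i + 1) + 1 ≤ n :=
              (hrange (i+1) (by simp [huv])).2
            obtain ⟨⟨c, hc, hc'⟩, -⟩ :=
              ih l hred (i+1) (a ++ i :: u) v1 (v2 ++ i :: b) (by omega) hin2 hl3 hv1len
            have : c = i := by omega
            subst this
            exact him (by simp [huv, hv12, hc])
          · refine B1 h1 hred (by rw [hl, huv]) hi hin (Or.inl rfl) ?_ ?_
            · intro c hc
              have hr := hrange c (by simp [huv, hc])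
              have h3 : c ≠ i := fun h => him (h ▸ by simp [huv, hc])
              have h4 := hno c (by simp [huv, hc])
              have h5 := hufree c hc
              omega
            · intro c hc
              have hr := hrange c (by simp [huv, hc])
              have h3 : c ≠ i := fun h => him (h ▸ by simp [huv, hc])
              have h4 := hno c (by simp [huv, hc])
              have h5 : c ≠ i + 1 := fun h => h2 (h ▸ hc)
              omega
        · push_neg at hplus
          refine absurd (B0 hred hl ?_) not_false
          intro c hc
          have hr := hrange c hc
          have h3 : c ≠ i := fun h => him (h ▸ hc)
          have h4 := hno c hc
          have h5 := hplus c hc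
          omega
      · -- ∃ c ∈ m, c = i + 1
        by_contra hno
        push_neg at hno
        by_cases hminus : ∃ c ∈ m, c + 1 = i
        · obtain ⟨u, j, v, huv, hj, hufree⟩ := first_occ (P := fun c => c + 1 = i) hminus
          by_cases h2 : ∃ c ∈ v, c + 1 = i
          · obtain ⟨c0, hc0, hc0'⟩ := h2
            have hc0j : j = c0 := by omega
            subst hc0j
            obtain ⟨v1, v2, hv12⟩ := List.append_of_mem hc0
            have hl3 : l = (a ++ i :: u) ++ j :: v1 ++ j :: (v2 ++ i :: b) := by
              subst hv12; subst huv; subst hl; simp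
            have hv1len : v1.length ≤ N := by
              subst hv12; subst huv; simp at hmN ⊢; omega
            have hj1 : 1 ≤ j := (hrange j (by simp [huv])).1
            have hjn : j + 1 ≤ n := by omega
            obtain ⟨-, ⟨c, hc, hc'⟩⟩ :=
              ih l hred j (a ++ i :: u) v1 (v2 ++ i :: b) hj1 hjn hl3 hv1len
            have : c = i := by omega
            subst this
            exact him (by simp [huv, hv12, hc])
          · push_neg at h2
            refine B1 h1 hred (by rw [hl, huv]) hi hin (Or.inr (by omega)) ?_ ?_
            · intro c hc
              have hr := hrange c (by simp [huv, hc])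
              have h3 : c ≠ i := fun h => him (h ▸ by simp [huv, hc])
              have h4 := hno c (by simp [huv, hc])
              have h5 := hufree c hc
              omega
            · intro c hc
              have hr := hrange c (by simp [huv, hc])
              have h3 : c ≠ i := fun h => him (h ▸ by simp [huv, hc])
              have h4 := hno c (by simp [huv, hc])
              have h5 := h2 c hc
              omega
        · push_neg at hminus
          refine absurd (B0 hred hl ?_) not_false
          intro c hc
          have hr := hrange c hc
          have h3 : c ≠ i := fun h => him (h ▸ hc)
          have h4 := hno c hc
          have h5 := hminus c hc
          omega

theorem stmt_2 (n : ℕ) (hn : 1 ≤ n) (w : Equiv.Perm ℤ) (hw : IsPermOn n w) :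
    (∀ l : List ℕ, IsReducedWord n w l → ¬ HasBadFactor n l) ↔
      ∀ l : List ℕ, IsReducedWord n w l → SeparatedOccurrences n l := by
  constructor
  · intro h1 l hred i hi hin p q hpq hp hq
    obtain ⟨a, m, b, hl, hap, haq⟩ := decomp_of_get hpq hp hq
    obtain ⟨⟨c1, hc1m, hc1⟩, ⟨c2, hc2m, hc2⟩⟩ :=
      key h1 m.length l hred i a m b hi hin hl le_rfl
    obtain ⟨r1, hr1a, hr1b, hr1⟩ := get_of_mem_mid hl hc1m
    obtain ⟨r2, hr2a, hr2b, hr2⟩ := get_of_mem_mid hl hc2m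
    constructor
    · exact ⟨r1, by rw [Fin.lt_def]; omega, by rw [Fin.lt_def]; omega, by rw [hr1, hc1]⟩
    · exact ⟨r2, by rw [Fin.lt_def]; omega, by rw [Fin.lt_def]; omega, by rw [hr2, hc2]⟩
  · intro h2 l hred hbad
    obtain ⟨i, j, hi, hin, hj, a, b, hinf⟩ := hbad
    have hl : l = a ++ i :: [j] ++ i :: b := by rw [← hinf]; simp
    have hl0 : l = a ++ (i :: ([j] ++ i :: b)) := by rw [← hinf]; simp
    have hlen : l.length = a.length + 3 + b.length := by rw [hl]; simp; omega
    have hP : a.length < l.length := by omega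
    have hQ : a.length + 2 < l.length := by omega
    have hR : a.length + 1 < l.length := by omega
    have hgp : l.get ⟨a.length, hP⟩ = i := by
      simp only [List.get_eq_getElem]
      rw [List.getElem_of_eq hl0]
      exact getElem_here a ([j] ++ i :: b) i (by simp)
    have hgq : l.get ⟨a.length + 2, hQ⟩ = i := by
      simp only [List.get_eq_getElem]
      have h22 : a.length + 2 = (a ++ i :: [j]).length := by simp
      rw [List.getElem_of_eq hl]
      simp only [h22]
      exact getElem_here (a ++ i :: [j]) b i (by simp)
    have hgj : l.get ⟨a.length + 1, hR⟩ = j := by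
      simp only [List.get_eq_getElem]
      rw [List.getElem_of_eq hl]
      have h := getElem_mid a [j] b i i 0 (by simp) (by simp)
      simpa using h
    obtain ⟨⟨r1, hr1a, hr1b, hr1⟩, ⟨r2, hr2a, hr2b, hr2⟩⟩ :=
      h2 l hred i hi hin ⟨a.length, hP⟩ ⟨a.length + 2, hQ⟩
        (by rw [Fin.lt_def]; simp) hgp hgq
    rw [Fin.lt_def] at hr1a hr1b hr2a hr2b
    simp only [Fin.val_mk] at hr1a hr1b hr2a hr2b
    have hr1v : r1 = ⟨a.length + 1, hR⟩ := Fin.ext (by simp; omega)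
    have hr2v : r2 = ⟨a.length + 1, hR⟩ := Fin.ext (by simp; omega)
    rw [hr1v, hgj] at hr1
    rw [hr2v, hgj] at hr2
    omega

end Stmt2
end

section
/- Let n ≥ 1 and let w ∈ S^B_n be a signed permutation. Then dis(w)/2 = ℓ(w) if and only if w globally avoids the pattern 321. -/
/-!
Multiplying on the right by a generator changes the disarray by at most 2, so
`dis(w) ≤ 2 ℓ(w)` always.

The key fact about a 321-avoiding signed permutation `w` is a counting one: if an unfrozen
`p` is followed by a smaller value (`p < c`, `w c < w p`), then `p < w p`, and dually. Hence
every descent of `w` has the form `w (i + 1) ≤ i < w i` (or `w 1 < 0`), multiplying by it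
lowers the disarray by exactly 2 and keeps `w` 321-avoiding, and induction on the disarray
yields a word of length `dis(w) / 2`.

Conversely, if `dis(w) = 2 ℓ(w)`, every letter of a reduced word raises the disarray by 2,
i.e. it is applied at an ascent with `u i ≤ i < i + 1 ≤ u (i + 1)`; by the same counting fact
such a step cannot create a 321.
-/

namespace Stmt3

/-- The Coxeter generator `sᵢ` of the hyperoctahedral group, acting on `ℤ`:
`s₀` swaps `-1` and `1`; for `i ≥ 1`, `sᵢ` swaps `i` with `i+1` and `-i` with `-(i+1)`. -/
def sB (i : ℕ) : Equiv.Perm ℤ :=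
  if i = 0 then Equiv.swap (-1 : ℤ) 1
  else Equiv.swap (i : ℤ) ((i : ℤ) + 1) * Equiv.swap (-(i : ℤ)) (-((i : ℤ) + 1))

/-- `w` is a signed permutation in `S^B_n`: a bijection of `ℤ` with
`w(-i) = -w(i)` for all `i` and `w(i) = i` whenever `|i| > n`. -/
def IsSignedPerm (n : ℕ) (w : Equiv.Perm ℤ) : Prop :=
  (∀ i : ℤ, w (-i) = -(w i)) ∧ ∀ i : ℤ, (n : ℤ) < |i| → w i = i

/-- `l` is a word for `w` in the letters `{0, …, n-1}`. -/
def IsWordB (n : ℕ) (w : Equiv.Perm ℤ) (l : List ℕ) : Prop :=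
  (∀ i ∈ l, i + 1 ≤ n) ∧ (l.map sB).prod = w

/-- The Coxeter length of `w`: the minimal length of a word for `w`. -/
noncomputable def lenB (n : ℕ) (w : Equiv.Perm ℤ) : ℕ :=
  sInf {m | ∃ l : List ℕ, IsWordB n w l ∧ l.length = m}

/-- The disarray `dis(w) = ∑_{i=1}^n |w(i) - i|`. -/
noncomputable def disB (n : ℕ) (w : Equiv.Perm ℤ) : ℤ :=
  ∑ i ∈ Finset.Icc (1 : ℤ) (n : ℤ), |w i - i|

/-- The unfrozen integers for `S^B_n` are `{-n, …, -1, 1, …, n}`. -/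
def Unfrozen (n : ℕ) (i : ℤ) : Prop := i ≠ 0 ∧ |i| ≤ (n : ℤ)

/-- `w` globally contains the pattern `321`: there are unfrozen integers
`i < j < k` with `w(i) > w(j) > w(k)`. -/
def GloballyContains321 (n : ℕ) (w : Equiv.Perm ℤ) : Prop :=
  ∃ i j k : ℤ, Unfrozen n i ∧ Unfrozen n j ∧ Unfrozen n k ∧
    i < j ∧ j < k ∧ w i > w j ∧ w j > w k

section

open Finset

variable {n : ℕ} {w u v : Equiv.Perm ℤ}

lemma unfrozen_iff {x : ℤ} : Unfrozen n x ↔ x ≠ 0 ∧ -(n : ℤ) ≤ x ∧ x ≤ n := by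
  rw [Unfrozen, abs_le]

lemma sB_zero_apply (x : ℤ) : sB 0 x = if x = -1 then 1 else if x = 1 then -1 else x := by
  simp [sB, Equiv.swap_apply_def]

lemma sB_apply_of_ne_zero {i : ℕ} (hi : i ≠ 0) (x : ℤ) :
    sB i x =
      if x = i then (i : ℤ) + 1 else if x = (i : ℤ) + 1 then (i : ℤ)
      else if x = -(i : ℤ) then -((i : ℤ) + 1) else if x = -((i : ℤ) + 1) then -(i : ℤ)
      else x := by
  have : (1 : ℤ) ≤ i := by omega
  simp only [sB, if_neg hi, Equiv.Perm.mul_apply, Equiv.swap_apply_def]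
  split_ifs <;> omega

lemma sB_mul_self (i : ℕ) : sB i * sB i = 1 := by
  ext x
  rcases eq_or_ne i 0 with rfl | hi
  · simp only [Equiv.Perm.mul_apply, sB_zero_apply, Equiv.Perm.one_apply]
    split_ifs <;> grind
  · simp only [Equiv.Perm.mul_apply, sB_apply_of_ne_zero hi, Equiv.Perm.one_apply]
    split_ifs <;> grind

lemma sB_zero_lt_sB_zero {x y : ℤ} (hxy : x < y) (hx : x ≠ 0) (hy : y ≠ 0)
    (h : ¬(x = -1 ∧ y = 1)) : sB 0 x < sB 0 y := by
  simp only [sB_zero_apply]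
  split_ifs <;> omega

lemma sB_lt_sB {i : ℕ} (hi : i ≠ 0) {x y : ℤ} (hxy : x < y)
    (h₁ : ¬(x = i ∧ y = (i : ℤ) + 1)) (h₂ : ¬(x = -((i : ℤ) + 1) ∧ y = -(i : ℤ))) :
    sB i x < sB i y := by
  simp only [sB_apply_of_ne_zero hi]
  split_ifs <;> omega

lemma sB_apply_self {i : ℕ} (hi : i ≠ 0) : sB i i = (i : ℤ) + 1 := by
  rw [sB_apply_of_ne_zero hi, if_pos rfl]

lemma sB_apply_add_one {i : ℕ} (hi : i ≠ 0) : sB i ((i : ℤ) + 1) = i := by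
  rw [sB_apply_of_ne_zero hi]; split_ifs <;> omega

namespace IsSignedPerm

lemma map_neg (hw : IsSignedPerm n w) (x : ℤ) : w (-x) = -w x := hw.1 x

lemma map_zero (hw : IsSignedPerm n w) : w 0 = 0 := by
  have := hw.map_neg 0
  rw [neg_zero] at this
  omega

lemma one : IsSignedPerm n 1 := ⟨fun _ => rfl, fun _ _ => rfl⟩

lemma mul (hu : IsSignedPerm n u) (hv : IsSignedPerm n v) : IsSignedPerm n (u * v) :=
  ⟨fun x => by simp only [Equiv.Perm.mul_apply, hv.map_neg, hu.map_neg],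
   fun x hx => by simp only [Equiv.Perm.mul_apply, hv.2 x hx, hu.2 x hx]⟩

lemma unfrozen_apply (hw : IsSignedPerm n w) {x : ℤ} (hx : Unfrozen n x) : Unfrozen n (w x) := by
  refine ⟨fun h => hx.1 (w.injective (h.trans hw.map_zero.symm)), ?_⟩
  by_contra! h
  have hfix : w x = x := w.injective (hw.2 _ h)
  exact absurd hx.2 (by rw [← hfix]; exact not_le.mpr h)

lemma eq_one_of_forall_apply_eq (hw : IsSignedPerm n w)
    (h : ∀ j : ℤ, 1 ≤ j → j ≤ n → w j = j) : w = 1 := by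
  ext x
  rw [Equiv.Perm.one_apply]
  rcases lt_trichotomy x 0 with hx | rfl | hx
  · by_cases hxn : -(n : ℤ) ≤ x
    · have := hw.map_neg (-x)
      rw [neg_neg, h (-x) (by omega) (by omega)] at this
      omega
    · exact hw.2 x (by rw [abs_of_neg hx]; omega)
  · exact hw.map_zero
  · by_cases hxn : x ≤ n
    · exact h x hx hxn
    · exact hw.2 x (by rw [abs_of_pos hx]; omega)

end IsSignedPerm

lemma isSignedPerm_sB {i : ℕ} (h : i + 1 ≤ n) : IsSignedPerm n (sB i) := by
  rcases eq_or_ne i 0 with rfl | hi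
  · refine ⟨fun x => ?_, fun x hx => ?_⟩ <;> simp only [sB_zero_apply] <;>
      split_ifs <;> grind
  · refine ⟨fun x => ?_, fun x hx => ?_⟩ <;> simp only [sB_apply_of_ne_zero hi] <;>
      split_ifs <;> grind

lemma IsWordB.isSignedPerm {l : List ℕ} (hl : IsWordB n w l) : IsSignedPerm n w := by
  obtain ⟨hlet, rfl⟩ := hl
  induction l with
  | nil => exact .one
  | cons a l ih =>
    simp only [List.map_cons, List.prod_cons]
    exact (isSignedPerm_sB (hlet a (by simp))).mul (ih fun i hi => hlet i (by simp [hi]))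

lemma IsWordB.append_singleton {l : List ℕ} (hl : IsWordB n w l) {i : ℕ} (hi : i + 1 ≤ n) :
    IsWordB n (w * sB i) (l ++ [i]) := by
  refine ⟨fun k hk => ?_, by simp [hl.2]⟩
  rcases List.mem_append.mp hk with hk | hk
  · exact hl.1 k hk
  · rw [List.mem_singleton.mp hk]; exact hi

def Is321 (n : ℕ) (w : Equiv.Perm ℤ) (a b c : ℤ) : Prop :=
  Unfrozen n a ∧ Unfrozen n b ∧ Unfrozen n c ∧ a < b ∧ b < c ∧ w a > w b ∧ w b > w c

lemma Is321.contains321 {a b c : ℤ} (h : Is321 n w a b c) : GloballyContains321 n w :=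
  ⟨a, b, c, h⟩

lemma Is321.neg (hw : IsSignedPerm n w) {a b c : ℤ} (h : Is321 n w a b c) :
    Is321 n w (-c) (-b) (-a) := by
  obtain ⟨ha, hb, hc, hab, hbc, hwab, hwbc⟩ := h
  refine ⟨?_, ?_, ?_, by omega, by omega, ?_, ?_⟩
  all_goals simp only [unfrozen_iff, hw.map_neg] at *
  all_goals omega

lemma Is321.of_mul {σ : Equiv.Perm ℤ} (hσ : IsSignedPerm n σ) {a b c : ℤ}
    (h : Is321 n (u * σ) a b c) (hab : σ a < σ b) (hbc : σ b < σ c) :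
    Is321 n u (σ a) (σ b) (σ c) :=
  ⟨hσ.unfrozen_apply h.1, hσ.unfrozen_apply h.2.1, hσ.unfrozen_apply h.2.2.1, hab, hbc,
    h.2.2.2.2.2⟩

namespace IsSignedPerm

lemma lt_apply_of_lt_of_apply_lt (hw : IsSignedPerm n w) (h321 : ¬GloballyContains321 n w)
    {p c : ℤ} (hp : Unfrozen n p) (hc : Unfrozen n c) (hpc : p < c) (hwc : w c < w p) :
    p < w p := by
  by_contra! hwp
  -- the unfrozen `x ≤ p`, together with `c`, would inject into the unfrozen `y ≤ w p`
  let below (q : ℤ) : Finset ℤ := (Icc (-(n : ℤ)) q).filter (· ≠ 0)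
  have hmaps : Set.MapsTo w ↑(insert c (below p)) ↑(below (w p)) := by
    intro x hx
    simp only [below, coe_insert, coe_filter, mem_Icc, Set.mem_insert_iff,
      Set.mem_ofPred_eq] at hx ⊢
    have hpn := (unfrozen_iff.mp hp).2.2
    have hx' : Unfrozen n x := by
      rcases hx with rfl | ⟨⟨hxn, hxp⟩, hx0⟩
      · exact hc
      · exact unfrozen_iff.mpr ⟨hx0, hxn, hxp.trans hpn⟩
    have hwx := unfrozen_iff.mp (hw.unfrozen_apply hx')
    refine ⟨⟨hwx.2.1, ?_⟩, hwx.1⟩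
    rcases hx with rfl | ⟨⟨-, hxp⟩, -⟩
    · exact hwc.le
    rcases hxp.eq_or_lt with rfl | hxp
    · exact le_rfl
    by_contra! hwx
    exact h321 ⟨x, p, c, hx', hp, hc, hxp, hpc, hwx, hwc⟩
  have hcard := card_le_card_of_injOn w hmaps w.injective.injOn
  have hmono : below (w p) ⊆ below p := filter_subset_filter _ (Icc_subset_Icc le_rfl hwp)
  rw [card_insert_of_notMem (by simp only [below, mem_filter, mem_Icc]; omega)] at hcard
  have := card_le_card hmono
  omega

lemma apply_lt_of_lt_of_apply_lt (hw : IsSignedPerm n w) (h321 : ¬GloballyContains321 n w)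
    {a p : ℤ} (ha : Unfrozen n a) (hp : Unfrozen n p) (hap : a < p) (hwa : w p < w a) :
    w p < p := by
  have := hw.lt_apply_of_lt_of_apply_lt h321 (p := -p) (c := -a)
    (unfrozen_iff.mpr (by have := unfrozen_iff.mp hp; omega))
    (unfrozen_iff.mpr (by have := unfrozen_iff.mp ha; omega)) (by omega)
    (by rw [hw.map_neg, hw.map_neg]; omega)
  rw [hw.map_neg] at this
  omega

end IsSignedPerm

lemma contains321_of_mul_sB_zero (hu : IsSignedPerm n u)
    (h : GloballyContains321 n (u * sB 0)) : GloballyContains321 n u := by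
  obtain ⟨a, b, c, habc : Is321 n (u * sB 0) a b c⟩ := h
  have hn : 0 + 1 ≤ n := by have := unfrozen_iff.mp habc.1; omega
  have hs₁ : sB 0 1 = -1 := by simp [sB_zero_apply]
  have hs₂ : sB 0 (-1) = 1 := by simp [sB_zero_apply]
  have through_pair : ∀ c, Is321 n (u * sB 0) (-1) 1 c → GloballyContains321 n u := by
    rintro c ⟨-, -, hc, -, h1c, hu1, huc⟩
    have hsc : sB 0 c = c := by rw [sB_zero_apply]; split_ifs <;> omega
    simp only [Equiv.Perm.mul_apply, hs₁, hs₂, hsc, hu.map_neg] at hu1 huc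
    refine ⟨-c, 1, c, ?_, ?_, hc, by omega, h1c, ?_, by omega⟩
    · exact unfrozen_iff.mpr (by have := unfrozen_iff.mp hc; omega)
    · exact unfrozen_iff.mpr (by have := unfrozen_iff.mp hc; omega)
    · rw [hu.map_neg]; omega
  by_cases h₁ : a = -1 ∧ b = 1
  · obtain ⟨rfl, rfl⟩ := h₁
    exact through_pair c habc
  by_cases h₂ : b = -1 ∧ c = 1
  · obtain ⟨rfl, rfl⟩ := h₂
    have := habc.neg (hu.mul (isSignedPerm_sB hn))
    rw [neg_neg] at this
    exact through_pair (-a) this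
  exact (habc.of_mul (isSignedPerm_sB hn)
    (sB_zero_lt_sB_zero habc.2.2.2.1 habc.1.1 habc.2.1.1 h₁)
    (sB_zero_lt_sB_zero habc.2.2.2.2.1 habc.2.1.1 habc.2.2.1.1 h₂)).contains321

lemma contains321_of_mul_sB {i : ℕ} (hi : i ≠ 0) (hin : i + 1 ≤ n) (hu : IsSignedPerm n u)
    (h : GloballyContains321 n (u * sB i)) :
    GloballyContains321 n u ∨ (∃ c, Is321 n (u * sB i) i (i + 1) c) ∨
      ∃ a, Is321 n (u * sB i) a i (i + 1) := by
  obtain ⟨a, b, c, habc : Is321 n (u * sB i) a b c⟩ := h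
  -- `sB i` inverts only the pairs `(i, i + 1)` and `(-(i + 1), -i)`, and a pattern through
  -- the second one is turned into a pattern through the first by `(a, b, c) ↦ (-c, -b, -a)`
  have hw := hu.mul (isSignedPerm_sB hin)
  by_cases h₁ : a = i ∧ b = (i : ℤ) + 1
  · obtain ⟨rfl, rfl⟩ := h₁
    exact .inr (.inl ⟨c, habc⟩)
  by_cases h₂ : b = i ∧ c = (i : ℤ) + 1
  · obtain ⟨rfl, rfl⟩ := h₂
    exact .inr (.inr ⟨a, habc⟩)
  by_cases h₃ : a = -((i : ℤ) + 1) ∧ b = -(i : ℤ)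
  · obtain ⟨rfl, rfl⟩ := h₃
    have := habc.neg hw
    rw [neg_neg, neg_neg] at this
    exact .inr (.inr ⟨-c, this⟩)
  by_cases h₄ : b = -((i : ℤ) + 1) ∧ c = -(i : ℤ)
  · obtain ⟨rfl, rfl⟩ := h₄
    have := habc.neg hw
    rw [neg_neg, neg_neg] at this
    exact .inr (.inl ⟨-a, this⟩)
  exact .inl (habc.of_mul (isSignedPerm_sB hin) (sB_lt_sB hi habc.2.2.2.1 h₁ h₃)
    (sB_lt_sB hi habc.2.2.2.2.1 h₂ h₄)).contains321

lemma not_contains321_mul_sB_of_apply_lt {i : ℕ} (hi : i ≠ 0) (hin : i + 1 ≤ n)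
    (hu : IsSignedPerm n u) (h321 : ¬GloballyContains321 n u) (hdesc : u ((i : ℤ) + 1) < u i) :
    ¬GloballyContains321 n (u * sB i) := by
  intro h
  rcases contains321_of_mul_sB hi hin hu h with h | ⟨c, hc⟩ | ⟨a, ha⟩
  · exact h321 h
  · have := hc.2.2.2.2.2.1
    simp only [Equiv.Perm.mul_apply, sB_apply_self hi, sB_apply_add_one hi] at this
    omega
  · have := ha.2.2.2.2.2.2
    simp only [Equiv.Perm.mul_apply, sB_apply_self hi, sB_apply_add_one hi] at this
    omega

lemma not_contains321_mul_sB_of_le_apply {i : ℕ} (hi : i ≠ 0) (hin : i + 1 ≤ n)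
    (hu : IsSignedPerm n u) (h321 : ¬GloballyContains321 n u) (h₁ : u i ≤ i)
    (h₂ : (i : ℤ) + 1 ≤ u ((i : ℤ) + 1)) :
    ¬GloballyContains321 n (u * sB i) := by
  intro h
  rcases contains321_of_mul_sB hi hin hu h with h | ⟨c, hc⟩ | ⟨a, ha⟩
  · exact h321 h
  · obtain ⟨hi', -, hc, -, hic, -, huc⟩ := hc
    have hsc : sB i c = c := by rw [sB_apply_of_ne_zero hi]; split_ifs <;> omega
    simp only [Equiv.Perm.mul_apply, sB_apply_add_one hi, hsc] at huc
    have := hu.lt_apply_of_lt_of_apply_lt h321 hi' hc (by omega) huc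
    omega
  · obtain ⟨ha, -, hi₁, hai, -, hua, -⟩ := ha
    have hsa : sB i a < (i : ℤ) + 1 := by rw [sB_apply_of_ne_zero hi]; split_ifs <;> omega
    simp only [Equiv.Perm.mul_apply, sB_apply_self hi] at hua
    have := hu.apply_lt_of_lt_of_apply_lt h321 ((isSignedPerm_sB hin).unfrozen_apply ha) hi₁
      hsa hua
    omega

lemma sum_sub_sum_eq_of_eqOn_sdiff {ι M : Type*} [AddCommGroup M] [DecidableEq ι]
    {S T : Finset ι} (hT : T ⊆ S) {f g : ι → M} (h : ∀ j ∈ S \ T, f j = g j) :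
    ∑ j ∈ S, f j - ∑ j ∈ S, g j = ∑ j ∈ T, f j - ∑ j ∈ T, g j := by
  rw [← sum_sdiff hT, ← sum_sdiff hT (f := g), sum_congr rfl h]
  abel

lemma disB_nonneg : 0 ≤ disB n w :=
  sum_nonneg fun _ _ => abs_nonneg _

lemma disB_one : disB n 1 = 0 := by
  simp [disB]

lemma apply_eq_of_disB_eq_zero (h : disB n w = 0) {j : ℤ} (hj₁ : 1 ≤ j) (hjn : j ≤ n) :
    w j = j := by
  have := (sum_eq_zero_iff_of_nonneg fun _ _ => abs_nonneg _).mp h j (mem_Icc.mpr ⟨hj₁, hjn⟩)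
  rwa [abs_eq_zero, sub_eq_zero] at this

lemma disB_mul_sB_zero (hw : IsSignedPerm n w) (hn : 1 ≤ n) :
    disB n (w * sB 0) - disB n w = |w 1 + 1| - |w 1 - 1| := by
  have hT : ({1} : Finset ℤ) ⊆ Icc 1 (n : ℤ) := by simpa using hn
  rw [disB, disB, sum_sub_sum_eq_of_eqOn_sdiff hT]
  · simp only [sum_singleton, Equiv.Perm.mul_apply, sB_zero_apply]
    norm_num [hw.map_neg, ← abs_neg (-w 1 - 1)]
    ring_nf
  · intro j hj
    simp only [mem_sdiff, mem_Icc, mem_singleton] at hj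
    rw [Equiv.Perm.mul_apply, sB_zero_apply, if_neg (by omega), if_neg hj.2]

lemma disB_mul_sB {i : ℕ} (hi : i ≠ 0) (hin : i + 1 ≤ n) :
    disB n (w * sB i) - disB n w = |w ((i : ℤ) + 1) - i| + |w i - ((i : ℤ) + 1)|
      - |w i - i| - |w ((i : ℤ) + 1) - ((i : ℤ) + 1)| := by
  have hT : ({(i : ℤ), (i : ℤ) + 1} : Finset ℤ) ⊆ Icc 1 (n : ℤ) := by
    intro j hj
    simp only [mem_insert, mem_singleton] at hj
    rw [mem_Icc]
    omega
  rw [disB, disB, sum_sub_sum_eq_of_eqOn_sdiff hT]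
  · rw [sum_pair (by omega), sum_pair (by omega)]
    simp only [Equiv.Perm.mul_apply, sB_apply_self hi, sB_apply_add_one hi]
    ring
  · intro j hj
    simp only [mem_sdiff, mem_Icc, mem_insert, mem_singleton] at hj
    rw [Equiv.Perm.mul_apply, sB_apply_of_ne_zero hi]
    split_ifs <;> omega

lemma disB_mul_sB_le (hw : IsSignedPerm n w) {i : ℕ} (hin : i + 1 ≤ n) :
    disB n (w * sB i) ≤ disB n w + 2 := by
  rcases eq_or_ne i 0 with rfl | hi
  · have := disB_mul_sB_zero hw hin
    grind
  · have := disB_mul_sB (w := w) hi hin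
    grind

lemma disB_mul_sB_zero_of_apply_one_neg (hw : IsSignedPerm n w) (hn : 1 ≤ n) (h : w 1 < 0) :
    disB n (w * sB 0) = disB n w - 2 := by
  have := disB_mul_sB_zero hw hn
  grind

lemma disB_mul_sB_of_lt_apply {i : ℕ} (hi : i ≠ 0) (hin : i + 1 ≤ n)
    (h₁ : (i : ℤ) < w i) (h₂ : w ((i : ℤ) + 1) ≤ i) :
    disB n (w * sB i) = disB n w - 2 := by
  have := disB_mul_sB (w := w) hi hin
  grind

lemma le_apply_of_disB_mul_sB_eq_add_two {i : ℕ} (hi : i ≠ 0) (hin : i + 1 ≤ n)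
    (h : disB n (w * sB i) = disB n w + 2) : w i ≤ i ∧ (i : ℤ) + 1 ≤ w ((i : ℤ) + 1) := by
  have := disB_mul_sB (w := w) hi hin
  grind

lemma disB_prod_le (l : List ℕ) (hl : ∀ i ∈ l, i + 1 ≤ n) :
    disB n (l.map sB).prod ≤ 2 * l.length := by
  induction l using List.reverseRecOn with
  | nil => simp [disB_one]
  | append_singleton l a ih =>
    have hl' : ∀ i ∈ l, i + 1 ≤ n := fun i hi => hl i (by simp [hi])
    have hw : IsSignedPerm n (l.map sB).prod := IsWordB.isSignedPerm ⟨hl', rfl⟩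
    have := disB_mul_sB_le hw (hl a (by simp))
    simp only [List.map_append, List.prod_append, List.map_singleton, List.prod_singleton,
      List.length_append, List.length_singleton, Nat.cast_add, Nat.cast_one]
    linarith [ih hl']

lemma not_contains321_prod_of_disB_eq (l : List ℕ) (hl : ∀ i ∈ l, i + 1 ≤ n)
    (h : disB n (l.map sB).prod = 2 * l.length) : ¬GloballyContains321 n (l.map sB).prod := by
  induction l using List.reverseRecOn with
  | nil =>
    rintro ⟨a, b, c, -, -, -, hab, -, hwab, -⟩
    simp only [List.map_nil, List.prod_nil, Equiv.Perm.one_apply] at hwab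
    omega
  | append_singleton l a ih =>
    have hl' : ∀ i ∈ l, i + 1 ≤ n := fun i hi => hl i (by simp [hi])
    have ha : a + 1 ≤ n := hl a (by simp)
    have hu : IsSignedPerm n (l.map sB).prod := IsWordB.isSignedPerm ⟨hl', rfl⟩
    simp only [List.map_append, List.prod_append, List.map_singleton, List.prod_singleton,
      List.length_append, List.length_singleton, Nat.cast_add, Nat.cast_one] at h ⊢
    have hle := disB_prod_le l hl'
    have hstep := disB_mul_sB_le hu ha
    have h321 := ih hl' (by omega)
    rcases eq_or_ne a 0 with rfl | hi
    · exact fun h => h321 (contains321_of_mul_sB_zero hu h)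
    · obtain ⟨h₁, h₂⟩ :=
        le_apply_of_disB_mul_sB_eq_add_two (w := (l.map sB).prod) hi ha (by omega)
      exact not_contains321_mul_sB_of_le_apply hi ha hu h321 h₁ h₂

lemma lenB_le {l : List ℕ} (hl : IsWordB n w l) : lenB n w ≤ l.length :=
  Nat.sInf_le ⟨l, hl, rfl⟩

lemma disB_le_two_mul_lenB (h : ∃ l, IsWordB n w l) : disB n w ≤ 2 * (lenB n w : ℤ) := by
  obtain ⟨l, hl⟩ := h
  obtain ⟨l₀, ⟨hl₀, rfl⟩, hlen⟩ :=
    Nat.sInf_mem (s := {m | ∃ l, IsWordB n w l ∧ l.length = m}) ⟨l.length, l, hl, rfl⟩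
  rw [lenB, ← hlen]
  exact disB_prod_le l₀ hl₀

lemma exists_word_length_eq_lenB (hw : IsSignedPerm n w) (h : disB n w = 2 * (lenB n w : ℤ)) :
    ∃ l, IsWordB n w l ∧ l.length = lenB n w := by
  by_cases hword : ∃ l, IsWordB n w l
  · obtain ⟨l, hl⟩ := hword
    exact Nat.sInf_mem (s := {m | ∃ l, IsWordB n w l ∧ l.length = m}) ⟨l.length, l, hl, rfl⟩
  · -- with no word at all, `lenB` is the junk value `sInf ∅ = 0`
    have hlen : lenB n w = 0 := by
      rw [lenB, Nat.sInf_eq_zero]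
      exact .inr (Set.eq_empty_of_forall_notMem fun m ⟨l, hl, _⟩ => hword ⟨l, hl⟩)
    rw [hlen, Nat.cast_zero, mul_zero] at h
    obtain rfl := hw.eq_one_of_forall_apply_eq fun j => apply_eq_of_disB_eq_zero h
    exact ⟨[], ⟨by simp, by simp⟩, hlen.symm⟩

namespace IsSignedPerm

lemma exists_descent (hw : IsSignedPerm n w)
    (hne : ∃ j : ℤ, 1 ≤ j ∧ j ≤ n ∧ w j ≠ j) :
    (1 ≤ n ∧ w 1 < 0) ∨ ∃ i : ℕ, i ≠ 0 ∧ i + 1 ≤ n ∧ w ((i : ℤ) + 1) < w i := by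
  obtain ⟨j, hj₁, hjn, hj⟩ := hne
  by_contra! h
  -- otherwise `w` is increasing on `[1, n]` with `w 1 ≥ 1`, hence the identity there
  obtain ⟨h₀, hmono⟩ := h
  have hinc : ∀ m : ℤ, 1 ≤ m → m + 1 ≤ n → w m < w (m + 1) := by
    intro m h₁ h₂
    lift m to ℕ using (by omega)
    exact (hmono m (by omega) (by omega)).lt_of_ne fun e => by have := w.injective e; omega
  have hunf : ∀ m : ℤ, 1 ≤ m → m ≤ n → Unfrozen n (w m) := fun m h₁ h₂ =>
    hw.unfrozen_apply (unfrozen_iff.mpr ⟨by omega, by omega, by omega⟩)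
  have hup : ∀ m : ℤ, 1 ≤ m → m ≤ n → m ≤ w m := by
    intro m hm
    induction m, hm using Int.leInduction with
    | base =>
      intro hn
      have := (hunf 1 le_rfl hn).1
      have := h₀ (by omega)
      omega
    | succ m hm ih =>
      intro hmn
      have := hinc m hm hmn
      have := ih (by omega)
      omega
  have hdown : ∀ m : ℤ, m ≤ n → 1 ≤ m → w m ≤ m := by
    intro m hm
    induction m, hm using Int.leInductionDown with
    | base => exact fun hn => (unfrozen_iff.mp (hunf n hn le_rfl)).2.2
    | pred m hm ih =>
      intro hm₁
      have := hinc (m - 1) hm₁ (by omega)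
      have := ih (by omega)
      rw [sub_add_cancel] at *
      omega
  exact hj (le_antisymm (hdown j hjn hj₁) (hup j hj₁ hjn))

lemma exists_disB_mul_sB_eq_sub_two (hw : IsSignedPerm n w) (h321 : ¬GloballyContains321 n w)
    (hne : ∃ j : ℤ, 1 ≤ j ∧ j ≤ n ∧ w j ≠ j) :
    ∃ i : ℕ, i + 1 ≤ n ∧ disB n (w * sB i) = disB n w - 2 ∧
      ¬GloballyContains321 n (w * sB i) := by
  rcases hw.exists_descent hne with ⟨hn, hw₁⟩ | ⟨i, hi, hin, hdesc⟩
  · exact ⟨0, hn, disB_mul_sB_zero_of_apply_one_neg hw hn hw₁,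
      fun h => h321 (contains321_of_mul_sB_zero hw h)⟩
  · have hiu : Unfrozen n i := unfrozen_iff.mpr ⟨by omega, by omega, by omega⟩
    have hi₁u : Unfrozen n ((i : ℤ) + 1) := unfrozen_iff.mpr ⟨by omega, by omega, by omega⟩
    have h₁ := hw.lt_apply_of_lt_of_apply_lt h321 hiu hi₁u (by omega) hdesc
    have h₂ := hw.apply_lt_of_lt_of_apply_lt h321 hiu hi₁u (by omega) hdesc
    exact ⟨i, hin, disB_mul_sB_of_lt_apply hi hin h₁ (by omega),
      not_contains321_mul_sB_of_apply_lt hi hin hw h321 hdesc⟩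

lemma exists_word_two_mul_length_eq_disB (hw : IsSignedPerm n w)
    (h321 : ¬GloballyContains321 n w) :
    ∃ l, IsWordB n w l ∧ 2 * (l.length : ℤ) = disB n w := by
  induction hd : (disB n w).toNat using Nat.strong_induction_on generalizing w with
  | _ d ih =>
  by_cases hfix : ∀ j : ℤ, 1 ≤ j → j ≤ n → w j = j
  · obtain rfl := hw.eq_one_of_forall_apply_eq hfix
    exact ⟨[], ⟨by simp, by simp⟩, by simp [disB_one]⟩
  push Not at hfix
  obtain ⟨i, hin, hdis, h321'⟩ := hw.exists_disB_mul_sB_eq_sub_two h321 hfix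
  have := disB_nonneg (n := n) (w := w * sB i)
  obtain ⟨l, hl, hlen⟩ := ih _ (by omega) (hw.mul (isSignedPerm_sB hin)) h321' rfl
  refine ⟨l ++ [i], ?_, ?_⟩
  · simpa [mul_assoc, sB_mul_self] using hl.append_singleton hin
  · simp only [List.length_append, List.length_singleton, Nat.cast_add, Nat.cast_one]
    omega

end IsSignedPerm

end

theorem stmt_3_general (n : ℕ) (w : Equiv.Perm ℤ) (hw : IsSignedPerm n w) :
    disB n w = 2 * (lenB n w : ℤ) ↔ ¬ GloballyContains321 n w := by
  refine ⟨fun hdis => ?_, fun h321 => ?_⟩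
  · obtain ⟨l, ⟨hl, rfl⟩, hlen⟩ := exists_word_length_eq_lenB hw hdis
    exact not_contains321_prod_of_disB_eq l hl (by rw [hdis, hlen])
  · obtain ⟨l, hl, hdis⟩ := hw.exists_word_two_mul_length_eq_disB h321
    have := lenB_le hl
    have := disB_le_two_mul_lenB ⟨l, hl⟩
    omega

theorem stmt_3 (n : ℕ) (hn : 1 ≤ n) (w : Equiv.Perm ℤ) (hw : IsSignedPerm n w) :
    disB n w = 2 * (lenB n w : ℤ) ↔ ¬ GloballyContains321 n w :=
  stmt_3_general n w hw

end Stmt3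
end

section
/- Let n ≥ 1 and let w ∈ S^B_n be a signed permutation. Then no reduced word for w contains three consecutive letters i (i±1) i for some i ∈ {1,…,n−1} if and only if in every reduced word for w, for every i ∈ {1,…,n−1}, any two occurrences of the letter i are separated by at least one occurrence of the letter i−1 and at least one occurrence of the letter i+1 (the letter n never appears, so a required separating letter n can never be present). -/
namespace Stmt5

/-- The Coxeter generator `sᵢ` of the hyperoctahedral group, acting on `ℤ`:
`s₀` swaps `-1` and `1`; for `i ≥ 1`, `sᵢ` swaps `i` with `i+1` and `-i` with `-(i+1)`. -/
def sB (i : ℕ) : Equiv.Perm ℤ :=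
  if i = 0 then Equiv.swap (-1 : ℤ) 1
  else Equiv.swap (i : ℤ) ((i : ℤ) + 1) * Equiv.swap (-(i : ℤ)) (-((i : ℤ) + 1))

/-- `w` is a signed permutation in `S^B_n`: a bijection of `ℤ` with
`w(-i) = -w(i)` for all `i` and `w(i) = i` whenever `|i| > n`. -/
def IsSignedPerm (n : ℕ) (w : Equiv.Perm ℤ) : Prop :=
  (∀ i : ℤ, w (-i) = -(w i)) ∧ ∀ i : ℤ, (n : ℤ) < |i| → w i = i

/-- `l` is a word for `w` in the letters `{0, …, n-1}`. -/
def IsWordB (n : ℕ) (w : Equiv.Perm ℤ) (l : List ℕ) : Prop :=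
  (∀ i ∈ l, i + 1 ≤ n) ∧ (l.map sB).prod = w

/-- The Coxeter length of `w`: the minimal length of a word for `w`. -/
noncomputable def lenB (n : ℕ) (w : Equiv.Perm ℤ) : ℕ :=
  sInf {m | ∃ l : List ℕ, IsWordB n w l ∧ l.length = m}

/-- The disarray `dis(w) = ∑_{i=1}^n |w(i) - i|`. -/
noncomputable def disB (n : ℕ) (w : Equiv.Perm ℤ) : ℤ :=
  ∑ i ∈ Finset.Icc (1 : ℤ) (n : ℤ), |w i - i|

/-- The unfrozen integers for `S^B_n` are `{-n, …, -1, 1, …, n}`. -/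
def Unfrozen (n : ℕ) (i : ℤ) : Prop := i ≠ 0 ∧ |i| ≤ (n : ℤ)

/-- `w` globally contains the pattern `321`: there are unfrozen integers
`i < j < k` with `w(i) > w(j) > w(k)`. -/
def GloballyContains321 (n : ℕ) (w : Equiv.Perm ℤ) : Prop :=
  ∃ i j k : ℤ, Unfrozen n i ∧ Unfrozen n j ∧ Unfrozen n k ∧
    i < j ∧ j < k ∧ w i > w j ∧ w j > w k

/-- `l` is a reduced word for `w`. -/
def IsReducedWordB (n : ℕ) (w : Equiv.Perm ℤ) (l : List ℕ) : Prop :=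
  IsWordB n w l ∧ l.length = lenB n w

/-- `l` contains three consecutive letters of the form `i (i±1) i`
for some `i ∈ {1, …, n-1}`. -/
def HasBadFactorB (n : ℕ) (l : List ℕ) : Prop :=
  ∃ i j : ℕ, 1 ≤ i ∧ i + 1 ≤ n ∧ (j = i + 1 ∨ i = j + 1) ∧ [i, j, i] <:+: l

/-- In `l`, for every `i ∈ {1, …, n-1}`, any two occurrences of the letter `i`
are separated by at least one occurrence of the letter `i-1` and at least one
occurrence of the letter `i+1`. -/
def SeparatedOccurrencesB (n : ℕ) (l : List ℕ) : Prop :=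
  ∀ i : ℕ, 1 ≤ i → i + 1 ≤ n →
    ∀ p q : Fin l.length, p < q → l.get p = i → l.get q = i →
      (∃ r : Fin l.length, p < r ∧ r < q ∧ l.get r + 1 = i) ∧
      (∃ r : Fin l.length, p < r ∧ r < q ∧ l.get r = i + 1)

/-!
Suppose no reduced word of `w` contains a short braid `i (i±1) i`, and take two occurrences of
a letter `m` in a reduced word with no neighbour `k` of `m` between them, with as few letters
between them as possible. Letters commuting with `m` can be moved out past either end, and two
adjacent equal letters cannot occur in a reduced word; so both letters next to the two `m`s are
the other neighbour `j` of `m`. Either they coincide, giving the short braid `m j m`, or they are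
two occurrences of `j` with no neighbour `m` of `j` between them, and fewer letters between.
Conversely, in a factor `i j i` the only letter separating the two `i`s is `j`, which cannot be
both `i - 1` and `i + 1`.
-/

theorem sB_apply_of_ne {i : ℕ} {x : ℤ} (h₁ : x ≠ i) (h₂ : x ≠ i + 1) (h₃ : x ≠ -i)
    (h₄ : x ≠ -(i + 1)) : sB i x = x := by
  unfold sB
  split_ifs with h
  · subst h
    exact Equiv.swap_apply_of_ne_of_ne (by simpa using h₄) (by simpa using h₂)
  · rw [Equiv.Perm.mul_apply, Equiv.swap_apply_of_ne_of_ne h₃ h₄,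
      Equiv.swap_apply_of_ne_of_ne h₁ h₂]

theorem sB_mul_self (i : ℕ) : sB i * sB i = 1 := by
  unfold sB
  split_ifs with h
  · exact Equiv.swap_mul_self _ _
  · have hi : (1 : ℤ) ≤ i := by exact_mod_cast Nat.one_le_iff_ne_zero.2 h
    have hc : Commute (Equiv.swap (-(i : ℤ)) (-(i + 1))) (Equiv.swap (i : ℤ) (i + 1)) :=
      (Equiv.Perm.Disjoint.commute fun x => by
        by_cases hx : x = -(i : ℤ) ∨ x = -(i + 1)
        · right; apply Equiv.swap_apply_of_ne_of_ne <;> omega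
        · left; push Not at hx; exact Equiv.swap_apply_of_ne_of_ne hx.1 hx.2)
    rw [hc.mul_mul_mul_comm, Equiv.swap_mul_self, one_mul, Equiv.swap_mul_self]

def LetterAdj (a b : ℕ) : Prop := a + 1 = b ∨ b + 1 = a

theorem commute_sB {a b : ℕ} (hab : a ≠ b) (hadj : ¬ LetterAdj a b) :
    Commute (sB a) (sB b) := by
  unfold LetterAdj at hadj
  refine Equiv.Perm.Disjoint.commute fun x => ?_
  by_cases hx : x = b ∨ x = b + 1 ∨ x = -b ∨ x = -(b + 1)
  · left; apply sB_apply_of_ne <;> omega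
  · right; push Not at hx; exact sB_apply_of_ne hx.1 hx.2.1 hx.2.2.1 hx.2.2.2

section ReducedWords

variable {n : ℕ} {w : Equiv.Perm ℤ}

theorem IsReducedWordB.length_le {l l' : List ℕ} (hl : IsReducedWordB n w l)
    (hl' : IsWordB n w l') : l.length ≤ l'.length :=
  hl.2 ▸ Nat.sInf_le ⟨l', hl', rfl⟩

theorem not_isReducedWordB_append_cons_cons_self (s t : List ℕ) (a : ℕ) :
    ¬ IsReducedWordB n w (s ++ a :: a :: t) := fun h => by
  have hword : IsWordB n w (s ++ t) := by
    refine ⟨fun i hi => h.1.1 i ?_, ?_⟩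
    · simp only [List.mem_append, List.mem_cons] at hi ⊢
      tauto
    rw [← h.1.2]
    simp only [List.map_append, List.map_cons, List.prod_append, List.prod_cons,
      ← mul_assoc (sB a), sB_mul_self, one_mul]
  have := h.length_le hword
  simp at this

theorem IsReducedWordB.swap {s t : List ℕ} {a b : ℕ} (h : IsReducedWordB n w (s ++ a :: b :: t))
    (hab : Commute (sB a) (sB b)) : IsReducedWordB n w (s ++ b :: a :: t) := by
  refine ⟨⟨fun i hi => h.1.1 i ?_, ?_⟩, by rw [← h.2]; simp⟩
  · simp only [List.mem_append, List.mem_cons] at hi ⊢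
    tauto
  rw [← h.1.2]
  simp only [List.map_append, List.map_cons, List.prod_append, List.prod_cons,
    ← mul_assoc, hab.eq]

end ReducedWords

/-- The letter `0` is exempt from the braid condition: `s₀ s₁` has order `4`, so `0 1 0` is not
a short braid. -/
structure ShortBraidFree (R : Set (List ℕ)) : Prop where
  not_mem_square : ∀ s t a, s ++ a :: a :: t ∉ R
  swap_mem : ∀ s t a b, a ≠ b → ¬ LetterAdj a b →
    s ++ a :: b :: t ∈ R → s ++ b :: a :: t ∈ R
  not_mem_braid : ∀ s t a b, a ≠ 0 → LetterAdj a b → s ++ a :: b :: a :: t ∉ R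

theorem ShortBraidFree.mem_of_letterAdj {R : Set (List ℕ)} (hR : ShortBraidFree R)
    {s u t : List ℕ} {m k : ℕ} (hmk : LetterAdj m k) (h : s ++ m :: (u ++ m :: t) ∈ R) :
    k ∈ u := by
  induction hN : u.length using Nat.strong_induction_on generalizing s u t m k with
  | _ N ihN =>
    subst hN
    have ih : ∀ {s' u' t' m' k'}, u'.length < u.length → LetterAdj m' k' →
        s' ++ m' :: (u' ++ m' :: t') ∈ R → k' ∈ u' := fun hlt hmk' h' => ihN _ hlt hmk' h' rfl
    clear ihN
    by_contra hk
    by_cases hm : m ∈ u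
    · obtain ⟨x, y, rfl⟩ := List.append_of_mem hm
      exact hk (List.mem_append_left _ (ih (t' := y ++ m :: t) (by simp) hmk (by simpa using h)))
    rcases u with _ | ⟨b, u⟩
    · exact hR.not_mem_square s t m h
    have hbm : b ≠ m := fun e => hm (e ▸ List.mem_cons_self)
    have hbk : b ≠ k := fun e => hk (e ▸ List.mem_cons_self)
    by_cases hb : LetterAdj m b
    · rcases u.eq_nil_or_concat' with rfl | ⟨v, c, rfl⟩
      · exact hR.not_mem_braid s t m b (by unfold LetterAdj at hmk hb; omega) hb h
      have hcm : c ≠ m := fun e => hm (by simp [e])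
      have hck : c ≠ k := fun e => hk (by simp [e])
      by_cases hc : LetterAdj m c
      · -- `m` has only two neighbours, and neither `b` nor `c` is `k`
        obtain rfl : c = b := by unfold LetterAdj at hmk hb hc; omega
        have := ih (s' := s ++ [m]) (u' := v) (t' := m :: t) (by simp) (Or.symm hb)
          (by simpa using h)
        exact hm (by simp [this])
      · have h' := hR.swap_mem (s ++ m :: b :: v) t c m hcm (fun e => hc (Or.symm e))
          (by simpa using h)
        have := ih (u' := b :: v) (t' := c :: t) (by simp) hmk (by simpa using h')
        exact hk (List.mem_cons.2 ((List.mem_cons.1 this).imp_right (List.mem_append_left _)))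
    · have h' := hR.swap_mem s (u ++ m :: t) m b hbm.symm hb h
      exact hk (List.mem_cons_of_mem _ (ih (s' := s ++ [b]) (by simp) hmk (by simpa using h')))

theorem shortBraidFree_setOf_isReducedWordB {n : ℕ} {w : Equiv.Perm ℤ}
    (hbad : ∀ l, IsReducedWordB n w l → ¬ HasBadFactorB n l) :
    ShortBraidFree {l | IsReducedWordB n w l} where
  not_mem_square := not_isReducedWordB_append_cons_cons_self
  swap_mem _ _ _ _ hab hadj h := IsReducedWordB.swap h (commute_sB hab hadj)
  not_mem_braid s t a b ha hab h :=
    hbad _ h ⟨a, b, Nat.one_le_iff_ne_zero.2 ha, h.1.1 a (by simp),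
      by unfold LetterAdj at hab; omega, s, t, by simp⟩

section Positions

variable {α : Type*}

theorem List.exists_eq_append_cons_append_cons (l : List α) {p q : Fin l.length} (hpq : p < q) :
    ∃ s u t, l = s ++ l.get p :: (u ++ l.get q :: t) ∧ s.length = p ∧
      s.length + u.length + 1 = q := by
  have hq : (q : ℕ) = p + 1 + (q - p - 1) := by omega
  refine ⟨l.take p, (l.drop (p + 1)).take (q - p - 1), l.drop (q + 1), ?_, by simp,
    by simp only [List.length_take, List.length_drop]; omega⟩
  conv_lhs => rw [← List.take_append_drop p l, List.drop_eq_getElem_cons p.isLt,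
    ← List.take_append_drop (q - p - 1) (l.drop (p + 1)), List.drop_drop, ← hq,
    List.drop_eq_getElem_cons q.isLt]
  simp

theorem List.mem_iff_exists_get_between {l s u t : List α} {a b : α}
    (hl : l = s ++ a :: (u ++ b :: t)) (x : α) :
    x ∈ u ↔
      ∃ r : Fin l.length, s.length < r ∧ ↑r < s.length + u.length + 1 ∧ l.get r = x := by
  subst hl
  rw [List.mem_iff_getElem]
  constructor
  · rintro ⟨j, hj, rfl⟩
    exact ⟨⟨s.length + (j + 1), by simp only [List.length_append, List.length_cons]; omega⟩,
      by simp, by simp only; omega,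
      by simp [List.getElem_append_left hj]⟩
  · rintro ⟨⟨r, hr⟩, hr₁ : s.length < r, hr₂ : r < _, rfl⟩
    obtain ⟨j, rfl⟩ : ∃ j, r = s.length + (j + 1) := ⟨r - s.length - 1, by omega⟩
    have hj : j < u.length := by omega
    exact ⟨j, hj, by simp [List.getElem_append_left hj]⟩

end Positions

theorem separatedOccurrencesB_iff {n : ℕ} {l : List ℕ} :
    SeparatedOccurrencesB n l ↔ ∀ i, 1 ≤ i → i + 1 ≤ n →
      ∀ s u t, l = s ++ i :: (u ++ i :: t) → i - 1 ∈ u ∧ i + 1 ∈ u := by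
  constructor
  · intro hsep i hi hin s u t hl
    have hq : s.length + (u.length + 1) < l.length := by simp [hl]
    obtain ⟨⟨r₁, hr₁, hr₁', e₁⟩, ⟨r₂, hr₂, hr₂', e₂⟩⟩ :=
      hsep i hi hin ⟨s.length, by omega⟩ ⟨_, hq⟩ (by simp [Fin.lt_def]) (by subst hl; simp)
        (by subst hl; simp)
    exact ⟨(List.mem_iff_exists_get_between hl _).2 ⟨r₁, hr₁, hr₁', by omega⟩,
      (List.mem_iff_exists_get_between hl _).2 ⟨r₂, hr₂, hr₂', e₂⟩⟩
  · intro H i hi hin p q hpq hp hq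
    obtain ⟨s, u, t, hl, hs, hsu⟩ := List.exists_eq_append_cons_append_cons l hpq
    rw [hp, hq] at hl
    obtain ⟨h₁, h₂⟩ := H i hi hin s u t hl
    obtain ⟨r₁, hr₁, hr₁', e₁⟩ := (List.mem_iff_exists_get_between hl _).1 h₁
    obtain ⟨r₂, hr₂, hr₂', e₂⟩ := (List.mem_iff_exists_get_between hl _).1 h₂
    refine ⟨⟨r₁, ?_, ?_, by omega⟩, ⟨r₂, ?_, ?_, e₂⟩⟩ <;>
      rw [Fin.lt_def] <;> omega

theorem stmt_5_general (n : ℕ) (w : Equiv.Perm ℤ) :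
    (∀ l : List ℕ, IsReducedWordB n w l → ¬ HasBadFactorB n l) ↔
      ∀ l : List ℕ, IsReducedWordB n w l → SeparatedOccurrencesB n l := by
  constructor
  · intro hbad l hl
    have hR := shortBraidFree_setOf_isReducedWordB hbad
    rw [separatedOccurrencesB_iff]
    rintro i hi - s u t rfl
    exact ⟨hR.mem_of_letterAdj (Or.inr (by omega)) hl, hR.mem_of_letterAdj (Or.inl rfl) hl⟩
  · rintro hsep l hl ⟨i, j, hi, hin, hij, s, t, rfl⟩
    have := separatedOccurrencesB_iff.1 (hsep _ hl) i hi hin s [j] t (by simp)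
    simp only [List.mem_singleton] at this
    omega

theorem stmt_5 (n : ℕ) (hn : 1 ≤ n) (w : Equiv.Perm ℤ) (hw : IsSignedPerm n w) :
    (∀ l : List ℕ, IsReducedWordB n w l → ¬ HasBadFactorB n l) ↔
      ∀ l : List ℕ, IsReducedWordB n w l → SeparatedOccurrencesB n l :=
  stmt_5_general n w

end Stmt5
end

section
/- Let n ≥ 3 and let w be an element of the affine symmetric group 𝑆̃_n. Then dis(w)/2 = ℓ(w) if and only if w globally avoids the pattern 321, i.e., there are no integers i < j < k with w(i) > w(j) > w(k). -/
/-!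
Write `c_i` and `b_i` for the number of inversions of `w` having `i` as their smaller, resp.
larger, position. Right multiplication by a generator `sₐ` moves these counts along `sₐ`, except
at the swapped pair, so it changes the window sum `∑_{i=1}^n c_i` by exactly `±1` according to
the relative order of `w(a)` and `w(a+1)`, and it preserves the identity `c_i - b_i = w(i) - i`.
Induction on the window sum, removing one descent at a time, shows `ℓ(w) = ∑_{i=1}^n c_i`.
Summing the identity over `[1, n]`, where `∑ (w(i) - i) = 0`, gives `∑ c_i = ∑ b_i`, hence
`dis(w) = ∑ |c_i - b_i| ≤ ∑ (c_i + b_i) = 2 ℓ(w)`, with equality iff no `i` has inversions on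
both sides, i.e. iff `w` avoids `321`.
-/

namespace Stmt6

/-- `w` is an element of the affine symmetric group `𝑆̃_n`: a bijection of `ℤ`
with `w(i + n) = w(i) + n` for all `i` and `∑_{i=1}^n (w(i) - i) = 0`. -/
def IsAffinePerm (n : ℕ) (w : Equiv.Perm ℤ) : Prop :=
  (∀ i : ℤ, w (i + (n : ℤ)) = w i + (n : ℤ)) ∧
    ∑ i ∈ Finset.Icc (1 : ℤ) (n : ℤ), (w i - i) = 0

/-- `σ` is the Coxeter generator `sᵢ` of `𝑆̃_n`: it swaps `j` and `j + 1` for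
every integer `j ≡ i (mod n)` and fixes all other integers. -/
def IsGenA (n : ℕ) (i : ℕ) (σ : Equiv.Perm ℤ) : Prop :=
  ∀ j : ℤ, (j ≡ (i : ℤ) [ZMOD (n : ℤ)] → σ j = j + 1 ∧ σ (j + 1) = j) ∧
    ((¬ j ≡ (i : ℤ) [ZMOD (n : ℤ)] ∧ ¬ j ≡ (i : ℤ) + 1 [ZMOD (n : ℤ)]) → σ j = j)

/-- `l` is a word for `w` in the letters `{0, …, n-1}`:
`w = s_{i₁} ⋯ s_{i_ℓ}` where `l = [i₁, …, i_ℓ]`. -/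
def IsWordA (n : ℕ) (w : Equiv.Perm ℤ) (l : List ℕ) : Prop :=
  (∀ i ∈ l, i < n) ∧
    ∃ σs : List (Equiv.Perm ℤ), List.Forall₂ (IsGenA n) l σs ∧ σs.prod = w

/-- The Coxeter length of `w`: the minimal length of a word for `w`. -/
noncomputable def lenA (n : ℕ) (w : Equiv.Perm ℤ) : ℕ :=
  sInf {m | ∃ l : List ℕ, IsWordA n w l ∧ l.length = m}

/-- The disarray `dis(w) = ∑_{i=1}^n |w(i) - i|`. -/
noncomputable def disA (n : ℕ) (w : Equiv.Perm ℤ) : ℤ :=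
  ∑ i ∈ Finset.Icc (1 : ℤ) (n : ℤ), |w i - i|

open Function

section WindowSums

variable {n : ℕ} {M : Type*} [AddCommMonoid M]

def windowRep (n : ℕ) (x : ℤ) : ℤ := (x - 1) % n + 1

lemma windowRep_mem (hn : 0 < n) (x : ℤ) : windowRep n x ∈ Finset.Icc (1 : ℤ) n := by
  have := Int.emod_nonneg (x - 1) (by omega : (n : ℤ) ≠ 0)
  have := Int.emod_lt_of_pos (x - 1) (by omega : (0 : ℤ) < n)
  simp only [Finset.mem_Icc, windowRep]
  omega

lemma windowRep_modEq (n : ℕ) (x : ℤ) : windowRep n x ≡ x [ZMOD n] := by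
  simpa [windowRep] using (Int.mod_modEq (x - 1) n).add_right 1

lemma windowRep_congr {x y : ℤ} (h : x ≡ y [ZMOD n]) : windowRep n x = windowRep n y :=
  congrArg (· + 1) (h.sub_right 1)

lemma windowRep_eq_self {x : ℤ} (hx : x ∈ Finset.Icc (1 : ℤ) n) : windowRep n x = x := by
  rw [Finset.mem_Icc] at hx
  rw [windowRep, Int.emod_eq_of_lt (by omega) (by omega), sub_add_cancel]

lemma _root_.Function.Periodic.apply_windowRep {α : Type*} {f : ℤ → α} (hf : Periodic f n) (x : ℤ) :
    f (windowRep n x) = f x := by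
  rw [windowRep, Int.emod_def, show x - 1 - n * ((x - 1) / n) + 1 = x - ((x - 1) / n) • (n : ℤ) by
    rw [smul_eq_mul]; ring, hf.sub_zsmul_eq]

lemma forall_mem_Icc_iff_forall_of_periodic (hn : 0 < n) {p : ℤ → Prop} (hp : Periodic p n) :
    (∀ i ∈ Finset.Icc (1 : ℤ) n, p i) ↔ ∀ i, p i :=
  ⟨fun h i => hp.apply_windowRep i ▸ h _ (windowRep_mem hn i), fun h i _ => h i⟩

lemma sum_Icc_ite_modEq (hn : 0 < n) {f : ℤ → M} (hf : Periodic f n) (a : ℤ) :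
    ∑ i ∈ Finset.Icc (1 : ℤ) n, (if i ≡ a [ZMOD n] then f i else 0) = f a := by
  rw [Finset.sum_eq_single_of_mem _ (windowRep_mem hn a), if_pos (windowRep_modEq n a),
    hf.apply_windowRep]
  intro i hi hne
  rw [if_neg fun h => hne (by rw [← windowRep_eq_self hi, windowRep_congr h])]

end WindowSums

def IsPeriodicPerm (n : ℕ) (w : Equiv.Perm ℤ) : Prop := ∀ j : ℤ, w (j + n) = w j + n

namespace IsPeriodicPerm

variable {n : ℕ} {u v w : Equiv.Perm ℤ}

lemma periodic_sub (hw : IsPeriodicPerm n w) : Periodic (fun j => w j - j) n :=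
  fun j => by show w (j + n) - (j + n) = w j - j; rw [hw j]; ring

lemma apply_sub (hw : IsPeriodicPerm n w) (j : ℤ) : w (j - n) = w j - n := by
  have := hw.periodic_sub.sub_eq j
  linarith

lemma apply_add_mul (hw : IsPeriodicPerm n w) (x t : ℤ) : w (x + t * n) = w x + t * n := by
  have := hw.periodic_sub.zsmul t x
  simp only [smul_eq_mul] at this
  linarith

lemma modEq (hw : IsPeriodicPerm n w) {x y : ℤ} (h : x ≡ y [ZMOD n]) : w x ≡ w y [ZMOD n] := by
  obtain ⟨t, ht⟩ := h.dvd
  rw [show y = x + t * n by linarith, hw.apply_add_mul]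
  show w x % n = (w x + t * n) % n
  rw [Int.add_mul_emod_self_right]

lemma one : IsPeriodicPerm n 1 := fun _ => rfl

lemma mul (hu : IsPeriodicPerm n u) (hv : IsPeriodicPerm n v) : IsPeriodicPerm n (u * v) :=
  fun j => by simp only [Equiv.Perm.mul_apply, hv j, hu (v j)]

lemma inv (hw : IsPeriodicPerm n w) : IsPeriodicPerm n w⁻¹ :=
  fun j => w.injective (by rw [hw]; simp only [Equiv.Perm.coe_inv, Equiv.apply_symm_apply])

lemma sum_comp {M : Type*} [AddCommMonoid M] (hn : 0 < n) (hw : IsPeriodicPerm n w)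
    {f : ℤ → M} (hf : Periodic f n) :
    ∑ i ∈ Finset.Icc (1 : ℤ) n, f (w i) = ∑ i ∈ Finset.Icc (1 : ℤ) n, f i := by
  refine Finset.sum_nbij' (fun i => windowRep n (w i)) (fun i => windowRep n (w⁻¹ i))
    (fun i _ => windowRep_mem hn _) (fun i _ => windowRep_mem hn _) ?_ ?_
    (fun i _ => (hf.apply_windowRep (w i)).symm)
  · intro i hi
    rw [windowRep_congr (hw.inv.modEq (windowRep_modEq n (w i))), Equiv.Perm.coe_inv,
      Equiv.symm_apply_apply, windowRep_eq_self hi]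
  · intro i hi
    rw [windowRep_congr (hw.modEq (windowRep_modEq n (w⁻¹ i))), Equiv.Perm.coe_inv,
      Equiv.apply_symm_apply, windowRep_eq_self hi]

lemma abs_sub_le_disA (hn : 0 < n) (hw : IsPeriodicPerm n w) (j : ℤ) : |w j - j| ≤ disA n w := by
  have hf : Periodic (fun j => |w j - j|) n := fun j => by
    show |w (j + n) - (j + n)| = |w j - j|; rw [hw j, add_sub_add_right_eq_sub]
  rw [← hf.apply_windowRep j]
  exact Finset.single_le_sum (f := fun j => |w j - j|) (fun _ _ => abs_nonneg _)
    (windowRep_mem hn j)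

end IsPeriodicPerm

lemma ncard_setOf_add_ite_eq {α : Type*} {P Q : α → Prop} [DecidablePred P] [DecidablePred Q]
    {x : α} (h : ∀ y ≠ x, P y ↔ Q y) (hP : {y | P y}.Finite) :
    ({y | Q y}.ncard : ℤ) + (if P x then 1 else 0) = {y | P y}.ncard + (if Q x then 1 else 0) := by
  have split : ∀ (R : α → Prop) [DecidablePred R], {y | R y}.Finite →
      ({y | R y}.ncard : ℤ) = ({y | R y} \ {x}).ncard + if R x then 1 else 0 := by
    intro R _ hR
    split_ifs with hx
    · rw [← Set.ncard_sdiff_singleton_add_one (s := {y | R y}) hx hR]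
      push_cast
      ring
    · rw [Set.sdiff_singleton_eq_self (s := {y | R y}) hx, add_zero]
  have hdiff : {y | P y} \ {x} = {y | Q y} \ {x} := by
    ext y
    simp only [Set.mem_sdiff, Set.mem_ofPred_eq, Set.mem_singleton_iff]
    exact ⟨fun ⟨hy, hne⟩ => ⟨(h y hne).1 hy, hne⟩, fun ⟨hy, hne⟩ => ⟨(h y hne).2 hy, hne⟩⟩
  have hQ : {y | Q y}.Finite := (hP.insert x).subset fun y hy => by
    by_cases hyx : y = x
    · exact Or.inl hyx
    · exact Or.inr ((h y hyx).2 hy)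
  rw [split P hP, split Q hQ, hdiff]
  ring

def invRight (w : Equiv.Perm ℤ) (i : ℤ) : Set ℤ := {j | i < j ∧ w j < w i}

def invLeft (w : Equiv.Perm ℤ) (i : ℤ) : Set ℤ := {j | j < i ∧ w i < w j}

/-- The affine inversion number: inversions `(i, j)`, `i < j`, counted up to translation by `n`
through their representative with `i ∈ [1, n]`. -/
noncomputable def invNum (n : ℕ) (w : Equiv.Perm ℤ) : ℕ :=
  ∑ i ∈ Finset.Icc (1 : ℤ) n, (invRight w i).ncard

lemma not_exists_pattern_321_iff (w : Equiv.Perm ℤ) :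
    (¬ ∃ i j k : ℤ, i < j ∧ j < k ∧ w i > w j ∧ w j > w k) ↔
      ∀ j, invLeft w j = ∅ ∨ invRight w j = ∅ := by
  simp only [Set.eq_empty_iff_forall_notMem, invLeft, invRight, Set.mem_ofPred_eq]
  constructor
  · intro h j
    by_contra! hc
    obtain ⟨⟨i, hij, hwij⟩, ⟨k, hjk, hwjk⟩⟩ := hc
    exact h ⟨i, j, k, hij, hjk, hwij, hwjk⟩
  · rintro h ⟨i, j, k, hij, hjk, hwij, hwjk⟩
    rcases h j with h | h
    · exact h i ⟨hij, hwij⟩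
    · exact h k ⟨hjk, hwjk⟩

section Inversions

variable {n : ℕ} {w : Equiv.Perm ℤ}

lemma invRight_one (i : ℤ) : invRight 1 i = ∅ :=
  Set.eq_empty_iff_forall_notMem.mpr fun _ ⟨hij, hji⟩ => lt_asymm hij hji

lemma invLeft_one (i : ℤ) : invLeft 1 i = ∅ :=
  Set.eq_empty_iff_forall_notMem.mpr fun _ ⟨hji, hij⟩ => lt_asymm hij hji

lemma invRight_finite_of_abs_sub_le {D : ℤ} (hD : ∀ j, |w j - j| ≤ D) (i : ℤ) :
    (invRight w i).Finite :=
  (Set.finite_Ioo i (w i + D)).subset fun j ⟨hij, hw⟩ =>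
    ⟨hij, by have := abs_le.mp (hD j); omega⟩

lemma invLeft_finite_of_abs_sub_le {D : ℤ} (hD : ∀ j, |w j - j| ≤ D) (i : ℤ) :
    (invLeft w i).Finite :=
  (Set.finite_Ioo (w i - D) i).subset fun j ⟨hij, hw⟩ =>
    ⟨by have := abs_le.mp (hD j); omega, hij⟩

lemma IsPeriodicPerm.invRight_finite (hn : 0 < n) (hw : IsPeriodicPerm n w) (i : ℤ) :
    (invRight w i).Finite :=
  invRight_finite_of_abs_sub_le (hw.abs_sub_le_disA hn) i

lemma IsPeriodicPerm.invLeft_finite (hn : 0 < n) (hw : IsPeriodicPerm n w) (i : ℤ) :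
    (invLeft w i).Finite :=
  invLeft_finite_of_abs_sub_le (hw.abs_sub_le_disA hn) i

lemma IsPeriodicPerm.ncard_invRight_add (hw : IsPeriodicPerm n w) (i : ℤ) :
    (invRight w (i + n)).ncard = (invRight w i).ncard := by
  have h : invRight w (i + n) = (· - (n : ℤ)) ⁻¹' invRight w i := by
    ext j
    simp only [invRight, Set.mem_preimage, Set.mem_ofPred_eq, hw i, hw.apply_sub j]
    exact and_congr (by omega) (by omega)
  rw [h, Set.ncard_preimage_of_injective_subset_range (sub_left_injective (b := (n : ℤ)))
    fun j _ => ⟨j + n, add_sub_cancel_right j (n : ℤ)⟩]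

lemma IsPeriodicPerm.ncard_invLeft_add (hw : IsPeriodicPerm n w) (i : ℤ) :
    (invLeft w (i + n)).ncard = (invLeft w i).ncard := by
  have h : invLeft w (i + n) = (· - (n : ℤ)) ⁻¹' invLeft w i := by
    ext j
    simp only [invLeft, Set.mem_preimage, Set.mem_ofPred_eq, hw i, hw.apply_sub j]
    exact and_congr (by omega) (by omega)
  rw [h, Set.ncard_preimage_of_injective_subset_range (sub_left_injective (b := (n : ℤ)))
    fun j _ => ⟨j + n, add_sub_cancel_right j (n : ℤ)⟩]

end Inversions

section AdjacentInvolution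

variable {s w : Equiv.Perm ℤ} (hs : Involutive s) (hadj : ∀ j, |s j - j| ≤ 1)
include hs hadj

lemma lt_iff_lt_of_ne_of_involutive {p k : ℤ} (hk : k ≠ s p) : s p < s k ↔ p < k := by
  have hp := abs_le.mp (hadj p)
  have hk' := abs_le.mp (hadj k)
  have hkp : s k ≠ p := fun h => hk (by rw [← h, hs k])
  by_cases hpk : p = k
  · subst hpk
    simp
  have hne : s k ≠ s p := fun h => hpk (s.injective h).symm
  omega

lemma ncard_invRight_mul (i : ℤ) (hfin : (invRight w (s i)).Finite) :
    ((invRight (w * s) i).ncard : ℤ) = (invRight w (s i)).ncard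
      + (if i < s i ∧ w i < w (s i) then 1 else 0)
      - (if s i < i ∧ w i < w (s i) then 1 else 0) := by
  have hpre : invRight (w * s) i = s ⁻¹' {k | i < s k ∧ w k < w (s i)} := by
    ext j
    simp only [invRight, Set.mem_preimage, Set.mem_ofPred_eq, Equiv.Perm.mul_apply, hs j]
  have key := ncard_setOf_add_ite_eq (x := i) (P := fun k => s i < k ∧ w k < w (s i))
    (Q := fun k => i < s k ∧ w k < w (s i)) (fun k hk => by
      rw [← lt_iff_lt_of_ne_of_involutive hs hadj (p := s i) (by rwa [hs i]), hs i]) hfin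
  rw [hpre, Set.ncard_preimage_of_injective_subset_range s.injective (by simp), invRight]
  linarith

lemma ncard_invLeft_mul (i : ℤ) (hfin : (invLeft w (s i)).Finite) :
    ((invLeft (w * s) i).ncard : ℤ) = (invLeft w (s i)).ncard
      + (if s i < i ∧ w (s i) < w i then 1 else 0)
      - (if i < s i ∧ w (s i) < w i then 1 else 0) := by
  have hpre : invLeft (w * s) i = s ⁻¹' {k | s k < i ∧ w (s i) < w k} := by
    ext j
    simp only [invLeft, Set.mem_preimage, Set.mem_ofPred_eq, Equiv.Perm.mul_apply, hs j]
  have key := ncard_setOf_add_ite_eq (x := i) (P := fun k => k < s i ∧ w (s i) < w k)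
    (Q := fun k => s k < i ∧ w (s i) < w k) (fun k hk => by
      rw [← lt_iff_lt_of_ne_of_involutive hs hadj (p := k) (s.injective.ne (Ne.symm hk)), hs i])
    hfin
  rw [hpre, Set.ncard_preimage_of_injective_subset_range s.injective (by simp), invLeft]
  linarith

lemma ncard_invRight_sub_ncard_invLeft_mul (i : ℤ) (hR : (invRight w (s i)).Finite)
    (hL : (invLeft w (s i)).Finite)
    (h : ((invRight w (s i)).ncard : ℤ) - (invLeft w (s i)).ncard = w (s i) - s i) :
    ((invRight (w * s) i).ncard : ℤ) - (invLeft (w * s) i).ncard = (w * s) i - i := by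
  rw [ncard_invRight_mul hs hadj i hR, ncard_invLeft_mul hs hadj i hL, Equiv.Perm.mul_apply]
  have hi := abs_le.mp (hadj i)
  have hne : s i = i ∨ w i ≠ w (s i) :=
    or_iff_not_imp_left.mpr fun h' => w.injective.ne (Ne.symm h')
  split_ifs <;> omega

end AdjacentInvolution

section Generators

variable {n : ℕ}

def genFun (n : ℕ) (a j : ℤ) : ℤ :=
  if j ≡ a [ZMOD n] then j + 1 else if j ≡ a + 1 [ZMOD n] then j - 1 else j

lemma not_modEq_add_one (hn : 2 ≤ n) (a : ℤ) : ¬ a ≡ a + 1 [ZMOD n] := fun h => by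
  have := Int.le_of_dvd one_pos (by simpa using h.dvd)
  omega

lemma genFun_involutive (hn : 2 ≤ n) (a : ℤ) : Involutive (genFun n a) := by
  intro j
  by_cases h₁ : j ≡ a [ZMOD n]
  · have h₂ : j + 1 ≡ a + 1 [ZMOD n] := h₁.add_right 1
    have h₃ : ¬ j + 1 ≡ a [ZMOD n] := fun h => not_modEq_add_one hn a (h.symm.trans h₂)
    simp only [genFun, if_pos h₁, if_neg h₃, if_pos h₂, add_sub_cancel_right]
  by_cases h₂ : j ≡ a + 1 [ZMOD n]
  · have h₃ : j - 1 ≡ a [ZMOD n] := by simpa using h₂.sub_right 1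
    simp only [genFun, if_neg h₁, if_pos h₂, if_pos h₃, sub_add_cancel]
  · simp only [genFun, if_neg h₁, if_neg h₂]

variable (hn : 2 ≤ n)

def gen (a : ℤ) : Equiv.Perm ℤ := (genFun_involutive hn a).toPerm _

variable {hn} {a j : ℤ}

lemma gen_apply : gen hn a j = genFun n a j := rfl

lemma gen_involutive : Involutive (gen hn a) := genFun_involutive hn a

lemma gen_mul_self : gen hn a * gen hn a = 1 := Equiv.ext gen_involutive

lemma gen_apply_of_modEq (h : j ≡ a [ZMOD n]) : gen hn a j = j + 1 := if_pos h

lemma gen_apply_of_modEq_add_one (h : j ≡ a + 1 [ZMOD n]) : gen hn a j = j - 1 := by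
  rw [gen_apply, genFun, if_neg fun h' => not_modEq_add_one hn a (h'.symm.trans h), if_pos h]

lemma gen_apply_of_not_modEq (h₁ : ¬ j ≡ a [ZMOD n]) (h₂ : ¬ j ≡ a + 1 [ZMOD n]) :
    gen hn a j = j := by
  rw [gen_apply, genFun, if_neg h₁, if_neg h₂]

lemma lt_gen_iff : j < gen hn a j ↔ j ≡ a [ZMOD n] := by
  by_cases h₁ : j ≡ a [ZMOD n]
  · simp [gen_apply_of_modEq h₁, h₁]
  by_cases h₂ : j ≡ a + 1 [ZMOD n]
  · simp [gen_apply_of_modEq_add_one h₂, h₁]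
  · simp [gen_apply_of_not_modEq h₁ h₂, h₁]

lemma gen_lt_iff : gen hn a j < j ↔ j ≡ a + 1 [ZMOD n] := by
  by_cases h₂ : j ≡ a + 1 [ZMOD n]
  · simp [gen_apply_of_modEq_add_one h₂, h₂]
  by_cases h₁ : j ≡ a [ZMOD n]
  · simp [gen_apply_of_modEq h₁, h₂]
  · simp [gen_apply_of_not_modEq h₁ h₂, h₂]

lemma abs_gen_sub_le (j : ℤ) : |gen hn a j - j| ≤ 1 := by
  rw [abs_le]
  by_cases h₁ : j ≡ a [ZMOD n]
  · rw [gen_apply_of_modEq h₁]; omega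
  by_cases h₂ : j ≡ a + 1 [ZMOD n]
  · rw [gen_apply_of_modEq_add_one h₂]; omega
  · rw [gen_apply_of_not_modEq h₁ h₂]; omega

lemma isPeriodicPerm_gen : IsPeriodicPerm n (gen hn a) := by
  intro j
  have hj : j + n ≡ j [ZMOD n] := Int.add_modEq_right
  have h₁ : j + n ≡ a [ZMOD n] ↔ j ≡ a [ZMOD n] := ⟨hj.symm.trans, hj.trans⟩
  have h₂ : j + n ≡ a + 1 [ZMOD n] ↔ j ≡ a + 1 [ZMOD n] := ⟨hj.symm.trans, hj.trans⟩
  simp only [gen_apply, genFun, h₁, h₂]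
  split_ifs <;> ring

lemma gen_congr {b : ℤ} (h : a ≡ b [ZMOD n]) : gen hn a = gen hn b := by
  ext j
  have h₁ : j ≡ a [ZMOD n] ↔ j ≡ b [ZMOD n] := ⟨(·.trans h), (·.trans h.symm)⟩
  have h₂ : j ≡ a + 1 [ZMOD n] ↔ j ≡ b + 1 [ZMOD n] :=
    ⟨(·.trans (h.add_right 1)), (·.trans (h.add_right 1).symm)⟩
  simp only [gen_apply, genFun, h₁, h₂]

lemma isGenA_gen (k : ℕ) : IsGenA n k (gen hn k) := by
  intro j
  refine ⟨fun h => ⟨gen_apply_of_modEq h, ?_⟩, fun ⟨h₁, h₂⟩ => gen_apply_of_not_modEq h₁ h₂⟩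
  rw [gen_apply_of_modEq_add_one (h.add_right 1), add_sub_cancel_right]

lemma IsGenA.eq_gen {k : ℕ} {σ : Equiv.Perm ℤ} (h : IsGenA n k σ) : σ = gen hn k := by
  ext j
  by_cases h₁ : j ≡ k [ZMOD n]
  · rw [gen_apply_of_modEq h₁, ((h j).1 h₁).1]
  by_cases h₂ : j ≡ k + 1 [ZMOD n]
  · have h₃ : j - 1 ≡ k [ZMOD n] := by simpa using h₂.sub_right 1
    rw [gen_apply_of_modEq_add_one h₂, ← ((h (j - 1)).1 h₃).2, sub_add_cancel]
  · rw [gen_apply_of_not_modEq h₁ h₂, (h j).2 ⟨h₁, h₂⟩]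

end Generators

section Length

variable {n : ℕ} {u v w : Equiv.Perm ℤ} {hn : 2 ≤ n}

lemma invNum_mul_gen (hw : IsPeriodicPerm n w) (a : ℤ) :
    (invNum n (w * gen hn a) : ℤ) =
      invNum n w + (if w a < w (a + 1) then 1 else 0) - (if w (a + 1) < w a then 1 else 0) := by
  have hn0 : 0 < n := by omega
  have hu : ∀ i, (if i < gen hn a i ∧ w i < w (gen hn a i) then (1 : ℤ) else 0) =
      if i ≡ a [ZMOD n] then (if w i < w (i + 1) then 1 else 0) else 0 := by
    intro i
    by_cases h : i ≡ a [ZMOD n]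
    · simp only [if_pos h, gen_apply_of_modEq h, lt_add_one, true_and]
    · rw [if_neg h, if_neg fun h' => h (lt_gen_iff.mp h'.1)]
  have hv : ∀ i, (if gen hn a i < i ∧ w i < w (gen hn a i) then (1 : ℤ) else 0) =
      if i ≡ a + 1 [ZMOD n] then (if w i < w (i - 1) then 1 else 0) else 0 := by
    intro i
    by_cases h : i ≡ a + 1 [ZMOD n]
    · simp only [if_pos h, gen_apply_of_modEq_add_one h, sub_one_lt, true_and]
    · rw [if_neg h, if_neg fun h' => h (gen_lt_iff.mp h'.1)]
  have hperm : ∑ i ∈ Finset.Icc (1 : ℤ) n, ((invRight w (gen hn a i)).ncard : ℤ) = invNum n w := by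
    rw [isPeriodicPerm_gen.sum_comp hn0 (f := fun i => ((invRight w i).ncard : ℤ))
      fun i => by simp only [hw.ncard_invRight_add], invNum, Nat.cast_sum]
  have hsucc := sum_Icc_ite_modEq hn0 (f := fun i => if w i < w (i + 1) then (1 : ℤ) else 0)
    (fun i => by simp only [add_right_comm i (n : ℤ) 1, hw i, hw (i + 1), add_lt_add_iff_right]) a
  have hpred := sum_Icc_ite_modEq hn0 (f := fun i => if w i < w (i - 1) then (1 : ℤ) else 0)
    (fun i => by simp only [add_sub_right_comm i (n : ℤ) 1, hw i, hw (i - 1), add_lt_add_iff_right])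
    (a + 1)
  simp only [add_sub_cancel_right] at hpred
  rw [invNum, Nat.cast_sum, Finset.sum_congr rfl fun i _ =>
    ncard_invRight_mul gen_involutive abs_gen_sub_le i (hw.invRight_finite hn0 _)]
  simp only [hu, hv, Finset.sum_sub_distrib, Finset.sum_add_distrib, hperm, hsucc, hpred]

lemma invNum_mul_gen_le (hw : IsPeriodicPerm n w) (a : ℤ) :
    invNum n (w * gen hn a) ≤ invNum n w + 1 := by
  have := invNum_mul_gen (hn := hn) hw a
  split_ifs at this <;> omega

lemma invNum_mul_gen_add_one (hw : IsPeriodicPerm n w) {a : ℤ} (h : w (a + 1) < w a) :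
    invNum n (w * gen hn a) + 1 = invNum n w := by
  have := invNum_mul_gen (hn := hn) hw a
  rw [if_neg (lt_asymm h), if_pos h] at this
  omega

noncomputable def dispSum (n : ℕ) (w : Equiv.Perm ℤ) : ℤ := ∑ i ∈ Finset.Icc (1 : ℤ) n, (w i - i)

lemma dispSum_mul (hn0 : 0 < n) (hu : IsPeriodicPerm n u) (hv : IsPeriodicPerm n v) :
    dispSum n (u * v) = dispSum n u + dispSum n v := by
  have h := hv.sum_comp hn0 hu.periodic_sub
  simp only [dispSum, Equiv.Perm.mul_apply]
  rw [← h, ← Finset.sum_add_distrib]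
  exact Finset.sum_congr rfl fun i _ => by ring

lemma dispSum_gen (a : ℤ) : dispSum n (gen hn a) = 0 := by
  have h := dispSum_mul (by omega) (isPeriodicPerm_gen (hn := hn) (a := a))
    (isPeriodicPerm_gen (hn := hn) (a := a))
  have h1 : dispSum n 1 = 0 := by simp [dispSum]
  rw [gen_mul_self, h1] at h
  linarith

lemma IsAffinePerm.isPeriodicPerm (hw : IsAffinePerm n w) : IsPeriodicPerm n w := hw.1

lemma IsAffinePerm.dispSum_eq_zero (hw : IsAffinePerm n w) : dispSum n w = 0 := hw.2

lemma IsAffinePerm.mul_gen (hw : IsAffinePerm n w) (a : ℤ) : IsAffinePerm n (w * gen hn a) :=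
  ⟨hw.isPeriodicPerm.mul isPeriodicPerm_gen, by
    rw [← dispSum, dispSum_mul (by omega) hw.isPeriodicPerm isPeriodicPerm_gen, dispSum_gen,
      hw.dispSum_eq_zero, add_zero]⟩

/-- A strictly increasing bijection of `ℤ` is a translation, and `dispSum` forces it to be
trivial. -/
lemma IsAffinePerm.eq_one_of_forall_lt_succ (hn0 : 0 < n) (hw : IsAffinePerm n w)
    (h : ∀ a, w a < w (a + 1)) : w = 1 := by
  have hmono := strictMono_int_of_lt_succ h
  have hsucc : ∀ a, w (a + 1) = w a + 1 := by
    intro a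
    obtain ⟨b, hb⟩ := w.surjective (w a + 1)
    have hab : a < b := hmono.lt_iff_lt.mp (by omega)
    have := hmono.monotone (show a + 1 ≤ b by omega)
    have := h a
    omega
  have htrans : ∀ a, w a = a + w 0 := by
    intro a
    induction a using Int.induction_on with
    | zero => simp
    | succ k ih => rw [hsucc, ih]; ring
    | pred k ih => have := hsucc (-(k : ℤ) - 1); rw [sub_add_cancel] at this; omega
  have h0 : (n : ℤ) * w 0 = 0 := by
    have := hw.dispSum_eq_zero
    rwa [dispSum, Finset.sum_congr rfl fun i _ => by rw [htrans i, add_sub_cancel_left],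
      Finset.sum_const, Int.card_Icc, add_sub_cancel_right, Int.toNat_natCast, nsmul_eq_mul] at this
  have h0 : w 0 = 0 := (mul_eq_zero.mp h0).resolve_left (by omega)
  ext j
  rw [htrans j, h0, add_zero, Equiv.Perm.one_apply]

theorem IsAffinePerm.induction_on_descent {P : Equiv.Perm ℤ → Prop} (one : P 1)
    (step : ∀ w a, IsAffinePerm n w → w (a + 1) < w a → P (w * gen hn a) → P w)
    (hw : IsAffinePerm n w) : P w := by
  induction hk : invNum n w using Nat.strong_induction_on generalizing w with
  | _ k ih =>
    by_cases hd : ∃ a, w (a + 1) < w a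
    · obtain ⟨a, ha⟩ := hd
      have := invNum_mul_gen_add_one (hn := hn) hw.isPeriodicPerm ha
      exact step w a hw ha (ih _ (by omega) (hw.mul_gen a) rfl)
    · simp only [not_exists, not_lt] at hd
      rw [hw.eq_one_of_forall_lt_succ (by omega) fun a =>
        (hd a).lt_of_ne (w.injective.ne (by omega))]
      exact one

end Length

section Main

variable {n : ℕ} {w : Equiv.Perm ℤ} {l : List ℕ}

theorem IsAffinePerm.ncard_invRight_sub_ncard_invLeft (hn : 2 ≤ n) (hw : IsAffinePerm n w)
    (i : ℤ) : ((invRight w i).ncard : ℤ) - (invLeft w i).ncard = w i - i := by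
  refine hw.induction_on_descent (hn := hn)
    (P := fun w => ∀ i, ((invRight w i).ncard : ℤ) - (invLeft w i).ncard = w i - i) ?_ ?_ i
  · intro i
    simp [invRight_one, invLeft_one]
  · intro w a hw _ ih i
    have hv := (hw.mul_gen (hn := hn) a).isPeriodicPerm
    have := ncard_invRight_sub_ncard_invLeft_mul (s := gen hn a) gen_involutive abs_gen_sub_le i
      (hv.invRight_finite (by omega) _) (hv.invLeft_finite (by omega) _) (ih _)
    rwa [mul_assoc, gen_mul_self, mul_one] at this

lemma IsWordA.eq_prod_map (hn : 2 ≤ n) (h : IsWordA n w l) :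
    w = (l.map fun k : ℕ => gen hn k).prod := by
  obtain ⟨-, σs, hσs, rfl⟩ := h
  congr 1
  induction hσs with
  | nil => rfl
  | cons hk _ ih => rw [List.map_cons, ← hk.eq_gen, ih]

lemma isWordA_prod_map (hn : 2 ≤ n) (hl : ∀ k ∈ l, k < n) :
    IsWordA n (l.map fun k : ℕ => gen hn k).prod l :=
  ⟨hl, _, List.forall₂_map_right_iff.mpr (List.forall₂_same.mpr fun k _ => isGenA_gen k), rfl⟩

lemma invNum_prod_map_le (hn : 2 ≤ n) (l : List ℕ) :
    invNum n (l.map fun k : ℕ => gen hn k).prod ≤ l.length := by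
  induction l using List.reverseRecOn with
  | nil => simp [invNum, invRight_one]
  | append_singleton l k ih =>
    have hp : IsPeriodicPerm n (l.map fun k : ℕ => gen hn k).prod :=
      List.prod_induction _ (fun _ _ => IsPeriodicPerm.mul) IsPeriodicPerm.one (by
        simp only [List.mem_map]
        rintro _ ⟨k, -, rfl⟩
        exact isPeriodicPerm_gen)
    rw [List.map_append, List.prod_append, List.map_singleton, List.prod_singleton,
      List.length_append, List.length_singleton]
    exact (invNum_mul_gen_le hp k).trans (by omega)

lemma exists_lt_natCast_modEq (hn : 0 < n) (a : ℤ) : ∃ k : ℕ, k < n ∧ (k : ℤ) ≡ a [ZMOD n] := by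
  refine ⟨(a % n).toNat, ?_, ?_⟩
  · have := Int.emod_lt_of_pos a (by omega : (0 : ℤ) < n)
    omega
  · rw [Int.toNat_of_nonneg (Int.emod_nonneg a (by omega))]
    exact Int.mod_modEq a n

lemma IsAffinePerm.exists_isWordA (hn : 2 ≤ n) (hw : IsAffinePerm n w) :
    ∃ l, IsWordA n w l ∧ l.length = invNum n w := by
  refine hw.induction_on_descent (hn := hn)
    (P := fun w => ∃ l, IsWordA n w l ∧ l.length = invNum n w)
    ⟨[], ⟨by simp, [], .nil, rfl⟩, by simp [invNum, invRight_one]⟩ ?_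
  rintro w a hw ha ⟨l, hl, hlen⟩
  obtain ⟨k, hk, hka⟩ := exists_lt_natCast_modEq (n := n) (by omega) a
  have hprod : w = ((l ++ [k]).map fun k : ℕ => gen hn k).prod := by
    rw [List.map_append, List.prod_append, ← hl.eq_prod_map hn, List.map_singleton,
      List.prod_singleton, gen_congr hka, mul_assoc, gen_mul_self, mul_one]
  refine ⟨l ++ [k], hprod ▸ isWordA_prod_map hn fun k' hk' => ?_, ?_⟩
  · rcases List.mem_append.mp hk' with h | h
    · exact hl.1 k' h
    · rw [List.mem_singleton.mp h]
      exact hk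
  · have := invNum_mul_gen_add_one (hn := hn) hw.isPeriodicPerm ha
    rw [List.length_append, List.length_singleton, hlen]
    omega

theorem IsAffinePerm.lenA_eq_invNum (hn : 2 ≤ n) (hw : IsAffinePerm n w) :
    lenA n w = invNum n w := by
  obtain ⟨l, hl, hlen⟩ := hw.exists_isWordA hn
  refine le_antisymm (hlen ▸ Nat.sInf_le ⟨l, hl, rfl⟩) (le_csInf ⟨_, l, hl, rfl⟩ ?_)
  rintro m ⟨l', hl', rfl⟩
  rw [hl'.eq_prod_map hn]
  exact invNum_prod_map_le hn l'

theorem IsAffinePerm.disA_eq_two_mul_invNum_iff (hn : 2 ≤ n) (hw : IsAffinePerm n w) :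
    disA n w = 2 * invNum n w ↔ ∀ j, invLeft w j = ∅ ∨ invRight w j = ∅ := by
  have hn0 : 0 < n := by omega
  have hbal := hw.ncard_invRight_sub_ncard_invLeft hn
  have hdis : disA n w =
      ∑ i ∈ Finset.Icc (1 : ℤ) n, |((invRight w i).ncard : ℤ) - (invLeft w i).ncard| :=
    Finset.sum_congr rfl fun i _ => by rw [hbal]
  have hinv : 2 * (invNum n w : ℤ) =
      ∑ i ∈ Finset.Icc (1 : ℤ) n, (((invRight w i).ncard : ℤ) + (invLeft w i).ncard) := by
    have h0 := hw.dispSum_eq_zero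
    rw [dispSum, ← Finset.sum_congr rfl fun i _ => hbal i, Finset.sum_sub_distrib] at h0
    rw [Finset.sum_add_distrib, invNum, Nat.cast_sum]
    linarith
  have hper : Periodic (fun i => |((invRight w i).ncard : ℤ) - (invLeft w i).ncard| =
      (invRight w i).ncard + (invLeft w i).ncard) n := fun i => by
    simp only [hw.isPeriodicPerm.ncard_invRight_add, hw.isPeriodicPerm.ncard_invLeft_add]
  rw [hdis, hinv, Finset.sum_eq_sum_iff_of_le fun i _ => abs_sub_le_iff.mpr ⟨by omega, by omega⟩,
    forall_mem_Icc_iff_forall_of_periodic hn0 hper]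
  refine forall_congr' fun j => ?_
  rw [← Set.ncard_eq_zero (hw.isPeriodicPerm.invLeft_finite hn0 j),
    ← Set.ncard_eq_zero (hw.isPeriodicPerm.invRight_finite hn0 j), abs_eq (by positivity)]
  constructor <;> intro h <;> omega

end Main

theorem stmt_6 (n : ℕ) (hn : 3 ≤ n) (w : Equiv.Perm ℤ) (hw : IsAffinePerm n w) :
    disA n w = 2 * (lenA n w : ℤ) ↔
      ¬ ∃ i j k : ℤ, i < j ∧ j < k ∧ w i > w j ∧ w j > w k := by
  have hn2 : 2 ≤ n := by omega
  rw [hw.lenA_eq_invNum hn2, hw.disA_eq_two_mul_invNum_iff hn2, not_exists_pattern_321_iff]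

end Stmt6
end

section
/- Let n ≥ 3 and let w be an element of the affine symmetric group 𝑆̃_n. Then dis(w)/2 = ℓ(w) if and only if no reduced word for w contains three consecutive letters of the form i (i±1) i for some i ∈ {1,…,n−1}, where letter indices are read modulo n (so i+1 means 0 when i = n−1). -/
namespace Stmt7

/-- `w` is an element of the affine symmetric group `𝑆̃_n`: a bijection of `ℤ`
with `w(i + n) = w(i) + n` for all `i` and `∑_{i=1}^n (w(i) - i) = 0`. -/
def IsAffinePerm (n : ℕ) (w : Equiv.Perm ℤ) : Prop :=
  (∀ i : ℤ, w (i + (n : ℤ)) = w i + (n : ℤ)) ∧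
    ∑ i ∈ Finset.Icc (1 : ℤ) (n : ℤ), (w i - i) = 0

/-- `σ` is the Coxeter generator `sᵢ` of `𝑆̃_n`: it swaps `j` and `j + 1` for
every integer `j ≡ i (mod n)` and fixes all other integers. -/
def IsGenA (n : ℕ) (i : ℕ) (σ : Equiv.Perm ℤ) : Prop :=
  ∀ j : ℤ, (j ≡ (i : ℤ) [ZMOD (n : ℤ)] → σ j = j + 1 ∧ σ (j + 1) = j) ∧
    ((¬ j ≡ (i : ℤ) [ZMOD (n : ℤ)] ∧ ¬ j ≡ (i : ℤ) + 1 [ZMOD (n : ℤ)]) → σ j = j)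

/-- `l` is a word for `w` in the letters `{0, …, n-1}`:
`w = s_{i₁} ⋯ s_{i_ℓ}` where `l = [i₁, …, i_ℓ]`. -/
def IsWordA (n : ℕ) (w : Equiv.Perm ℤ) (l : List ℕ) : Prop :=
  (∀ i ∈ l, i < n) ∧
    ∃ σs : List (Equiv.Perm ℤ), List.Forall₂ (IsGenA n) l σs ∧ σs.prod = w

/-- The Coxeter length of `w`: the minimal length of a word for `w`. -/
noncomputable def lenA (n : ℕ) (w : Equiv.Perm ℤ) : ℕ :=
  sInf {m | ∃ l : List ℕ, IsWordA n w l ∧ l.length = m}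

/-- The disarray `dis(w) = ∑_{i=1}^n |w(i) - i|`. -/
noncomputable def disA (n : ℕ) (w : Equiv.Perm ℤ) : ℤ :=
  ∑ i ∈ Finset.Icc (1 : ℤ) (n : ℤ), |w i - i|

/-- `l` is a reduced word for `w`. -/
def IsReducedWordA (n : ℕ) (w : Equiv.Perm ℤ) (l : List ℕ) : Prop :=
  IsWordA n w l ∧ l.length = lenA n w

/-- `l` contains three consecutive letters of the form `i (i±1) i` for some
`i ∈ {1, …, n-1}`, where letter indices are read modulo `n`
(so `i + 1` means `0` when `i = n - 1`). -/
def HasBadFactorA (n : ℕ) (l : List ℕ) : Prop :=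
  ∃ i j : ℕ, 1 ≤ i ∧ i + 1 ≤ n ∧ (j = (i + 1) % n ∨ i = j + 1) ∧ [i, j, i] <:+: l

/-!
`𝑆̃_n` is realised as the `n`-periodic permutations of `ℤ`, and `sᵢ` acting on the right exchanges
the values at `i` and `i + 1` (and at their translates). Hence `w ↦ w sᵢ` changes the number of
inversions by `±1` according as `w(i) < w(i+1)` or not, so that `ℓ(w)` is the number of
inversions; and it changes `dis` by `(±1) + (±1)`, the signs being those of `i + 1 ≤ w(i+1)` and
of `w(i) ≤ i`. So `dis(w) ≤ 2ℓ(w)`, with equality iff each letter of a reduced word raises the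
disarray by `2`; for a factor `i (i±1) i` the conditions met at the two letters `i` contradict
each other.

Conversely, if `dis(w) < 2ℓ(w)`, peel off a descent `y` of `w`. Either the induction hypothesis
applies to `w sᵧ`, or the letter `y` does not raise the disarray by `2`; then, because
`∑ (w(j) - j)` vanishes over every window of length `n`, `w` has a `321`-pattern two of whose
positions are `y, y + 1`. Moving the third position towards them, by commuting a generator
past the pattern or by translating by `n`, ends with three consecutive descending values, that is
with a reduced word ending in `i (i+1) i`; the braid relation replaces the uncounted `0 1 0`
by `1 0 1`.
-/

open Finset Function

theorem _root_.Function.Periodic.sum_Ioc_eq {M : Type*} [AddCommMonoid M] {g : ℤ → M} {c : ℤ}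
    (hg : Periodic g c) (a b : ℤ) :
    ∑ x ∈ Ioc a (a + c), g x = ∑ x ∈ Ioc b (b + c), g x := by
  have step : ∀ a, ∑ x ∈ Ioc (a + 1) (a + 1 + c), g x = ∑ x ∈ Ioc a (a + c), g x := by
    intro a
    rcases le_or_gt c 0 with hc | hc
    · rw [Ioc_eq_empty (by omega), Ioc_eq_empty (by omega)]
    have h₁ : Ioc (a + 1) (a + 1 + c) = insert (a + 1 + c) (Ioc (a + 1) (a + c)) := by
      ext x; simp only [mem_Ioc, mem_insert]; omega
    have h₂ : Ioc a (a + c) = insert (a + 1) (Ioc (a + 1) (a + c)) := by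
      ext x; simp only [mem_Ioc, mem_insert]; omega
    rw [h₁, h₂, sum_insert (by simp), sum_insert (by simp), hg]
  have shift : ∀ k : ℤ, ∑ x ∈ Ioc (a + k) (a + k + c), g x = ∑ x ∈ Ioc a (a + c), g x := by
    intro k
    induction k using Int.induction_on with
    | zero => simp
    | succ k ih => rw [← add_assoc, step, ih]
    | pred k ih =>
      have h := step (a + (-k - 1))
      rw [show a + (-k - 1) + 1 = a + -k by ring] at h
      rw [← h, ih]
  simpa using (shift (b - a)).symm

theorem _root_.Function.Periodic.eq_of_monotone {α : Type*} [PartialOrder α] {f : ℤ → α} {c : ℤ}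
    (hf : Periodic f c) (hc : 0 < c) (hm : Monotone f) (x y : ℤ) : f x = f y := by
  have key : ∀ x y, f x ≤ f y := fun x y => by
    calc f x ≤ f (y + |x - y| * c) := hm (by nlinarith [le_abs_self (x - y), abs_nonneg (x - y)])
      _ = f y := by simpa using hf.int_mul |x - y| y
  exact le_antisymm (key x y) (key y x)

section Generators

variable {n : ℕ}

theorem add_le_of_intCast_eq {a b : ℤ} (h : (a : ZMod n) = b) (hab : b < a) : b + n ≤ a := by
  have := Int.le_of_dvd (by omega) ((ZMod.intCast_eq_intCast_iff_dvd_sub b a n).1 h.symm)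
  omega

theorem eq_of_intCast_eq {a b : ℤ} (h : (a : ZMod n) = b) (h₁ : a < b + n) (h₂ : b < a + n) :
    a = b := by
  rcases lt_trichotomy a b with hab | rfl | hab
  · have := add_le_of_intCast_eq h.symm hab; omega
  · rfl
  · have := add_le_of_intCast_eq h hab; omega

/-- The generator `sᵢ`. The two indicator terms make it an involution for every `n` (the identity
for `n = 1`), so that `gen` needs no hypothesis on `n`. -/
def genFun (n : ℕ) (i j : ℤ) : ℤ :=
  j + (if (j : ZMod n) = i then 1 else 0) - (if (j : ZMod n) = i + 1 then 1 else 0)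

theorem genFun_involutive (n : ℕ) (i : ℤ) : Involutive (genFun n i) := by
  intro j
  by_cases h₁ : (j : ZMod n) = i <;> by_cases h₂ : (j : ZMod n) = i + 1
  · have h : (1 : ZMod n) = 0 := by linear_combination h₁ - h₂
    simp [genFun, h₁, h]
  · have h : (1 : ZMod n) ≠ 0 := fun h => h₂ (by rw [h₁, h, add_zero])
    simp [genFun, h₁, h]
  · have h : (1 : ZMod n) ≠ 0 := fun h => h₁ (by rw [h₂, h, add_zero])
    simp [genFun, h₂, h]
  · simp [genFun, h₁, h₂]

def gen (n : ℕ) (i : ℤ) : Equiv.Perm ℤ := (genFun_involutive n i).toPerm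

theorem gen_apply (n : ℕ) (i j : ℤ) : gen n i j = genFun n i j := rfl

theorem gen_mul_self (n : ℕ) (i : ℤ) : gen n i * gen n i = 1 :=
  Equiv.ext (genFun_involutive n i)

theorem gen_apply_of_intCast_eq (hn : 2 ≤ n) {i j : ℤ} (h : (j : ZMod n) = i) :
    gen n i j = j + 1 := by
  have : Fact (1 < n) := ⟨hn⟩
  simp [gen_apply, genFun, h]

theorem gen_apply_of_intCast_eq_add_one (hn : 2 ≤ n) {i j : ℤ} (h : (j : ZMod n) = i + 1) :
    gen n i j = j - 1 := by
  have : Fact (1 < n) := ⟨hn⟩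
  simp [gen_apply, genFun, h]

theorem gen_apply_of_intCast_ne {i j : ℤ} (h₁ : (j : ZMod n) ≠ i) (h₂ : (j : ZMod n) ≠ i + 1) :
    gen n i j = j := by
  simp [gen_apply, genFun, h₁, h₂]

theorem gen_apply_self (hn : 2 ≤ n) (i : ℤ) : gen n i i = i + 1 :=
  gen_apply_of_intCast_eq hn rfl

theorem gen_apply_add_one (hn : 2 ≤ n) (i : ℤ) : gen n i (i + 1) = i := by
  rw [gen_apply_of_intCast_eq_add_one hn (by push_cast; rfl), add_sub_cancel_right]

theorem gen_apply_add_natCast (n : ℕ) (i j : ℤ) : gen n i (j + n) = gen n i j + n := by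
  simp only [gen_apply, genFun, Int.cast_add, Int.cast_natCast, ZMod.natCast_self, add_zero]
  ring

theorem gen_congr {i i' : ℤ} (h : (i : ZMod n) = i') : gen n i = gen n i' := by
  ext j
  simp [gen_apply, genFun, h]

theorem lt_gen_apply_iff {i x : ℤ} (hx : (x : ZMod n) ≠ i) (j : ℤ) : x < gen n i j ↔ x < j := by
  have hj : (j : ZMod n) = i → x ≠ j := by rintro h rfl; exact hx h
  have hj' : (j : ZMod n) = i + 1 → x ≠ j - 1 := by
    rintro h rfl; exact hx (by push_cast; rw [h]; ring)
  rw [gen_apply, genFun]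
  split_ifs with h₁ h₂ h₂
  · omega
  · have := hj h₁; omega
  · have := hj' h₂; omega
  · omega

theorem intCast_ne_of_mem_Ioc {a x y : ℤ} (hx : x ∈ Ioc a (a + n)) (hy : y ∈ Ioc a (a + n))
    (hxy : x ≠ y) : (x : ZMod n) ≠ y := by
  rw [mem_Ioc] at hx hy
  exact fun h => hxy (eq_of_intCast_eq h (by omega) (by omega))

theorem gen_apply_eq_swap (hn : 2 ≤ n) {a i x : ℤ} (hi : a < i) (hi' : i + 1 ≤ a + n)
    (hx : x ∈ Ioc a (a + n)) : gen n i x = Equiv.swap i (i + 1) x := by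
  have hmem : ∀ y, a < y → y ≤ a + n → y ∈ Ioc a (a + n) := fun y h₁ h₂ => mem_Ioc.2 ⟨h₁, h₂⟩
  rw [Equiv.swap_apply_def]
  split_ifs with h₁ h₂
  · subst h₁; exact gen_apply_self hn x
  · subst h₂; exact gen_apply_add_one hn i
  · refine gen_apply_of_intCast_ne (intCast_ne_of_mem_Ioc hx (hmem i hi (by omega)) h₁) ?_
    have := intCast_ne_of_mem_Ioc hx (hmem (i + 1) (by omega) hi') h₂
    push_cast at this
    exact this

theorem gen_apply_of_mem_Ioc (hn : 2 ≤ n) {i x : ℤ} (hx : x ∈ Ioc (i - 1) (i - 1 + n))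
    (h₁ : x ≠ i) (h₂ : x ≠ i + 1) : gen n i x = x := by
  rw [gen_apply_eq_swap hn (by omega) (by omega) hx, Equiv.swap_apply_of_ne_of_ne h₁ h₂]

theorem gen_add_one_apply_self (hn : 3 ≤ n) (i : ℤ) : gen n (i + 1) i = i := by
  rw [gen_apply_eq_swap (a := i - 1) (by omega) (by omega) (by omega)
    (mem_Ioc.2 ⟨by omega, by omega⟩), Equiv.swap_apply_of_ne_of_ne (by omega) (by omega)]

theorem gen_apply_add_two (hn : 3 ≤ n) (i : ℤ) : gen n i (i + 2) = i + 2 :=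
  gen_apply_of_mem_Ioc (by omega) (mem_Ioc.2 ⟨by omega, by omega⟩) (by omega) (by omega)

theorem eq_of_forall_mem_Ioc (hn : 0 < n) {f g : Equiv.Perm ℤ} (hf : ∀ x, f (x + n) = f x + n)
    (hg : ∀ x, g (x + n) = g x + n) (a : ℤ) (h : ∀ x ∈ Ioc a (a + n), f x = g x) : f = g := by
  have hper : Periodic (fun x => f x - g x) n := fun x => by simp only [hf, hg]; ring
  ext x
  have hrep := hper.int_mul (-((x - a - 1) / n)) x
  have hmem : x + -((x - a - 1) / n) * n ∈ Ioc a (a + n) := by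
    have h₁ := Int.emod_def (x - a - 1) n
    have h₂ := Int.emod_nonneg (x - a - 1) (b := n) (by omega)
    have h₃ := Int.emod_lt_of_pos (x - a - 1) (b := n) (by omega)
    rw [mem_Ioc]; constructor <;> nlinarith
  have := h _ hmem
  simp only [Int.cast_id] at hrep
  omega

theorem gen_braid (hn : 3 ≤ n) (r : ℤ) :
    gen n r * gen n (r + 1) * gen n r = gen n (r + 1) * gen n r * gen n (r + 1) := by
  refine eq_of_forall_mem_Ioc (n := n) (by omega) (fun x => by simp [gen_apply_add_natCast])
    (fun x => by simp [gen_apply_add_natCast]) (r - 1) fun x hx => ?_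
  set J := Ioc (r - 1) (r - 1 + n)
  have e₀ : ∀ y ∈ J, gen n r y = Equiv.swap r (r + 1) y :=
    fun y hy => gen_apply_eq_swap (by omega) (by omega) (by omega) hy
  have e₁ : ∀ y ∈ J, gen n (r + 1) y = Equiv.swap (r + 1) (r + 1 + 1) y :=
    fun y hy => gen_apply_eq_swap (by omega) (by omega) (by omega) hy
  have hJ : ∀ {y a b}, y ∈ J → a ∈ J → b ∈ J → Equiv.swap a b y ∈ J := by
    intro y a b hy ha hb
    rw [Equiv.swap_apply_def]
    split_ifs <;> assumption
  have h₀ : r ∈ J := mem_Ioc.2 ⟨by omega, by omega⟩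
  have h₁ : r + 1 ∈ J := mem_Ioc.2 ⟨by omega, by omega⟩
  have h₂ : r + 1 + 1 ∈ J := mem_Ioc.2 ⟨by omega, by omega⟩
  simp only [Equiv.Perm.mul_apply]
  rw [e₀ x hx, e₁ x hx, e₁ _ (hJ hx h₀ h₁), e₀ _ (hJ hx h₁ h₂), e₀ _ (hJ (hJ hx h₀ h₁) h₁ h₂),
    e₁ _ (hJ (hJ hx h₁ h₂) h₀ h₁)]
  have key : Equiv.swap r (r + 1) * Equiv.swap (r + 1) (r + 1 + 1) * Equiv.swap r (r + 1) =
      Equiv.swap (r + 1) (r + 1 + 1) * Equiv.swap r (r + 1) * Equiv.swap (r + 1) (r + 1 + 1) := by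
    have e := Equiv.swap_mul_swap_mul_swap (x := r + 1 + 1) (y := r + 1) (z := r)
      (by omega) (by omega)
    rw [Equiv.swap_comm (r + 1) r, Equiv.swap_comm (r + 1 + 1) (r + 1)] at e
    rw [e, Equiv.swap_mul_swap_mul_swap (by omega) (by omega), Equiv.swap_comm]
  exact Equiv.congr_fun key x

end Generators

section Words

variable {n : ℕ}

theorem isGenA_iff (hn : 2 ≤ n) (i : ℕ) (σ : Equiv.Perm ℤ) : IsGenA n i σ ↔ gen n i = σ := by
  unfold IsGenA
  generalize (i : ℤ) = k
  simp only [← ZMod.intCast_eq_intCast_iff, Int.cast_add, Int.cast_one]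
  constructor
  · intro h
    ext j
    by_cases h₁ : (j : ZMod n) = k
    · rw [gen_apply_of_intCast_eq hn h₁, ((h j).1 h₁).1]
    by_cases h₂ : (j : ZMod n) = k + 1
    · have h₃ : ((j - 1 : ℤ) : ZMod n) = k := by push_cast; rw [h₂]; ring
      rw [gen_apply_of_intCast_eq_add_one hn h₂, ← ((h (j - 1)).1 h₃).2, sub_add_cancel]
    · rw [gen_apply_of_intCast_ne h₁ h₂, (h j).2 ⟨h₁, h₂⟩]
  · rintro rfl j
    refine ⟨fun h => ⟨gen_apply_of_intCast_eq hn h, ?_⟩, fun h => gen_apply_of_intCast_ne h.1 h.2⟩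
    rw [gen_apply_of_intCast_eq_add_one hn (by push_cast; rw [h]), add_sub_cancel_right]

def wordProd (n : ℕ) (l : List ℕ) : Equiv.Perm ℤ := (l.map fun i : ℕ => gen n (i : ℤ)).prod

@[simp]
theorem wordProd_nil : wordProd n [] = 1 := rfl

@[simp]
theorem wordProd_append (l₁ l₂ : List ℕ) :
    wordProd n (l₁ ++ l₂) = wordProd n l₁ * wordProd n l₂ := by
  simp [wordProd]

@[simp]
theorem wordProd_cons (i : ℕ) (l : List ℕ) : wordProd n (i :: l) = gen n i * wordProd n l := by
  simp [wordProd]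

theorem isWordA_iff (hn : 2 ≤ n) {w : Equiv.Perm ℤ} {l : List ℕ} :
    IsWordA n w l ↔ (∀ i ∈ l, i < n) ∧ wordProd n l = w := by
  have h : IsGenA n = fun (i : ℕ) σ => gen n i = σ := by
    ext i σ
    exact isGenA_iff hn i σ
  have h' : ∀ σs, List.Forall₂ (IsGenA n) l σs ↔ l.map (fun i : ℕ => gen n i) = σs := by
    intro σs
    rw [h, ← List.forall₂_eq_eq_eq, List.forall₂_map_left_iff]
  simp only [IsWordA, h', exists_eq_left', wordProd]

def letter (n : ℕ) (y : ℤ) : ℕ := (y % n).toNat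

theorem letter_lt (hn : 0 < n) (y : ℤ) : letter n y < n := by
  have := Int.emod_lt_of_pos y (b := n) (by omega)
  simp only [letter]
  omega

theorem gen_letter (hn : 0 < n) (y : ℤ) : gen n (letter n y) = gen n y := by
  apply gen_congr
  rw [letter, Int.toNat_of_nonneg (Int.emod_nonneg _ (by omega)), ZMod.intCast_mod]

theorem letter_add_one (hn : 0 < n) (y : ℤ) : letter n (y + 1) = (letter n y + 1) % n := by
  simp only [letter]
  zify
  rw [Int.toNat_of_nonneg (Int.emod_nonneg _ (by omega)),
    Int.toNat_of_nonneg (Int.emod_nonneg _ (by omega)), Int.emod_add_emod]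

end Words

section Affine

variable {n : ℕ} {w : Equiv.Perm ℤ}

theorem Icc_one_eq_Ioc (n : ℕ) : Icc (1 : ℤ) n = Ioc (0 : ℤ) (0 + n) := by
  ext x
  simp only [mem_Icc, mem_Ioc]
  omega

theorem sum_Ioc_sub_sum_Ioc {M : Type*} [AddCommGroup M] (hn : 2 ≤ n) (i : ℤ) {f g : ℤ → M}
    (h : ∀ x ∈ Ioc (i - 1) (i - 1 + n), x ≠ i → x ≠ i + 1 → f x = g x) :
    ∑ x ∈ Ioc (i - 1) (i - 1 + n), f x - ∑ x ∈ Ioc (i - 1) (i - 1 + n), g x =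
      (f i - g i) + (f (i + 1) - g (i + 1)) := by
  rw [← sum_sub_distrib]
  exact sum_eq_add_of_mem i (i + 1) (mem_Ioc.2 ⟨by omega, by omega⟩)
    (mem_Ioc.2 ⟨by omega, by omega⟩) (by omega)
    fun x hx hne => sub_eq_zero.2 (h x hx hne.1 hne.2)

theorem sum_Ioc_comp_gen {M : Type*} [AddCommGroup M] (hn : 2 ≤ n) (i : ℤ) (f : ℤ → M) :
    ∑ x ∈ Ioc (i - 1) (i - 1 + n), f (gen n i x) = ∑ x ∈ Ioc (i - 1) (i - 1 + n), f x := by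
  rw [← sub_eq_zero, sum_Ioc_sub_sum_Ioc hn i fun x hx h₁ h₂ => by
    rw [gen_apply_of_mem_Ioc hn hx h₁ h₂], gen_apply_self hn, gen_apply_add_one hn]
  abel

theorem isAffinePerm_one : IsAffinePerm n 1 := ⟨fun _ => rfl, by simp⟩

namespace IsAffinePerm

theorem periodic (hw : IsAffinePerm n w) : Periodic (fun x => w x - x) n :=
  fun x => by simp only [hw.1]; ring

theorem apply_add_mul (hw : IsAffinePerm n w) (x k : ℤ) : w (x + k * n) = w x + k * n := by
  have := hw.periodic.int_mul k x
  simp only [Int.cast_id] at this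
  linarith

theorem apply_sub_apply_of_intCast_eq (hw : IsAffinePerm n w) {a b : ℤ}
    (h : (a : ZMod n) = b) : w a - w b = a - b := by
  obtain ⟨k, hk⟩ := (ZMod.intCast_eq_intCast_iff_dvd_sub b a n).1 h.symm
  have := hw.apply_add_mul b k
  rw [show b + k * n = a by linarith] at this
  linarith

theorem intCast_ne_of_lt_of_apply_lt (hw : IsAffinePerm n w) {a b : ℤ} (hab : a < b)
    (h : w b < w a) : (b : ZMod n) ≠ a := fun h' => by
  have := hw.apply_sub_apply_of_intCast_eq h'
  omega

theorem sum_Ioc_sub_eq_zero (hw : IsAffinePerm n w) (a : ℤ) :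
    ∑ x ∈ Ioc a (a + n), (w x - x) = 0 := by
  rw [hw.periodic.sum_Ioc_eq a 0, ← Icc_one_eq_Ioc, hw.2]

theorem disA_eq_sum_Ioc (hw : IsAffinePerm n w) (a : ℤ) :
    disA n w = ∑ x ∈ Ioc a (a + n), |w x - x| := by
  rw [disA, Icc_one_eq_Ioc]
  exact (hw.periodic.comp abs).sum_Ioc_eq 0 a

theorem abs_sub_le_disA (hw : IsAffinePerm n w) (hn : 0 < n) (x : ℤ) : |w x - x| ≤ disA n w := by
  rw [hw.disA_eq_sum_Ioc (x - 1)]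
  exact single_le_sum (f := fun x => |w x - x|) (fun _ _ => abs_nonneg _)
    (mem_Ioc.2 ⟨by omega, by omega⟩)

theorem mul_gen (hw : IsAffinePerm n w) (hn : 2 ≤ n) (i : ℤ) : IsAffinePerm n (w * gen n i) := by
  have hper : ∀ x, (w * gen n i) (x + n) = (w * gen n i) x + n := fun x => by
    simp only [Equiv.Perm.mul_apply, gen_apply_add_natCast, hw.1]
  refine ⟨hper, ?_⟩
  have hp : Periodic (fun x => (w * gen n i) x - x) n := fun x => by simp only [hper]; ring
  rw [Icc_one_eq_Ioc, hp.sum_Ioc_eq 0 (i - 1)]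
  calc ∑ x ∈ Ioc (i - 1) (i - 1 + n), ((w * gen n i) x - x)
      = ∑ x ∈ Ioc (i - 1) (i - 1 + n), (w (gen n i x) - gen n i x) +
          (∑ x ∈ Ioc (i - 1) (i - 1 + n), gen n i x - ∑ x ∈ Ioc (i - 1) (i - 1 + n), x) := by
        rw [← sum_sub_distrib, ← sum_add_distrib]
        simp
    _ = 0 := by
        have h := sum_Ioc_comp_gen hn i fun x => x
        rw [sum_Ioc_comp_gen hn i (fun x => w x - x), h, hw.sum_Ioc_sub_eq_zero, sub_self, add_zero]

theorem exists_descent (hw : IsAffinePerm n w) (hn : 0 < n) (h : w ≠ 1) :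
    ∃ y, w (y + 1) < w y := by
  by_contra! hmono
  apply h
  have hm : Monotone (fun x => w x - x) := monotone_int_of_le_succ fun x => by
    have := w.injective.ne (show x ≠ x + 1 by omega)
    have := hmono x
    omega
  have hconst : ∀ x, w x - x = w 0 := fun x => by
    simpa using hw.periodic.eq_of_monotone (by omega) hm x 0
  have hsum := hw.2
  simp only [hconst, sum_const, Int.card_Icc, add_sub_cancel_right, Int.toNat_natCast,
    nsmul_eq_mul] at hsum
  have hw0 : w 0 = 0 := (mul_eq_zero.1 hsum).resolve_left (by omega)
  ext x
  have := hconst x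
  rw [Equiv.Perm.one_apply]
  omega

end IsAffinePerm

theorem isAffinePerm_wordProd (hn : 2 ≤ n) (l : List ℕ) : IsAffinePerm n (wordProd n l) := by
  induction l using List.reverseRecOn with
  | nil => exact isAffinePerm_one
  | append_singleton l i ih => simpa using ih.mul_gen hn i

end Affine

section Inversions

variable {n : ℕ} {w : Equiv.Perm ℤ}

noncomputable def invAt (w : Equiv.Perm ℤ) (x : ℤ) : ℕ := {j | x < j ∧ w j < w x}.ncard

noncomputable def invA (n : ℕ) (w : Equiv.Perm ℤ) : ℕ := ∑ x ∈ Icc (1 : ℤ) n, invAt w x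

theorem ncard_setOf_lt_eq (f : ℤ → ℤ) {x c : ℤ} (hfin : {j | x + 1 < j ∧ f j < c}.Finite) :
    {j | x < j ∧ f j < c}.ncard =
      {j | x + 1 < j ∧ f j < c}.ncard + if f (x + 1) < c then 1 else 0 := by
  split_ifs with h
  · rw [← Set.ncard_insert_of_notMem (a := x + 1) (by simp) hfin]
    congr 1
    ext j
    simp only [Set.mem_ofPred_eq, Set.mem_insert_iff]
    grind
  · rw [add_zero]
    congr 1
    ext j
    simp only [Set.mem_ofPred_eq]
    grind

theorem ncard_setOf_lt_gen_eq {i x : ℤ} (hx : (x : ZMod n) ≠ i) (f : ℤ → ℤ) (c : ℤ) :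
    {j | x < j ∧ f (gen n i j) < c}.ncard = {j | x < j ∧ f j < c}.ncard := by
  have h : {j | x < j ∧ f (gen n i j) < c} = gen n i ⁻¹' {j | x < j ∧ f j < c} := by
    ext j
    simp only [Set.mem_ofPred_eq, Set.mem_preimage, lt_gen_apply_iff hx]
  rw [h]
  exact Set.ncard_preimage_of_injective_subset_range (gen n i).injective (by simp)

namespace IsAffinePerm

theorem finite_setOf_lt (hw : IsAffinePerm n w) (hn : 0 < n) (x c : ℤ) :
    {j | x < j ∧ w j < c}.Finite := by
  refine (Set.finite_Ioo x (c + disA n w)).subset fun j ⟨h₁, h₂⟩ => ⟨h₁, ?_⟩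
  have := abs_le.1 (hw.abs_sub_le_disA hn j)
  omega

theorem invAt_add_natCast (hw : IsAffinePerm n w) (x : ℤ) : invAt w (x + n) = invAt w x := by
  have hsub : ∀ j, w (j - n) = w j - n := fun j => by
    have := hw.1 (j - n)
    rw [sub_add_cancel] at this
    omega
  have h : {j | x + n < j ∧ w j < w (x + n)} =
      (fun j => j - (n : ℤ)) ⁻¹' {j | x < j ∧ w j < w x} := by
    ext j
    simp only [Set.mem_ofPred_eq, Set.mem_preimage, hsub, hw.1]
    constructor <;> rintro ⟨h₁, h₂⟩ <;> constructor <;> omega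
  rw [invAt, invAt, h]
  exact Set.ncard_preimage_of_injective_subset_range sub_left_injective
    fun y _ => ⟨y + n, add_sub_cancel_right y _⟩

theorem invA_eq_sum_Ioc (hw : IsAffinePerm n w) (a : ℤ) :
    invA n w = ∑ x ∈ Ioc a (a + n), invAt w x := by
  rw [invA, Icc_one_eq_Ioc]
  exact Periodic.sum_Ioc_eq (g := invAt w) hw.invAt_add_natCast 0 a

theorem invA_mul_gen (hw : IsAffinePerm n w) (hn : 2 ≤ n) (i : ℤ) :
    (invA n (w * gen n i) : ℤ) = invA n w + if w i < w (i + 1) then 1 else -1 := by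
  set v := w * gen n i
  have hv := hw.mul_gen hn i
  have hvi : v i = w (i + 1) := congrArg w (gen_apply_self hn i)
  have hvi' : v (i + 1) = w i := congrArg w (gen_apply_add_one hn i)
  have hi₁ : (((i + 1 : ℤ)) : ZMod n) ≠ i := intCast_ne_of_mem_Ioc (a := i - 1)
    (mem_Ioc.2 ⟨by omega, by omega⟩) (mem_Ioc.2 ⟨by omega, by omega⟩) (by omega)
  -- the inversions starting at `i` and `i + 1` are exchanged, up to the pair `(i, i + 1)`
  have h₁ : invAt v i = invAt w (i + 1) + if w i < w (i + 1) then 1 else 0 := by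
    rw [invAt, hvi, ncard_setOf_lt_eq v (hv.finite_setOf_lt (by omega) _ _), hvi', invAt]
    exact congrArg (· + _) (ncard_setOf_lt_gen_eq hi₁ w _)
  have h₂ : invAt w i = {j | i + 1 < j ∧ w j < w i}.ncard + if w (i + 1) < w i then 1 else 0 :=
    ncard_setOf_lt_eq w (hw.finite_setOf_lt (by omega) _ _)
  have h₃ : invAt v (i + 1) = {j | i + 1 < j ∧ w j < w i}.ncard := by
    rw [invAt, hvi']
    exact ncard_setOf_lt_gen_eq hi₁ w _
  have hrest : ∀ x ∈ Ioc (i - 1) (i - 1 + n), x ≠ i → x ≠ i + 1 →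
      (invAt v x : ℤ) = invAt w x := fun x hx hxi hxi' => by
    have hx' := intCast_ne_of_mem_Ioc hx (mem_Ioc.2 ⟨by omega, by omega⟩) hxi
    rw [invAt, invAt, show v x = w x from congrArg w (gen_apply_of_mem_Ioc hn hx hxi hxi')]
    exact congrArg _ (ncard_setOf_lt_gen_eq hx' w _)
  have hne : w i ≠ w (i + 1) := w.injective.ne (by omega)
  rw [hv.invA_eq_sum_Ioc (i - 1), hw.invA_eq_sum_Ioc (i - 1), ← sub_eq_iff_eq_add']
  push_cast
  rw [sum_Ioc_sub_sum_Ioc hn i hrest, h₁, h₂, h₃]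
  split_ifs <;> push_cast <;> omega

theorem invA_mul_gen_of_gt (hw : IsAffinePerm n w) (hn : 2 ≤ n) {i : ℤ} (h : w (i + 1) < w i) :
    invA n (w * gen n i) + 1 = invA n w := by
  have := hw.invA_mul_gen hn i
  rw [if_neg (by omega)] at this
  omega

end IsAffinePerm

end Inversions

section Length

variable {n : ℕ} {w : Equiv.Perm ℤ}

theorem invA_one : invA n 1 = 0 :=
  sum_eq_zero fun x _ => by
    have h : {j | x < j ∧ (1 : Equiv.Perm ℤ) j < (1 : Equiv.Perm ℤ) x} = ∅ := by
      ext j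
      simp only [Equiv.Perm.one_apply, Set.mem_ofPred_eq, Set.mem_empty_iff_false, iff_false]
      omega
    rw [invAt, h, Set.ncard_empty]

theorem invA_wordProd_le (hn : 2 ≤ n) (l : List ℕ) : invA n (wordProd n l) ≤ l.length := by
  induction l using List.reverseRecOn with
  | nil => simp [invA_one]
  | append_singleton l i ih =>
    have := (isAffinePerm_wordProd hn l).invA_mul_gen hn i
    simp only [wordProd_append, wordProd_cons, wordProd_nil, mul_one, List.length_append,
      List.length_singleton]
    split_ifs at this <;> omega

theorem IsWordA.append_letter (hn : 2 ≤ n) {l : List ℕ} {y : ℤ} (h : IsWordA n (w * gen n y) l) :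
    IsWordA n w (l ++ [letter n y]) := by
  rw [isWordA_iff hn] at h ⊢
  refine ⟨fun i hi => ?_, ?_⟩
  · rcases List.mem_append.1 hi with hi | hi
    · exact h.1 i hi
    · rw [List.mem_singleton.1 hi]
      exact letter_lt (by omega) y
  · simp [h.2, gen_letter (show 0 < n by omega), mul_assoc, gen_mul_self]

theorem IsAffinePerm.exists_isWordA (hw : IsAffinePerm n w) (hn : 2 ≤ n) :
    ∃ l, IsWordA n w l ∧ l.length = invA n w := by
  induction h : invA n w generalizing w with
  | zero =>
    have hw₁ : w = 1 := by
      by_contra hne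
      obtain ⟨y, hy⟩ := hw.exists_descent (by omega) hne
      have := hw.invA_mul_gen_of_gt hn hy
      omega
    exact ⟨[], (isWordA_iff hn).2 ⟨by simp, hw₁.symm⟩, rfl⟩
  | succ k ih =>
    have hne : w ≠ 1 := by
      rintro rfl
      simp [invA_one] at h
    obtain ⟨y, hy⟩ := hw.exists_descent (by omega) hne
    obtain ⟨l, hl, hlen⟩ := ih (hw.mul_gen hn y) (by have := hw.invA_mul_gen_of_gt hn hy; omega)
    exact ⟨_, hl.append_letter hn, by simp [hlen]⟩

theorem IsAffinePerm.lenA_eq_invA (hw : IsAffinePerm n w) (hn : 2 ≤ n) : lenA n w = invA n w := by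
  obtain ⟨l, hl, hlen⟩ := hw.exists_isWordA hn
  refine le_antisymm (hlen ▸ Nat.sInf_le ⟨l, hl, rfl⟩) ?_
  obtain ⟨l', hl', hlen'⟩ : lenA n w ∈ {m | ∃ l, IsWordA n w l ∧ l.length = m} :=
    Nat.sInf_mem ⟨_, l, hl, rfl⟩
  rw [← hlen', ← ((isWordA_iff hn).1 hl').2]
  exact invA_wordProd_le hn l'

theorem IsAffinePerm.exists_isReducedWordA (hw : IsAffinePerm n w) (hn : 2 ≤ n) :
    ∃ l, IsReducedWordA n w l := by
  obtain ⟨l, hl, hlen⟩ := hw.exists_isWordA hn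
  exact ⟨l, hl, by rw [hlen, hw.lenA_eq_invA hn]⟩

theorem IsAffinePerm.lenA_mul_gen_of_gt (hw : IsAffinePerm n w) (hn : 2 ≤ n) {y : ℤ}
    (hy : w (y + 1) < w y) : lenA n (w * gen n y) + 1 = lenA n w := by
  rw [(hw.mul_gen hn y).lenA_eq_invA hn, hw.lenA_eq_invA hn, hw.invA_mul_gen_of_gt hn hy]

theorem IsReducedWordA.append_letter (hn : 2 ≤ n) (hw : IsAffinePerm n w) {l : List ℕ} {y : ℤ}
    (hy : w (y + 1) < w y) (h : IsReducedWordA n (w * gen n y) l) :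
    IsReducedWordA n w (l ++ [letter n y]) :=
  ⟨h.1.append_letter hn, by simp [h.2, hw.lenA_mul_gen_of_gt hn hy]⟩

end Length

section Disarray

variable {n : ℕ} {w : Equiv.Perm ℤ}

theorem abs_sub_sub_abs_sub_add_one (a t : ℤ) :
    |a - t| - |a - (t + 1)| = if t + 1 ≤ a then 1 else -1 := by
  split_ifs with h
  · rw [abs_of_nonneg (by omega), abs_of_nonneg (by omega)]; ring
  · rw [abs_of_nonpos (by omega), abs_of_nonpos (by omega)]; ring

theorem IsAffinePerm.disA_mul_gen (hw : IsAffinePerm n w) (hn : 2 ≤ n) (i : ℤ) :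
    disA n (w * gen n i) =
      disA n w + (if i + 1 ≤ w (i + 1) then 1 else -1) + (if w i ≤ i then 1 else -1) := by
  have hrest : ∀ x ∈ Ioc (i - 1) (i - 1 + n), x ≠ i → x ≠ i + 1 →
      |(w * gen n i) x - x| = |w x - x| := fun x hx h₁ h₂ => by
    rw [Equiv.Perm.mul_apply, gen_apply_of_mem_Ioc hn hx h₁ h₂]
  have h := sum_Ioc_sub_sum_Ioc hn i hrest
  rw [← (hw.mul_gen hn i).disA_eq_sum_Ioc, ← hw.disA_eq_sum_Ioc, Equiv.Perm.mul_apply,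
    Equiv.Perm.mul_apply, gen_apply_self hn, gen_apply_add_one hn] at h
  have h₁ := abs_sub_sub_abs_sub_add_one (w (i + 1)) i
  have h₂ := abs_sub_sub_abs_sub_add_one (w i) i
  split_ifs at h₁ h₂ ⊢ <;> omega

theorem IsAffinePerm.disA_mul_gen_le (hw : IsAffinePerm n w) (hn : 2 ≤ n) (i : ℤ) :
    disA n (w * gen n i) ≤ disA n w + 2 := by
  have := hw.disA_mul_gen hn i
  split_ifs at this <;> omega

theorem IsAffinePerm.disA_mul_gen_eq_add_two (hw : IsAffinePerm n w) (hn : 2 ≤ n) {i : ℤ}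
    (h : disA n (w * gen n i) = disA n w + 2) : w i ≤ i ∧ i + 1 ≤ w (i + 1) := by
  have := hw.disA_mul_gen hn i
  split_ifs at this <;> omega

theorem disA_nonneg (w : Equiv.Perm ℤ) : 0 ≤ disA n w :=
  sum_nonneg fun _ _ => abs_nonneg _

theorem disA_one : disA n 1 = 0 := by simp [disA]

theorem disA_wordProd_append_le (hn : 2 ≤ n) (l₁ l₂ : List ℕ) :
    disA n (wordProd n (l₁ ++ l₂)) ≤ disA n (wordProd n l₁) + 2 * l₂.length := by
  induction l₂ using List.reverseRecOn with
  | nil => simp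
  | append_singleton l₂ i ih =>
    have := (isAffinePerm_wordProd hn (l₁ ++ l₂)).disA_mul_gen_le hn i
    simp only [← List.append_assoc, wordProd_append, wordProd_cons, wordProd_nil, mul_one,
      List.length_append, List.length_singleton] at this ih ⊢
    push_cast
    omega

theorem disA_wordProd_le (hn : 2 ≤ n) (l : List ℕ) : disA n (wordProd n l) ≤ 2 * l.length := by
  simpa [disA_one] using disA_wordProd_append_le hn [] l

theorem IsAffinePerm.disA_le_two_mul_lenA (hw : IsAffinePerm n w) (hn : 2 ≤ n) :
    disA n w ≤ 2 * lenA n w := by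
  obtain ⟨l, hl, hlen⟩ := hw.exists_isReducedWordA hn
  rw [← hlen, ← ((isWordA_iff hn).1 hl).2]
  exact disA_wordProd_le hn l

def IsTightWord (n : ℕ) (l : List ℕ) : Prop := disA n (wordProd n l) = 2 * l.length

theorem IsTightWord.of_append (hn : 2 ≤ n) {l₁ l₂ : List ℕ} (h : IsTightWord n (l₁ ++ l₂)) :
    IsTightWord n l₁ := by
  have h₁ := disA_wordProd_append_le hn l₁ l₂
  have h₂ := disA_wordProd_le hn l₁
  unfold IsTightWord at h ⊢
  simp only [List.length_append] at h
  push_cast at h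
  omega

theorem IsTightWord.apply_le (hn : 2 ≤ n) {l : List ℕ} {p : ℕ} (h : IsTightWord n (l ++ [p])) :
    wordProd n l p ≤ p ∧ (p : ℤ) + 1 ≤ wordProd n l (p + 1) := by
  have h₁ := h.of_append hn
  unfold IsTightWord at h h₁
  simp only [wordProd_append, wordProd_cons, wordProd_nil, mul_one, List.length_append,
    List.length_singleton] at h
  exact (isAffinePerm_wordProd hn l).disA_mul_gen_eq_add_two hn (by push_cast at h; omega)

theorem IsTightWord.not_hasBadFactorA (hn : 3 ≤ n) {l : List ℕ} (h : IsTightWord n l) :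
    ¬ HasBadFactorA n l := by
  rintro ⟨i, j, -, -, hij, l₁, l₂, rfl⟩
  have h₀ : IsTightWord n (l₁ ++ [i]) :=
    IsTightWord.of_append (l₂ := [j, i] ++ l₂) (by omega) (by simpa using h)
  have h₂ : IsTightWord n (l₁ ++ [i, j] ++ [i]) :=
    IsTightWord.of_append (l₂ := l₂) (by omega) (by simpa using h)
  obtain ⟨hu₀, hu₀'⟩ := h₀.apply_le (by omega)
  obtain ⟨hu₂, hu₂'⟩ := h₂.apply_le (by omega)
  simp only [wordProd_append, wordProd_cons, wordProd_nil, mul_one, Equiv.Perm.mul_apply]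
    at hu₂ hu₂'
  rcases hij with rfl | rfl
  · have hj : gen n (((i + 1) % n : ℕ) : ℤ) = gen n (i + 1) := gen_congr (by
      rw [Int.cast_natCast, ZMod.natCast_mod]; push_cast; rfl)
    rw [hj, gen_add_one_apply_self hn, gen_apply_self (by omega)] at hu₂
    omega
  · rw [show ((j + 1 : ℕ) : ℤ) + 1 = j + 2 by push_cast; ring, gen_apply_add_two hn,
      show (j : ℤ) + 2 = ((j + 1 : ℕ) : ℤ) + 1 by push_cast; ring, gen_apply_add_one (by omega)]
      at hu₂'
    omega

end Disarray

section BadWords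

variable {n : ℕ} {w : Equiv.Perm ℤ}

def HasBadReducedWord (n : ℕ) (w : Equiv.Perm ℤ) : Prop :=
  ∃ l, IsReducedWordA n w l ∧ HasBadFactorA n l

theorem HasBadFactorA.append {l : List ℕ} (h : HasBadFactorA n l) (l' : List ℕ) :
    HasBadFactorA n (l ++ l') :=
  let ⟨i, j, h₁, h₂, h₃, h₄⟩ := h
  ⟨i, j, h₁, h₂, h₃, h₄.trans (List.prefix_append l l').isInfix⟩

theorem HasBadReducedWord.of_mul_gen (hn : 2 ≤ n) (hw : IsAffinePerm n w) {y : ℤ}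
    (hy : w (y + 1) < w y) (h : HasBadReducedWord n (w * gen n y)) : HasBadReducedWord n w :=
  let ⟨_, hl, hb⟩ := h
  ⟨_, hl.append_letter hn hw hy, hb.append _⟩

theorem hasBadReducedWord_of_descent_of_descent (hn : 3 ≤ n) (hw : IsAffinePerm n w) {y : ℤ}
    (h₁ : w (y + 2) < w (y + 1)) (h₀ : w (y + 1) < w y) : HasBadReducedWord n w := by
  have hw₁ := hw.mul_gen (by omega) y
  have hw₂ := hw₁.mul_gen (by omega) (y + 1)
  have e₁ : (w * gen n y) (y + 1) = w y := congrArg w (gen_apply_add_one (by omega) y)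
  have e₂ : (w * gen n y) (y + 1 + 1) = w (y + 2) := by
    rw [add_assoc, one_add_one_eq_two]
    exact congrArg w (gen_apply_add_two hn y)
  have e₃ : (w * gen n y * gen n (y + 1)) y = w (y + 1) := by
    rw [Equiv.Perm.mul_apply, gen_add_one_apply_self hn]
    exact congrArg w (gen_apply_self (by omega) y)
  have e₄ : (w * gen n y * gen n (y + 1)) (y + 1) = w (y + 2) := by
    rw [Equiv.Perm.mul_apply, gen_apply_self (by omega), e₂]
  obtain ⟨m, hm⟩ := (hw₂.mul_gen (by omega) y).exists_isReducedWordA (by omega)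
  have hred := ((hm.append_letter (by omega) hw₂ (by omega)).append_letter (by omega) hw₁
    (by omega)).append_letter (by omega) hw h₀
  simp only [List.append_assoc, List.singleton_append] at hred
  set p := letter n y
  have hq : letter n (y + 1) = (p + 1) % n := letter_add_one (by omega) y
  rcases Nat.eq_zero_or_pos p with hp | hp
  · -- the factor `0 1 0` does not count, but the braid relation turns it into `1 0 1`
    rw [hq, hp, Nat.mod_eq_of_lt (by omega)] at hred
    refine ⟨m ++ [1, 0, 1], ⟨(isWordA_iff (by omega)).2 ⟨fun i hi => ?_, ?_⟩, ?_⟩,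
      1, 0, le_rfl, by omega, Or.inr rfl, List.infix_append' m _ []⟩
    · rcases List.mem_append.1 hi with hi | hi
      · exact hred.1.1 i (List.mem_append_left _ hi)
      · simp only [List.mem_cons, List.not_mem_nil, or_false] at hi
        omega
    · rw [← ((isWordA_iff (by omega)).1 hred.1).2]
      have := gen_braid hn (n := n) 0
      simp only [wordProd_append, wordProd_cons, wordProd_nil, mul_one, Nat.cast_one,
        Nat.cast_zero, zero_add] at this ⊢
      rw [this]
      simp only [mul_assoc]
    · simpa using hred.2
  · exact ⟨_, hred, p, _, hp, letter_lt (by omega) y, Or.inl hq, List.infix_append' m _ []⟩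

end BadWords

section Patterns

variable {n : ℕ}

theorem hasBadReducedWord_of_lt_of_descent (hn : 3 ≤ n) {w : Equiv.Perm ℤ}
    (hw : IsAffinePerm n w) {j q : ℤ}
    (hjq : j < q) (h₁ : w q < w j) (h₂ : w (q + 1) < w q) : HasBadReducedWord n w := by
  by_cases hcol : (q : ZMod n) = ((j + 1 : ℤ) : ZMod n)
  · rcases eq_or_lt_of_le (show j + 1 ≤ q by omega) with rfl | hlt
    · exact hasBadReducedWord_of_descent_of_descent hn hw
        (by rwa [show j + 2 = j + 1 + 1 by ring]) h₁
    · have := add_le_of_intCast_eq hcol hlt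
      have e₁ := hw.apply_add_mul q (-1)
      have e₂ := hw.apply_add_mul (q + 1) (-1)
      rw [show q + 1 + -1 * n = q + -1 * n + 1 by ring] at e₂
      exact hasBadReducedWord_of_lt_of_descent hn hw (j := j) (q := q + -1 * n) (by omega)
        (by omega) (by omega)
  have hjq' : j + 1 < q := lt_of_le_of_ne (by omega) fun h => hcol (by rw [h])
  by_cases hc : w q < w (j + 1)
  · exact hasBadReducedWord_of_lt_of_descent hn hw hjq' hc h₂
  have hj : w (j + 1) < w j := by
    have := w.injective.ne hjq'.ne
    omega
  have hqj := hw.intCast_ne_of_lt_of_apply_lt hjq h₁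
  have hv₀ : (w * gen n j) q = w q :=
    congrArg w (gen_apply_of_intCast_ne hqj (by push_cast at hcol; exact hcol))
  have hv₁ : (w * gen n j) (q + 1) = w (q + 1) := by
    refine congrArg w (gen_apply_of_intCast_ne ?_ ?_)
    · exact hw.intCast_ne_of_lt_of_apply_lt (by omega) (by omega)
    · push_cast
      exact fun h => hqj (add_right_cancel h)
  have hv₂ : (w * gen n j) (j + 1) = w j := congrArg w (gen_apply_add_one (by omega) j)
  refine (hasBadReducedWord_of_lt_of_descent hn (hw.mul_gen (by omega) j) hjq' ?_ ?_).of_mul_gen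
    (by omega) hw hj
  · rw [hv₀, hv₂]; exact h₁
  · rw [hv₀, hv₁]; exact h₂
termination_by (q - j).toNat
decreasing_by all_goals omega

theorem hasBadReducedWord_of_descent_of_lt (hn : 3 ≤ n) {w : Equiv.Perm ℤ}
    (hw : IsAffinePerm n w) {q k : ℤ}
    (hqk : q + 1 < k) (h₁ : w (q + 1) < w q) (h₂ : w k < w (q + 1)) : HasBadReducedWord n w := by
  by_cases hcol : (k : ZMod n) = ((q + 2 : ℤ) : ZMod n)
  · rcases eq_or_lt_of_le (show q + 2 ≤ k by omega) with rfl | hlt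
    · exact hasBadReducedWord_of_descent_of_descent hn hw h₂ h₁
    · have := add_le_of_intCast_eq hcol hlt
      have e₁ := hw.apply_add_mul q 1
      have e₂ := hw.apply_add_mul (q + 1) 1
      rw [show q + 1 + 1 * n = q + 1 * n + 1 by ring] at e₂
      exact hasBadReducedWord_of_descent_of_lt hn hw (q := q + 1 * n) (k := k) (by omega)
        (by omega) (by omega)
  have hqk' : q + 1 < k - 1 :=
    lt_of_le_of_ne (by omega) fun h => hcol (by rw [show k = q + 2 by omega])
  by_cases hc : w (k - 1) < w (q + 1)
  · exact hasBadReducedWord_of_descent_of_lt hn hw hqk' h₁ hc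
  have hk : w k < w (k - 1) := by
    have := w.injective.ne hqk'.ne'
    omega
  have hkq := hw.intCast_ne_of_lt_of_apply_lt (show q < k by omega) (by omega)
  have hkq₁ := hw.intCast_ne_of_lt_of_apply_lt hqk h₂
  have hv₀ : (w * gen n (k - 1)) q = w q := by
    refine congrArg w (gen_apply_of_intCast_ne ?_ ?_)
    · push_cast
      exact fun h => hkq₁ (by push_cast; linear_combination -h)
    · push_cast
      exact fun h => hkq (by linear_combination -h)
  have hv₁ : (w * gen n (k - 1)) (q + 1) = w (q + 1) := by
    refine congrArg w (gen_apply_of_intCast_ne ?_ ?_)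
    · push_cast at hcol ⊢
      exact fun h => hcol (by linear_combination -h)
    · push_cast
      exact fun h => hkq₁ (by push_cast; linear_combination -h)
  have hv₂ : (w * gen n (k - 1)) (k - 1) = w k := by
    rw [Equiv.Perm.mul_apply, gen_apply_self (by omega), sub_add_cancel]
  refine (hasBadReducedWord_of_descent_of_lt hn (hw.mul_gen (by omega) (k - 1)) hqk' ?_ ?_
    ).of_mul_gen (by omega) hw (by rwa [sub_add_cancel])
  · rw [hv₀, hv₁]; exact h₁
  · rw [hv₁, hv₂]; exact h₂
termination_by (k - q).toNat
decreasing_by all_goals omega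

end Patterns

section Counting

theorem two_mul_sum_le_of_forall_le {s : Finset ℤ} {m : ℤ} (h : ∀ v ∈ s, v ≤ m) :
    2 * ∑ v ∈ s, v ≤ #s * (2 * m - #s + 1) := by
  induction s using Finset.induction_on_max generalizing m with
  | empty => simp
  | insert a s ha ih =>
    have ih' := ih (m := a - 1) fun v hv => by have := ha v hv; omega
    have ham := h a (mem_insert_self a s)
    have has : a ∉ s := fun h => lt_irrefl a (ha a h)
    rw [sum_insert has, card_insert_of_notMem has]
    push_cast
    nlinarith [mul_nonneg (show (0 : ℤ) ≤ #s + 1 by positivity) (show 0 ≤ m - a by omega)]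

theorem le_two_mul_sum_of_forall_le {s : Finset ℤ} {m : ℤ} (h : ∀ v ∈ s, m ≤ v) :
    #s * (2 * m + #s - 1) ≤ 2 * ∑ v ∈ s, v := by
  have := two_mul_sum_le_of_forall_le (s := s.image Neg.neg) (m := -m)
    (by simpa using fun v hv => h v hv)
  rw [sum_image (neg_injective.injOn), card_image_of_injective _ neg_injective,
    sum_neg_distrib] at this
  linarith

variable {n : ℕ} {w : Equiv.Perm ℤ}

theorem IsAffinePerm.exists_le_lt_apply (hw : IsAffinePerm n w) (hn : 0 < n) {x y : ℤ}
    (hyx : y < x) : ∃ j ≤ x, y < w j := by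
  by_contra! h
  set W := Ioc (x - n) (x - n + n)
  have hW : ∑ j ∈ W, w j = ∑ j ∈ W, j := by
    have := hw.sum_Ioc_sub_eq_zero (x - n)
    rw [sum_sub_distrib] at this
    linarith
  have hcard : (#W : ℤ) = n := by simp [W]
  have h₁ := two_mul_sum_le_of_forall_le (s := W.image w) (m := y) (by
    simp only [mem_image, forall_exists_index, and_imp, forall_apply_eq_imp_iff₂]
    exact fun j hj => h j (by simp only [W, mem_Ioc] at hj; omega))
  have h₂ := le_two_mul_sum_of_forall_le (s := W) (m := x - n + 1) (fun j hj => by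
    simp only [W, mem_Ioc] at hj; omega)
  rw [sum_image w.injective.injOn, card_image_of_injective _ w.injective, hW, hcard] at h₁
  rw [hcard] at h₂
  nlinarith [mul_pos (show (0 : ℤ) < n by omega) (show 0 < x - y by omega)]

theorem IsAffinePerm.exists_lt_apply_le (hw : IsAffinePerm n w) (hn : 0 < n) {x y : ℤ}
    (hxy : x < y) : ∃ j, x < j ∧ w j ≤ y := by
  by_contra! h
  set W := Ioc x (x + n)
  have hW : ∑ j ∈ W, w j = ∑ j ∈ W, j := by
    have := hw.sum_Ioc_sub_eq_zero x
    rw [sum_sub_distrib] at this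
    linarith
  have hcard : (#W : ℤ) = n := by simp [W]
  have h₁ := le_two_mul_sum_of_forall_le (s := W.image w) (m := y + 1) (by
    simp only [mem_image, forall_exists_index, and_imp, forall_apply_eq_imp_iff₂]
    exact fun j hj => by have := h j (by simp only [W, mem_Ioc] at hj; omega); omega)
  have h₂ := two_mul_sum_le_of_forall_le (s := W) (m := x + n) (fun j hj => by
    simp only [W, mem_Ioc] at hj; omega)
  rw [sum_image w.injective.injOn, card_image_of_injective _ w.injective, hW, hcard] at h₁
  rw [hcard] at h₂
  nlinarith [mul_pos (show (0 : ℤ) < n by omega) (show 0 < y - x by omega)]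

end Counting

section Backward

variable {n : ℕ} {w : Equiv.Perm ℤ}

theorem hasBadReducedWord_of_descent_of_apply_le (hn : 3 ≤ n) (hw : IsAffinePerm n w) {y : ℤ}
    (hd : w (y + 1) < w y) (hy : w y ≤ y) : HasBadReducedWord n w := by
  obtain ⟨j, hj, hwj⟩ := hw.exists_le_lt_apply (by omega) (show w y < y + 1 by omega)
  have : j ≠ y := by rintro rfl; omega
  have : j ≠ y + 1 := by rintro rfl; omega
  exact hasBadReducedWord_of_lt_of_descent hn hw (by omega) hwj hd

theorem hasBadReducedWord_of_descent_of_le_apply (hn : 3 ≤ n) (hw : IsAffinePerm n w) {y : ℤ}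
    (hd : w (y + 1) < w y) (hy : y + 1 ≤ w (y + 1)) : HasBadReducedWord n w := by
  obtain ⟨k, hk, hwk⟩ := hw.exists_lt_apply_le (by omega) (show y - 1 < w (y + 1) - 1 by omega)
  have : k ≠ y := by rintro rfl; omega
  have : k ≠ y + 1 := by rintro rfl; omega
  exact hasBadReducedWord_of_descent_of_lt hn hw (q := y) (k := k) (by omega) hd (by omega)

theorem IsAffinePerm.hasBadReducedWord_of_disA_lt (hw : IsAffinePerm n w) (hn : 3 ≤ n)
    (h : disA n w < 2 * lenA n w) : HasBadReducedWord n w := by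
  induction hk : lenA n w generalizing w with
  | zero =>
    have := disA_nonneg (n := n) w
    omega
  | succ k ih =>
    have hne : w ≠ 1 := by
      rintro rfl
      rw [isAffinePerm_one.lenA_eq_invA (by omega), invA_one] at hk
      omega
    obtain ⟨y, hy⟩ := hw.exists_descent (by omega) hne
    have hv := hw.mul_gen (by omega) y
    have hlen := hw.lenA_mul_gen_of_gt (by omega) hy
    rcases (hv.disA_le_two_mul_lenA (by omega)).lt_or_eq with hlt | heq
    · exact (ih hv hlt (by omega)).of_mul_gen (by omega) hw hy
    -- the last letter did not raise the disarray by `2`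
    have := hw.disA_mul_gen (by omega) y
    split_ifs at this with h₁ h₂ h₂
    · omega
    · exact hasBadReducedWord_of_descent_of_le_apply hn hw hy h₁
    · exact hasBadReducedWord_of_descent_of_apply_le hn hw hy h₂
    · omega

end Backward

theorem stmt_7 (n : ℕ) (hn : 3 ≤ n) (w : Equiv.Perm ℤ) (hw : IsAffinePerm n w) :
    disA n w = 2 * (lenA n w : ℤ) ↔
      ∀ l : List ℕ, IsReducedWordA n w l → ¬ HasBadFactorA n l := by
  constructor
  · rintro hdis l ⟨hl, hlen⟩
    apply IsTightWord.not_hasBadFactorA hn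
    rw [IsTightWord, ((isWordA_iff (by omega)).1 hl).2, hlen, hdis]
  · intro h
    by_contra hne
    obtain ⟨l, hl, hbad⟩ := hw.hasBadReducedWord_of_disA_lt hn
      (lt_of_le_of_ne (hw.disA_le_two_mul_lenA (by omega)) hne)
    exact h l hl hbad

end Stmt7
end
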